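/- arXiv:1103.3210 — 8 statements merged into one kernel-verified Lean document; each statement's English description precedes it below -/
import Mathlib

section
/- Suppose the flow φ has the Lipschitz shadowing property with constants d₀ and L. Then φ has the discrete Lipschitz shadowing property: for every d ≤ d₀/ν and every sequence (y_k)_{k∈ℤ} in M with dist(y_{k+1}, φ(1, y_k)) ≤ d for all k ∈ ℤ, there exist sequences (x_k)_{k∈ℤ} in M and (t_k)_{k∈ℤ} in ℝ such that |t_k − 1| ≤ Lνd, dist(x_k, y_k) ≤ Lνd, and x_{k+1} = φ(t_k, x_k) for all k ∈ ℤ. -/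
noncomputable section

/-- Lipschitz shadowing (with constants `d₀`, `L`) implies discrete Lipschitz shadowing
(with constants `d₀/ν`, `L * ν`). -/
theorem lipschitz_shadowing_implies_discrete {M : Type*} [MetricSpace M] [CompactSpace M]
    (φ : ℝ → M → M)
    (hcont : Continuous fun p : ℝ × M => φ p.1 p.2)
    (hzero : ∀ x : M, φ 0 x = x)
    (hadd : ∀ (s t : ℝ) (x : M), φ (s + t) x = φ s (φ t x))
    (ν : ℝ) (hν : 1 ≤ ν)
    (hlip : ∀ t : ℝ, 0 ≤ t → t ≤ 1 → ∀ x y : M, dist (φ t x) (φ t y) ≤ ν * dist x y)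
    (d₀ L : ℝ) (hd₀ : 0 < d₀) (hL : 0 < L)
    (hshadow : ∀ d : ℝ, 0 < d → d ≤ d₀ → ∀ g : ℝ → M,
      (∀ τ t : ℝ, 0 ≤ t → t ≤ 1 → dist (g (τ + t)) (φ t (g τ)) ≤ d) →
      ∃ (x : M) (α : ℝ → ℝ), StrictMono α ∧ Function.Surjective α ∧ α 0 = 0 ∧
        (∀ t₁ t₂ : ℝ, t₁ ≠ t₂ → |(α t₂ - α t₁) / (t₂ - t₁) - 1| ≤ L * d) ∧
        ∀ t : ℝ, dist (g t) (φ (α t) x) ≤ L * d) :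
    ∀ d : ℝ, 0 < d → d ≤ d₀ / ν → ∀ y : ℤ → M,
      (∀ k : ℤ, dist (y (k + 1)) (φ 1 (y k)) ≤ d) →
      ∃ (x : ℤ → M) (t : ℤ → ℝ),
        ∀ k : ℤ, |t k - 1| ≤ L * ν * d ∧ dist (x k) (y k) ≤ L * ν * d ∧
          x (k + 1) = φ (t k) (x k) := by
  intro d hd hdle y hy
  have hν0 : (0:ℝ) < ν := lt_of_lt_of_le one_pos hν
  set g : ℝ → M := fun τ => φ (τ - ⌊τ⌋) (y ⌊τ⌋) with hg
  have hgint : ∀ k : ℤ, g (k:ℝ) = y k := by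
    intro k
    simp [hg, hzero]
  have hpseudo : ∀ τ t : ℝ, 0 ≤ t → t ≤ 1 → dist (g (τ + t)) (φ t (g τ)) ≤ ν * d := by
    intro τ t ht0 ht1
    have hs0 : (⌊τ⌋ : ℝ) ≤ τ := Int.floor_le τ
    have hs1 : τ < ⌊τ⌋ + 1 := Int.lt_floor_add_one τ
    rcases le_or_gt ((⌊τ⌋:ℝ) + 1) (τ + t) with hcase | hcase
    · have hfl : ⌊τ + t⌋ = ⌊τ⌋ + 1 := by
        rw [Int.floor_eq_iff]
        constructor
        · push_cast; linarith
        · push_cast; linarith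
      have hu0 : (0:ℝ) ≤ τ + t - (⌊τ⌋ + 1) := by linarith
      have hu1 : τ + t - (⌊τ⌋ + 1) ≤ 1 := by linarith
      have h1 : g (τ + t) = φ (τ + t - (⌊τ⌋ + 1)) (y (⌊τ⌋ + 1)) := by
        simp only [hg, hfl]
        push_cast
        ring_nf
      have h2 : φ t (g τ) = φ (τ + t - (⌊τ⌋ + 1)) (φ 1 (y ⌊τ⌋)) := by
        simp only [hg]
        rw [← hadd, ← hadd]
        ring_nf
      rw [h1, h2]
      calc dist (φ (τ + t - (⌊τ⌋ + 1)) (y (⌊τ⌋ + 1)))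
            (φ (τ + t - (⌊τ⌋ + 1)) (φ 1 (y ⌊τ⌋)))
          ≤ ν * dist (y (⌊τ⌋ + 1)) (φ 1 (y ⌊τ⌋)) := hlip _ hu0 hu1 _ _
        _ ≤ ν * d := by
            have := hy ⌊τ⌋
            nlinarith [dist_nonneg (x := y (⌊τ⌋ + 1)) (y := φ 1 (y ⌊τ⌋))]
    · have hfl : ⌊τ + t⌋ = ⌊τ⌋ := by
        rw [Int.floor_eq_iff]
        constructor
        · linarith
        · linarith
      have h1 : g (τ + t) = φ t (g τ) := by
        simp only [hg, hfl]
        rw [← hadd]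
        ring_nf
      rw [h1]
      simp
      positivity
  have hνd0 : 0 < ν * d := by positivity
  have hνdle : ν * d ≤ d₀ := by
    rw [le_div_iff₀ hν0] at hdle
    linarith
  obtain ⟨x₀, α, hmono, hsurj, hα0, hslope, hclose⟩ := hshadow (ν * d) hνd0 hνdle g hpseudo
  refine ⟨fun k => φ (α k) x₀, fun k => α (k + 1) - α k, fun k => ?_⟩
  refine ⟨?_, ?_, ?_⟩
  · have hne : ((k : ℝ)) ≠ ((k : ℝ) + 1) := by linarith
    have := hslope (k : ℝ) ((k : ℝ) + 1) hne
    simp at this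
    calc |α ((k:ℝ) + 1) - α k - 1| = |(α ((k:ℝ)+1) - α k) / ((k + 1) - k) - 1| := by
          norm_num
      _ ≤ L * (ν * d) := hslope _ _ hne
      _ = L * ν * d := by ring
  · have := hclose (k : ℝ)
    rw [hgint] at this
    rw [dist_comm]
    calc dist (y k) (φ (α k) x₀) ≤ L * (ν * d) := this
      _ = L * ν * d := by ring
  · push_cast
    rw [← hadd]
    congr 1
    ring
end
end

section
/- (Maizel') If for every bounded sequence (b_k)_{k≥1} in ℝⁿ the difference equation v_{k+1} = C_k v_k + b_{k+1}, k ≥ 0, has a bounded solution (v_k)_{k≥0}, then the sequence C is hyperbolic on ℤ₊. -/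
noncomputable section

def Tpos {n : ℕ} (C : ℤ → (EuclideanSpace ℝ (Fin n) ≃L[ℝ] EuclideanSpace ℝ (Fin n))) :
    ℕ → (EuclideanSpace ℝ (Fin n) ≃L[ℝ] EuclideanSpace ℝ (Fin n))
  | 0 => ContinuousLinearEquiv.refl ℝ (EuclideanSpace ℝ (Fin n))
  | (k + 1) => (Tpos C k).trans (C (k : ℤ))

def Tneg {n : ℕ} (C : ℤ → (EuclideanSpace ℝ (Fin n) ≃L[ℝ] EuclideanSpace ℝ (Fin n))) :
    ℕ → (EuclideanSpace ℝ (Fin n) ≃L[ℝ] EuclideanSpace ℝ (Fin n))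
  | 0 => ContinuousLinearEquiv.refl ℝ (EuclideanSpace ℝ (Fin n))
  | (k + 1) => (Tneg C k).trans (C (-((k : ℤ) + 1))).symm

def Tfull {n : ℕ} (C : ℤ → (EuclideanSpace ℝ (Fin n) ≃L[ℝ] EuclideanSpace ℝ (Fin n))) (k : ℤ) :
    EuclideanSpace ℝ (Fin n) ≃L[ℝ] EuclideanSpace ℝ (Fin n) :=
  if 0 ≤ k then Tpos C k.toNat else Tneg C (-k).toNat

/-- Transition operator: `Phi C k l = C (k-1) ∘ ⋯ ∘ C l` for `l < k`, identity for `l = k`,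
and `(C k)⁻¹ ∘ ⋯ ∘ (C (l-1))⁻¹` for `l > k`. -/
def Phi {n : ℕ} (C : ℤ → (EuclideanSpace ℝ (Fin n) ≃L[ℝ] EuclideanSpace ℝ (Fin n))) (k l : ℤ) :
    EuclideanSpace ℝ (Fin n) ≃L[ℝ] EuclideanSpace ℝ (Fin n) :=
  (Tfull C l).symm.trans (Tfull C k)

/-- `C` is hyperbolic (has an exponential dichotomy) on `ℤ₊`. -/
def HypPlus {n : ℕ} (C : ℤ → (EuclideanSpace ℝ (Fin n) ≃L[ℝ] EuclideanSpace ℝ (Fin n))) : Prop :=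
  ∃ (K lam : ℝ) (S U : ℤ → Submodule ℝ (EuclideanSpace ℝ (Fin n))),
    0 < K ∧ 0 < lam ∧ lam < 1 ∧
    (∀ k : ℤ, 0 ≤ k → S k ⊓ U k = ⊥ ∧ S k ⊔ U k = ⊤) ∧
    (∀ k : ℤ, 0 ≤ k →
      (S k).map ((C k).toLinearEquiv : EuclideanSpace ℝ (Fin n) →ₗ[ℝ] EuclideanSpace ℝ (Fin n)) = S (k + 1) ∧
      (U k).map ((C k).toLinearEquiv : EuclideanSpace ℝ (Fin n) →ₗ[ℝ] EuclideanSpace ℝ (Fin n)) = U (k + 1)) ∧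
    (∀ k l : ℤ, 0 ≤ l → l ≤ k → ∀ v ∈ S l, ‖Phi C k l v‖ ≤ K * lam ^ (k - l) * ‖v‖) ∧
    (∀ k l : ℤ, 0 ≤ k → k ≤ l → ∀ v ∈ U l, ‖Phi C k l v‖ ≤ K * lam ^ (l - k) * ‖v‖)

/-- `C` is hyperbolic (has an exponential dichotomy) on `ℤ₋`. -/
def HypMinus {n : ℕ} (C : ℤ → (EuclideanSpace ℝ (Fin n) ≃L[ℝ] EuclideanSpace ℝ (Fin n))) : Prop :=
  ∃ (K lam : ℝ) (S U : ℤ → Submodule ℝ (EuclideanSpace ℝ (Fin n))),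
    0 < K ∧ 0 < lam ∧ lam < 1 ∧
    (∀ k : ℤ, k ≤ 0 → S k ⊓ U k = ⊥ ∧ S k ⊔ U k = ⊤) ∧
    (∀ k : ℤ, k + 1 ≤ 0 →
      (S k).map ((C k).toLinearEquiv : EuclideanSpace ℝ (Fin n) →ₗ[ℝ] EuclideanSpace ℝ (Fin n)) = S (k + 1) ∧
      (U k).map ((C k).toLinearEquiv : EuclideanSpace ℝ (Fin n) →ₗ[ℝ] EuclideanSpace ℝ (Fin n)) = U (k + 1)) ∧
    (∀ k l : ℤ, l ≤ k → k ≤ 0 → ∀ v ∈ S l, ‖Phi C k l v‖ ≤ K * lam ^ (k - l) * ‖v‖) ∧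
    (∀ k l : ℤ, k ≤ l → l ≤ 0 → ∀ v ∈ U l, ‖Phi C k l v‖ ≤ K * lam ^ (l - k) * ‖v‖)

def BplusSet {n : ℕ} (C : ℤ → (EuclideanSpace ℝ (Fin n) ≃L[ℝ] EuclideanSpace ℝ (Fin n))) :
    Set (EuclideanSpace ℝ (Fin n)) :=
  {v | Filter.Tendsto (fun k : ℕ => ‖Phi C (k : ℤ) 0 v‖) Filter.atTop (nhds 0)}

def BminusSet {n : ℕ} (C : ℤ → (EuclideanSpace ℝ (Fin n) ≃L[ℝ] EuclideanSpace ℝ (Fin n))) :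
    Set (EuclideanSpace ℝ (Fin n)) :=
  {v | Filter.Tendsto (fun k : ℕ => ‖Phi C (-(k : ℤ)) 0 v‖) Filter.atTop (nhds 0)}


section MaizelProof

namespace MaizelAux
open BoundedContinuousFunction

local notation "V" n => EuclideanSpace ℝ (Fin n)

theorem exists_admis (C : ℤ → ((V n) ≃L[ℝ] (V n)))
    (hC : ∃ B : ℝ, ∀ k : ℤ,
      ‖(C k : (V n) →L[ℝ] (V n))‖ ≤ B ∧
      ‖((C k).symm : (V n) →L[ℝ] (V n))‖ ≤ B)
    (h : ∀ b : ℕ → (V n), (∃ B : ℝ, ∀ k : ℕ, ‖b k‖ ≤ B) →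
      ∃ v : ℕ → (V n), (∃ B : ℝ, ∀ k : ℕ, ‖v k‖ ≤ B) ∧
        ∀ k : ℕ, v (k + 1) = C (k : ℤ) (v k) + b (k + 1)) :
    ∃ c : ℝ, 1 ≤ c ∧ ∀ b : ℕ → (V n), (∀ k, ‖b k‖ ≤ 1) →
      ∃ v : ℕ → (V n), (∀ k, ‖v k‖ ≤ c) ∧ ∀ k, v (k + 1) = C (k : ℤ) (v k) + b k := by
  obtain ⟨B₀, hB₀⟩ := hC
  set B : ℝ := max B₀ 0 with hB
  have hBnn : 0 ≤ B := le_max_right _ _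
  have hCB : ∀ k : ℤ, ∀ x : V n, ‖C k x‖ ≤ B * ‖x‖ := by
    intro k x
    calc ‖C k x‖ ≤ ‖(C k : (V n) →L[ℝ] (V n))‖ * ‖x‖ := (C k : (V n) →L[ℝ] (V n)).le_opNorm x
    _ ≤ B * ‖x‖ := by gcongr; exact le_trans (hB₀ k).1 (le_max_left _ _)
  set X := (ℕ →ᵇ (V n))
  set Dfun : X → X := fun v =>
    ofNormedAddCommGroupDiscrete (fun k => v (k+1) - C (k:ℤ) (v k)) ((1+B) * ‖v‖)
      (by
        intro k
        calc ‖v (k+1) - C (k:ℤ) (v k)‖ ≤ ‖v (k+1)‖ + ‖C (k:ℤ) (v k)‖ := norm_sub_le _ _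
        _ ≤ ‖v‖ + B * ‖v‖ := by
            gcongr
            · exact v.norm_coe_le_norm _
            · exact le_trans (hCB _ _) (by gcongr; exact v.norm_coe_le_norm _)
        _ = (1+B) * ‖v‖ := by ring) with hDfun
  have hDcoe : ∀ v : X, ∀ k, (Dfun v) k = v (k+1) - C (k:ℤ) (v k) := fun v k => rfl
  set Dlin : X →ₗ[ℝ] X :=
    { toFun := Dfun
      map_add' := by
        intro v w
        refine BoundedContinuousFunction.ext fun k => ?_
        rw [BoundedContinuousFunction.add_apply, hDcoe, hDcoe, hDcoe,
          BoundedContinuousFunction.add_apply, BoundedContinuousFunction.add_apply, map_add (C (k:ℤ))]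
        abel
      map_smul' := by
        intro a v
        refine BoundedContinuousFunction.ext fun k => ?_
        rw [RingHom.id_apply, BoundedContinuousFunction.smul_apply, hDcoe, hDcoe,
          BoundedContinuousFunction.smul_apply, BoundedContinuousFunction.smul_apply, map_smul (C (k:ℤ)),
          smul_sub] } with hDlin
  have hDbound : ∀ v : X, ‖Dlin v‖ ≤ (1+B) * ‖v‖ := by
    intro v
    refine (norm_le (by positivity)).2 fun k => ?_
    rw [show (Dlin v) k = (Dfun v) k from rfl, hDcoe]
    calc ‖v (k+1) - C (k:ℤ) (v k)‖ ≤ ‖v (k+1)‖ + ‖C (k:ℤ) (v k)‖ := norm_sub_le _ _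
    _ ≤ ‖v‖ + B * ‖v‖ := by
        gcongr
        · exact v.norm_coe_le_norm _
        · exact le_trans (hCB _ _) (by gcongr; exact v.norm_coe_le_norm _)
    _ = (1+B) * ‖v‖ := by ring
  set D : X →L[ℝ] X := Dlin.mkContinuous (1+B) hDbound with hD
  have hDapp : ∀ v : X, ∀ k, (D v) k = v (k+1) - C (k:ℤ) (v k) := fun v k => rfl
  have hDsurj : Function.Surjective D := by
    intro g
    obtain ⟨v, ⟨Bv, hBv⟩, hveq⟩ := h (fun k => match k with | 0 => 0 | (j+1) => g j)
      ⟨max ‖g‖ 0, by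
        intro k
        match k with
        | 0 => simp
        | (j+1) => exact le_trans (g.norm_coe_le_norm j) (le_max_left _ _)⟩
    refine ⟨ofNormedAddCommGroupDiscrete v Bv hBv, BoundedContinuousFunction.ext fun k => ?_⟩
    rw [hDapp]
    show v (k+1) - C (k:ℤ) (v k) = g k
    rw [hveq k]
    abel
  obtain ⟨c₁, hc₁pos, hc₁⟩ := D.exists_preimage_norm_le hDsurj
  refine ⟨max c₁ 1, le_max_right _ _, ?_⟩
  intro b hb
  obtain ⟨vb, hvb, hvbn⟩ := hc₁ (ofNormedAddCommGroupDiscrete b 1 hb)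
  refine ⟨⇑vb, ?_, ?_⟩
  · intro k
    refine le_trans (vb.norm_coe_le_norm k) (le_trans hvbn ?_)
    calc c₁ * ‖ofNormedAddCommGroupDiscrete b 1 hb‖ ≤ c₁ * 1 := by
          gcongr
          exact (norm_le zero_le_one).2 (fun k => hb k)
    _ ≤ max c₁ 1 := by simp
  · intro k
    have h2 : (D vb) k = (ofNormedAddCommGroupDiscrete b 1 hb) k := by rw [hvb]
    rw [hDapp] at h2
    have h3 : vb (k+1) - C (k:ℤ) (vb k) = b k := h2
    rw [← h3]
    abel


variable {n : ℕ} (C : ℤ → (EuclideanSpace ℝ (Fin n) ≃L[ℝ] EuclideanSpace ℝ (Fin n)))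

lemma Tpos_succ (k : ℕ) (v : EuclideanSpace ℝ (Fin n)) :
    Tpos C (k+1) v = C (k : ℤ) (Tpos C k v) := rfl

lemma Tpos_zero (v : EuclideanSpace ℝ (Fin n)) : Tpos C 0 v = v := rfl

lemma Tfull_coe (k : ℕ) : Tfull C (k : ℤ) = Tpos C k := by
  rw [Tfull, if_pos (Int.natCast_nonneg k), Int.toNat_natCast]

lemma Phi_coe (k l : ℕ) (v : EuclideanSpace ℝ (Fin n)) :
    Phi C (k : ℤ) (l : ℤ) v = Tpos C k ((Tpos C l).symm v) := by
  rw [Phi, Tfull_coe, Tfull_coe]; rfl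

lemma Phi_zero_right (k : ℕ) (v : EuclideanSpace ℝ (Fin n)) :
    Phi C (k : ℤ) 0 v = Tpos C k v := by
  have := Phi_coe C k 0 v
  rw [Nat.cast_zero] at this
  rw [this]
  rfl

lemma Phi_cocycle (a b c : ℤ) (v : EuclideanSpace ℝ (Fin n)) :
    Phi C a b (Phi C b c v) = Phi C a c v := by
  simp [Phi]

/-- The stable subspace at time `0`. -/
def stableSet : Submodule ℝ (EuclideanSpace ℝ (Fin n)) where
  carrier := {ξ | ∃ M : ℝ, ∀ k : ℕ, ‖Tpos C k ξ‖ ≤ M}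
  add_mem' := by
    rintro a b ⟨M, hM⟩ ⟨M', hM'⟩
    exact ⟨M + M', fun k => le_trans (by rw [map_add]; exact norm_add_le _ _) (add_le_add (hM k) (hM' k))⟩
  zero_mem' := ⟨0, fun k => by simp⟩
  smul_mem' := by
    rintro a x ⟨M, hM⟩
    exact ⟨|a| * M, fun k => by
      rw [map_smul, norm_smul, Real.norm_eq_abs]
      exact mul_le_mul_of_nonneg_left (hM k) (abs_nonneg a)⟩

lemma mem_stableSet {ξ : EuclideanSpace ℝ (Fin n)} :
    ξ ∈ stableSet C ↔ ∃ M : ℝ, ∀ k : ℕ, ‖Tpos C k ξ‖ ≤ M := Iff.rfl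

/-- Uniform bound on stable solutions, via finite-dimensionality. -/
lemma exists_c0 : ∃ c₀ : ℝ, 1 ≤ c₀ ∧
    ∀ ξ ∈ stableSet C, ∀ k : ℕ, ‖Tpos C k ξ‖ ≤ c₀ * ‖ξ‖ := by
  classical
  set S := stableSet C
  set L : S →ₗ[ℝ] (ℕ →ᵇ EuclideanSpace ℝ (Fin n)) :=
    { toFun := fun ξ =>
        BoundedContinuousFunction.ofNormedAddCommGroupDiscrete (fun k => Tpos C k (ξ : EuclideanSpace ℝ (Fin n)))
          (Classical.choose (ξ.2 : ∃ M : ℝ, ∀ k : ℕ, ‖Tpos C k (ξ : EuclideanSpace ℝ (Fin n))‖ ≤ M))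
          (Classical.choose_spec (ξ.2 : ∃ M : ℝ, ∀ k : ℕ, ‖Tpos C k (ξ : EuclideanSpace ℝ (Fin n))‖ ≤ M))
      map_add' := by
        intro a b
        refine BoundedContinuousFunction.ext fun k => ?_
        show Tpos C k ((a : EuclideanSpace ℝ (Fin n)) + b) = Tpos C k a + Tpos C k b
        rw [map_add]
      map_smul' := by
        intro r a
        refine BoundedContinuousFunction.ext fun k => ?_
        show Tpos C k (r • (a : EuclideanSpace ℝ (Fin n))) = r • Tpos C k a
        rw [map_smul] } with hL
  set Lc : S →L[ℝ] (ℕ →ᵇ EuclideanSpace ℝ (Fin n)) :=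
    { toLinearMap := L, cont := L.continuous_of_finiteDimensional } with hLc
  refine ⟨max ‖Lc‖ 1, le_max_right _ _, ?_⟩
  intro ξ hξ k
  have h1 : ‖Tpos C k ξ‖ = ‖(Lc ⟨ξ, hξ⟩) k‖ := rfl
  rw [h1]
  calc ‖(Lc ⟨ξ, hξ⟩) k‖ ≤ ‖Lc ⟨ξ, hξ⟩‖ := BoundedContinuousFunction.norm_coe_le_norm _ k
  _ ≤ ‖Lc‖ * ‖(⟨ξ, hξ⟩ : S)‖ := Lc.le_opNorm _
  _ = ‖Lc‖ * ‖ξ‖ := rfl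
  _ ≤ max ‖Lc‖ 1 * ‖ξ‖ := by
      gcongr
      exact le_max_left _ _


/-- Stable Massera–Schäffer inequality. -/
lemma ms_stable (c c₀ : ℝ) (hc : 1 ≤ c) (hc₀ : 1 ≤ c₀)
    (hadm : ∀ b : ℕ → EuclideanSpace ℝ (Fin n), (∀ k, ‖b k‖ ≤ 1) →
      ∃ v : ℕ → EuclideanSpace ℝ (Fin n), (∀ k, ‖v k‖ ≤ c) ∧ ∀ k, v (k + 1) = C (k : ℤ) (v k) + b k)
    (hC0 : ∀ ξ ∈ stableSet C, ∀ k : ℕ, ‖Tpos C k ξ‖ ≤ c₀ * ‖ξ‖)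
    (ξ : EuclideanSpace ℝ (Fin n)) (hξ : ξ ∈ stableSet C) (hξ0 : ξ ≠ 0) (l K : ℕ) :
    (∑ j ∈ Finset.Ioc l K, ‖Tpos C j ξ‖⁻¹) * ‖Tpos C K ξ‖ ≤ c + c₀ * c := by
  set x : ℕ → EuclideanSpace ℝ (Fin n) := fun k => Tpos C k ξ with hx
  have hxsucc : ∀ k, x (k+1) = C (k : ℤ) (x k) := fun k => rfl
  have hxpos : ∀ k, 0 < ‖x k‖ := fun k =>
    norm_pos_iff.2 (fun h0 => hξ0 ((Tpos C k).injective (by rw [map_zero]; exact h0)))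
  obtain ⟨Mx, hMx⟩ := hξ
  set σ : ℕ → ℝ := fun k => ∑ j ∈ Finset.Ioc l (min k K), ‖x j‖⁻¹ with hσ
  have hσnonneg : ∀ k, 0 ≤ σ k := fun k => Finset.sum_nonneg (fun j _ => inv_nonneg.2 (norm_nonneg _))
  have hσK : σ K = ∑ j ∈ Finset.Ioc l K, ‖x j‖⁻¹ := by rw [hσ]; simp
  have hσle : ∀ k, σ k ≤ σ K := by
    intro k
    rw [hσK, hσ]
    exact Finset.sum_le_sum_of_subset_of_nonneg
      (Finset.Ioc_subset_Ioc le_rfl (min_le_right _ _))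
      (fun j _ _ => inv_nonneg.2 (norm_nonneg _))
  have hσstep : ∀ k, σ (k+1) = σ k + (if l ≤ k ∧ k < K then ‖x (k+1)‖⁻¹ else 0) := by
    intro k
    by_cases h1 : l ≤ k
    · by_cases h2 : k < K
      · rw [if_pos ⟨h1, h2⟩, hσ]
        simp only
        rw [min_eq_left h2, min_eq_left (le_of_lt h2), Finset.sum_Ioc_succ_top h1]
      · rw [if_neg (by tauto), add_zero, hσ]
        simp only
        rw [min_eq_right (by omega), min_eq_right (by omega)]
    · rw [if_neg (by tauto), add_zero, hσ]
      simp only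
      by_cases h2 : k < K
      · rw [min_eq_left h2, min_eq_left (le_of_lt h2),
          Finset.Ioc_eq_empty (by omega), Finset.Ioc_eq_empty (by omega)]
      · rw [min_eq_right (by omega), min_eq_right (by omega)]
  set b : ℕ → EuclideanSpace ℝ (Fin n) :=
    fun k => if l ≤ k ∧ k < K then ‖x (k+1)‖⁻¹ • x (k+1) else 0 with hb
  have hb1 : ∀ k, ‖b k‖ ≤ 1 := by
    intro k
    rw [hb]
    simp only
    split_ifs with hcond
    · rw [norm_smul, Real.norm_eq_abs, abs_of_nonneg (inv_nonneg.2 (norm_nonneg _)),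
        inv_mul_cancel₀ (ne_of_gt (hxpos (k+1)))]
    · simp
  obtain ⟨w, hwb, hweq⟩ := hadm b hb1
  set p : ℕ → EuclideanSpace ℝ (Fin n) := fun k => σ k • x k with hp
  have hprec : ∀ k, p (k+1) = C (k : ℤ) (p k) + b k := by
    intro k
    show σ (k+1) • x (k+1) = C (k : ℤ) (σ k • x k) + b k
    rw [map_smul, ← hxsucc, hσstep k, add_smul]
    congr 1
    rw [hb]
    simp only
    split_ifs with hcond
    · rfl
    · rw [zero_smul]
  set z : ℕ → EuclideanSpace ℝ (Fin n) := fun k => p k - w k with hz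
  have hzrec : ∀ k, z (k+1) = C (k : ℤ) (z k) := by
    intro k
    show p (k+1) - w (k+1) = C (k : ℤ) (p k - w k)
    rw [hprec, hweq, map_sub]
    abel
  have hzT : ∀ k, z k = Tpos C k (z 0) := by
    intro k
    induction k with
    | zero => rfl
    | succ k ih => rw [hzrec, ih]; rfl
  have hpbound : ∀ k, ‖p k‖ ≤ σ K * max Mx 0 := by
    intro k
    rw [hp]
    simp only
    rw [norm_smul, Real.norm_eq_abs, abs_of_nonneg (hσnonneg k)]
    exact mul_le_mul (hσle k) (le_trans (hMx k) (le_max_left _ _)) (norm_nonneg _) (hσnonneg K)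
  have hz0mem : z 0 ∈ stableSet C := by
    refine ⟨σ K * max Mx 0 + c, fun k => ?_⟩
    rw [← hzT]
    calc ‖z k‖ ≤ ‖p k‖ + ‖w k‖ := norm_sub_le _ _
    _ ≤ σ K * max Mx 0 + c := add_le_add (hpbound k) (hwb k)
  have hp0 : p 0 = 0 := by
    rw [hp]
    simp only
    rw [hσ]
    simp only
    rw [Nat.zero_min, Finset.Ioc_eq_empty (by omega), Finset.sum_empty, zero_smul]
  have hz0 : ‖z 0‖ ≤ c := by
    have : z 0 = -w 0 := by rw [hz]; simp only; rw [hp0, zero_sub]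
    rw [this, norm_neg]
    exact hwb 0
  have hzK : ‖z K‖ ≤ c₀ * c := by
    rw [hzT]
    exact le_trans (hC0 _ hz0mem K) (mul_le_mul_of_nonneg_left hz0 (by linarith))
  calc (∑ j ∈ Finset.Ioc l K, ‖Tpos C j ξ‖⁻¹) * ‖Tpos C K ξ‖
      = ‖p K‖ := by
        rw [hp]
        simp only
        rw [norm_smul, Real.norm_eq_abs, abs_of_nonneg (hσnonneg K), hσK]
  _ = ‖z K + w K‖ := by rw [hz]; simp only; rw [sub_add_cancel]
  _ ≤ ‖z K‖ + ‖w K‖ := norm_add_le _ _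
  _ ≤ c₀ * c + c := add_le_add hzK (hwb K)
  _ = c + c₀ * c := by ring


/-- Dual (unstable) Massera–Schäffer inequality. -/
lemma ms_dual (c c₀ : ℝ) (hc : 1 ≤ c) (hc₀ : 1 ≤ c₀)
    (hadm : ∀ b : ℕ → EuclideanSpace ℝ (Fin n), (∀ k, ‖b k‖ ≤ 1) →
      ∃ v : ℕ → EuclideanSpace ℝ (Fin n), (∀ k, ‖v k‖ ≤ c) ∧ ∀ k, v (k + 1) = C (k : ℤ) (v k) + b k)
    (hC0 : ∀ ξ ∈ stableSet C, ∀ k : ℕ, ‖Tpos C k ξ‖ ≤ c₀ * ‖ξ‖)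
    (η : EuclideanSpace ℝ (Fin n)) (hη : η ∈ (stableSet C)ᗮ) (hη0 : η ≠ 0) (m r : ℕ) (hmr : m ≤ r) :
    (∑ j ∈ Finset.Ioc m r, ‖Tpos C j η‖⁻¹) * ‖Tpos C m η‖ ≤ c + 2 * (c₀ * c) := by
  set y : ℕ → EuclideanSpace ℝ (Fin n) := fun k => Tpos C k η with hy
  have hysucc : ∀ k, y (k+1) = C (k : ℤ) (y k) := fun k => rfl
  have hypos : ∀ k, 0 < ‖y k‖ := fun k =>
    norm_pos_iff.2 (fun h0 => hη0 ((Tpos C k).injective (by rw [map_zero]; exact h0)))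
  set τ : ℕ → ℝ := fun k => ∑ j ∈ Finset.Ioc (max k m) r, ‖y j‖⁻¹ with hτdef
  have hτnonneg : ∀ k, 0 ≤ τ k := fun k => Finset.sum_nonneg (fun j _ => inv_nonneg.2 (norm_nonneg _))
  have hτ0 : τ 0 = ∑ j ∈ Finset.Ioc m r, ‖y j‖⁻¹ := by rw [hτdef]; simp
  have hτm : τ m = ∑ j ∈ Finset.Ioc m r, ‖y j‖⁻¹ := by rw [hτdef]; simp
  have hτstep : ∀ k, τ k = τ (k+1) + (if m ≤ k ∧ k < r then ‖y (k+1)‖⁻¹ else 0) := by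
    intro k
    by_cases h1 : m ≤ k
    · by_cases h2 : k < r
      · rw [if_pos ⟨h1, h2⟩, hτdef]
        simp only
        rw [max_eq_left h1, max_eq_left (by omega)]
        have hins : Finset.Ioc k r = insert (k+1) (Finset.Ioc (k+1) r) := by
          ext t; simp only [Finset.mem_Ioc, Finset.mem_insert]; omega
        rw [hins, Finset.sum_insert (by simp)]
        ring
      · rw [if_neg (by tauto), add_zero, hτdef]
        simp only
        rw [max_eq_left h1, max_eq_left (by omega),
          Finset.Ioc_eq_empty (by omega), Finset.Ioc_eq_empty (by omega)]
    · rw [if_neg (by tauto), add_zero, hτdef]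
      simp only
      rw [max_eq_right (by omega), max_eq_right (by omega)]
  set b : ℕ → EuclideanSpace ℝ (Fin n) :=
    fun k => if m ≤ k ∧ k < r then ‖y (k+1)‖⁻¹ • y (k+1) else 0 with hb
  have hb1 : ∀ k, ‖b k‖ ≤ 1 := by
    intro k
    rw [hb]
    simp only
    split_ifs with hcond
    · rw [norm_smul, Real.norm_eq_abs, abs_of_nonneg (inv_nonneg.2 (norm_nonneg _)),
        inv_mul_cancel₀ (ne_of_gt (hypos (k+1)))]
    · simp
  obtain ⟨w, hwb, hweq⟩ := hadm b hb1
  set p : ℕ → EuclideanSpace ℝ (Fin n) := fun k => -(τ k • y k) with hp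
  have hprec : ∀ k, p (k+1) = C (k : ℤ) (p k) + b k := by
    intro k
    show -(τ (k+1) • y (k+1)) = C (k : ℤ) (-(τ k • y k)) + b k
    have hbk : b k = (if m ≤ k ∧ k < r then ‖y (k+1)‖⁻¹ else 0) • y (k+1) := by
      rw [hb]
      simp only
      split_ifs with hcond
      · rfl
      · rw [zero_smul]
    rw [map_neg, map_smul, ← hysucc, hbk, hτstep k, add_smul, neg_add]
    abel
  set z : ℕ → EuclideanSpace ℝ (Fin n) := fun k => p k - w k with hz
  have hzrec : ∀ k, z (k+1) = C (k : ℤ) (z k) := by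
    intro k
    show p (k+1) - w (k+1) = C (k : ℤ) (p k - w k)
    rw [hprec, hweq, map_sub]
    abel
  have hzT : ∀ k, z k = Tpos C k (z 0) := by
    intro k
    induction k with
    | zero => rfl
    | succ k ih => rw [hzrec, ih]; rfl
  have hpzero : ∀ k, r ≤ k → p k = 0 := by
    intro k hk
    rw [hp]
    simp only
    rw [hτdef]
    simp only
    rw [max_eq_left (le_trans hmr hk), Finset.Ioc_eq_empty (by omega), Finset.sum_empty, zero_smul,
      neg_zero]
  have hpbound : ∀ k, ‖p k‖ ≤ ∑ j ∈ Finset.range (r+1), ‖p j‖ := by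
    intro k
    by_cases hk : k ≤ r
    · exact Finset.single_le_sum (fun j _ => norm_nonneg _) (Finset.mem_range.2 (by omega))
    · rw [hpzero k (by omega), norm_zero]
      exact Finset.sum_nonneg (fun j _ => norm_nonneg _)
  have hz0mem : z 0 ∈ stableSet C := by
    refine ⟨(∑ j ∈ Finset.range (r+1), ‖p j‖) + c, fun k => ?_⟩
    rw [← hzT]
    calc ‖z k‖ ≤ ‖p k‖ + ‖w k‖ := norm_sub_le _ _
    _ ≤ _ := add_le_add (hpbound k) (hwb k)
  set Sf : ℝ := ∑ j ∈ Finset.Ioc m r, ‖y j‖⁻¹ with hSf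
  have hSfnonneg : 0 ≤ Sf := Finset.sum_nonneg (fun j _ => inv_nonneg.2 (norm_nonneg _))
  have hy0 : y 0 = η := rfl
  have hw0 : w 0 = -(Sf • η) - z 0 := by
    have : z 0 = p 0 - w 0 := rfl
    have hp0 : p 0 = -(Sf • η) := by
      rw [hp]
      simp only
      rw [hτ0, hy0, hSf]
    rw [this, hp0]
    abel
  set P := Submodule.orthogonalProjectionOnto ((stableSet C)ᗮ) with hP
  have hPz0 : P (z 0) = 0 :=
    Submodule.orthogonalProjectionOnto_apply_of_mem_orthogonal
      (Submodule.le_orthogonal_orthogonal _ hz0mem)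
  have hPη : ((P η : (stableSet C)ᗮ) : EuclideanSpace ℝ (Fin n)) = η := by
    have := Submodule.orthogonalProjectionOnto_mem_subspace_eq_self (K := (stableSet C)ᗮ) ⟨η, hη⟩
    rw [hP]
    exact congrArg Subtype.val this
  have hPw0 : ((P (w 0) : (stableSet C)ᗮ) : EuclideanSpace ℝ (Fin n)) = -(Sf • η) := by
    rw [hw0, map_sub, map_neg, map_smul, hPz0, sub_zero]
    push_cast
    rw [hPη]
  have hSeta : Sf * ‖η‖ ≤ c := by
    have h1 : ‖((P (w 0) : (stableSet C)ᗮ) : EuclideanSpace ℝ (Fin n))‖ ≤ ‖w 0‖ := by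
      calc ‖((P (w 0) : (stableSet C)ᗮ) : EuclideanSpace ℝ (Fin n))‖ = ‖P (w 0)‖ := rfl
      _ ≤ ‖P‖ * ‖w 0‖ := P.le_opNorm _
      _ ≤ 1 * ‖w 0‖ := by
          gcongr
          exact Submodule.orthogonalProjectionOnto_norm_le _
      _ = ‖w 0‖ := one_mul _
    rw [hPw0, norm_neg, norm_smul, Real.norm_eq_abs, abs_of_nonneg hSfnonneg] at h1
    exact le_trans h1 (hwb 0)
  have hz0n : ‖z 0‖ ≤ 2 * c := by
    have : z 0 = -(Sf • η) - w 0 := by rw [hw0]; abel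
    rw [this]
    calc ‖-(Sf • η) - w 0‖ ≤ ‖-(Sf • η)‖ + ‖w 0‖ := norm_sub_le _ _
    _ ≤ c + c := by
        refine add_le_add ?_ (hwb 0)
        rw [norm_neg, norm_smul, Real.norm_eq_abs, abs_of_nonneg hSfnonneg]
        exact hSeta
    _ = 2 * c := by ring
  have hzm : ‖z m‖ ≤ c₀ * (2 * c) := by
    rw [hzT]
    exact le_trans (hC0 _ hz0mem m) (mul_le_mul_of_nonneg_left hz0n (by linarith))
  calc (∑ j ∈ Finset.Ioc m r, ‖Tpos C j η‖⁻¹) * ‖Tpos C m η‖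
      = ‖p m‖ := by
        rw [hp]
        simp only
        rw [norm_neg, norm_smul, Real.norm_eq_abs, abs_of_nonneg (hτnonneg m), hτm]
  _ = ‖z m + w m‖ := by rw [hz]; simp only; rw [sub_add_cancel]
  _ ≤ ‖z m‖ + ‖w m‖ := norm_add_le _ _
  _ ≤ c₀ * (2 * c) + c := add_le_add hzm (hwb m)
  _ = c + 2 * (c₀ * c) := by ring


/-- Exponential decay on the stable subspace, from the Massera–Schäffer inequality. -/
lemma stable_exp (c₂ B : ℝ) (hc₂ : 1 < c₂) (hB : 1 ≤ B)
    (hCB : ∀ (k : ℕ) (x : EuclideanSpace ℝ (Fin n)), ‖C (k : ℤ) x‖ ≤ B * ‖x‖)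
    (hMS : ∀ ξ ∈ stableSet C, ξ ≠ 0 → ∀ l K : ℕ,
      (∑ j ∈ Finset.Ioc l K, ‖Tpos C j ξ‖⁻¹) * ‖Tpos C K ξ‖ ≤ c₂) :
    ∀ ξ ∈ stableSet C, ∀ l K : ℕ, l ≤ K →
      ‖Tpos C K ξ‖ ≤ (c₂ * B / (1 - c₂⁻¹)) * (1 - c₂⁻¹) ^ (K - l) * ‖Tpos C l ξ‖ := by
  set θ : ℝ := 1 - c₂⁻¹ with hθ
  have hc₂0 : 0 < c₂ := by linarith
  have hθ0 : 0 < θ := by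
    rw [hθ]
    have : c₂⁻¹ < 1 := inv_lt_one_of_one_lt₀ hc₂
    linarith
  have hθ1 : θ < 1 := by
    rw [hθ]
    have : 0 < c₂⁻¹ := inv_pos.2 hc₂0
    linarith
  intro ξ hξ l K hlK
  by_cases hξ0 : ξ = 0
  · subst hξ0
    simp
  have hxpos : ∀ k, 0 < ‖Tpos C k ξ‖ := fun k =>
    norm_pos_iff.2 (fun h0 => hξ0 ((Tpos C k).injective (by rw [map_zero]; exact h0)))
  set x : ℕ → EuclideanSpace ℝ (Fin n) := fun k => Tpos C k ξ with hx
  set s : ℕ → ℝ := fun m => ∑ j ∈ Finset.Ioc l m, ‖x j‖⁻¹ with hs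
  have hcoef1 : (1:ℝ) ≤ c₂ * B / θ := by
    rw [le_div_iff₀ hθ0, one_mul]
    calc θ ≤ 1 := le_of_lt hθ1
    _ ≤ c₂ * B := by nlinarith
  rcases Nat.eq_or_lt_of_le hlK with heq | hlt
  · subst heq
    simp only [Nat.sub_self, pow_zero, mul_one]
    nlinarith [hxpos l, norm_nonneg (Tpos C l ξ)]
  -- l < K
  have hsstep : ∀ m, l ≤ m → s (m+1) = s m + ‖x (m+1)‖⁻¹ := by
    intro m hm
    rw [hs]
    simp only
    rw [Finset.sum_Ioc_succ_top hm]
  have hmsS : ∀ m, s m * ‖x m‖ ≤ c₂ := fun m => hMS ξ hξ hξ0 l m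
  have hkey : ∀ d : ℕ, ‖x (l+1)‖⁻¹ ≤ θ ^ d * s (l+1+d) := by
    intro d
    induction d with
    | zero =>
      rw [pow_zero, one_mul, add_zero, hs]
      simp only
      rw [Finset.sum_Ioc_succ_top le_rfl, Finset.Ioc_self, Finset.sum_empty, zero_add]
    | succ d ih =>
      have hm1 : l ≤ l + 1 + d := by omega
      have hstep := hsstep (l+1+d) hm1
      have hms := hmsS (l+1+d+1)
      have hspos : 0 < s (l+1+d+1) := by
        have h1 : ‖x (l+1+d+1)‖⁻¹ ≤ s (l+1+d+1) := by
          rw [hs]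
          simp only
          refine Finset.single_le_sum (fun j _ => inv_nonneg.2 (norm_nonneg _)) ?_
          rw [Finset.mem_Ioc]
          omega
        exact lt_of_lt_of_le (inv_pos.2 (hxpos _)) h1
      have hinv : s (l+1+d+1) / c₂ ≤ ‖x (l+1+d+1)‖⁻¹ := by
        rw [div_le_iff₀ hc₂0]
        calc s (l+1+d+1) = s (l+1+d+1) * (‖x (l+1+d+1)‖ * ‖x (l+1+d+1)‖⁻¹) := by
              rw [mul_inv_cancel₀ (ne_of_gt (hxpos _)), mul_one]
        _ = (s (l+1+d+1) * ‖x (l+1+d+1)‖) * ‖x (l+1+d+1)‖⁻¹ := by ring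
        _ ≤ c₂ * ‖x (l+1+d+1)‖⁻¹ := by
            exact mul_le_mul_of_nonneg_right (hmsS _) (inv_nonneg.2 (norm_nonneg _))
        _ = ‖x (l+1+d+1)‖⁻¹ * c₂ := by ring
      have hsθ : s (l+1+d) ≤ θ * s (l+1+d+1) := by
        have : s (l+1+d) = s (l+1+d+1) - ‖x (l+1+d+1)‖⁻¹ := by
          rw [hsstep (l+1+d) hm1]; ring
        rw [this, hθ]
        have : s (l+1+d+1) / c₂ ≤ ‖x (l+1+d+1)‖⁻¹ := hinv
        have hdiv : s (l+1+d+1) * c₂⁻¹ = s (l+1+d+1) / c₂ := by rw [div_eq_mul_inv]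
        nlinarith
      calc ‖x (l+1)‖⁻¹ ≤ θ ^ d * s (l+1+d) := ih
      _ ≤ θ ^ d * (θ * s (l+1+d+1)) := by
          exact mul_le_mul_of_nonneg_left hsθ (pow_nonneg (le_of_lt hθ0) d)
      _ = θ ^ (d+1) * s (l+1+d+1) := by ring
  have hd : l + 1 + (K - l - 1) = K := by omega
  have hkeyK : ‖x (l+1)‖⁻¹ ≤ θ ^ (K-l-1) * s K := by
    have := hkey (K - l - 1)
    rwa [hd] at this
  have hfin : ‖x K‖ ≤ θ ^ (K-l-1) * c₂ * ‖x (l+1)‖ := by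
    have h1 : ‖x K‖ = (‖x (l+1)‖⁻¹ * ‖x (l+1)‖) * ‖x K‖ := by
      rw [inv_mul_cancel₀ (ne_of_gt (hxpos _)), one_mul]
    rw [h1]
    calc (‖x (l+1)‖⁻¹ * ‖x (l+1)‖) * ‖x K‖
        ≤ ((θ ^ (K-l-1) * s K) * ‖x (l+1)‖) * ‖x K‖ := by
          refine mul_le_mul_of_nonneg_right (mul_le_mul_of_nonneg_right hkeyK (norm_nonneg _)) (norm_nonneg _)
    _ = θ ^ (K-l-1) * (s K * ‖x K‖) * ‖x (l+1)‖ := by ring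
    _ ≤ θ ^ (K-l-1) * c₂ * ‖x (l+1)‖ := by
        refine mul_le_mul_of_nonneg_right ?_ (norm_nonneg _)
        exact mul_le_mul_of_nonneg_left (hmsS K) (pow_nonneg (le_of_lt hθ0) _)
  have hxl1 : ‖x (l+1)‖ ≤ B * ‖x l‖ := by
    have : x (l+1) = C (l : ℤ) (x l) := rfl
    rw [this]
    exact hCB l (x l)
  have hpow : θ ^ (K - l) = θ ^ (K-l-1) * θ := by
    rw [← pow_succ]
    congr 1
    omega
  calc ‖x K‖ ≤ θ ^ (K-l-1) * c₂ * ‖x (l+1)‖ := hfin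
  _ ≤ θ ^ (K-l-1) * c₂ * (B * ‖x l‖) := by
      refine mul_le_mul_of_nonneg_left hxl1 ?_
      positivity
  _ = (c₂ * B / θ) * (θ ^ (K-l-1) * θ) * ‖x l‖ := by
      field_simp
  _ = (c₂ * B / θ) * θ ^ (K - l) * ‖x l‖ := by rw [hpow]

/-- Exponential backward decay (forward growth) on the unstable complement. -/
lemma dual_exp (c₄ : ℝ) (hc₄ : 1 ≤ c₄)
    (hMS : ∀ η ∈ (stableSet C)ᗮ, η ≠ 0 → ∀ m r : ℕ, m ≤ r →
      (∑ j ∈ Finset.Ioc m r, ‖Tpos C j η‖⁻¹) * ‖Tpos C m η‖ ≤ c₄) :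
    ∀ η ∈ (stableSet C)ᗮ, ∀ m r : ℕ, m ≤ r →
      ‖Tpos C m η‖ ≤ (c₄ * (1 + c₄⁻¹)) * ((1 + c₄⁻¹)⁻¹) ^ (r - m) * ‖Tpos C r η‖ := by
  set κ : ℝ := 1 + c₄⁻¹ with hκ
  have hc₄0 : 0 < c₄ := by linarith
  have hκ1 : 1 < κ := by
    rw [hκ]
    have : 0 < c₄⁻¹ := inv_pos.2 hc₄0
    linarith
  have hκ0 : 0 < κ := by linarith
  have hμ0 : 0 < κ⁻¹ := inv_pos.2 hκ0
  have hμ1 : κ⁻¹ < 1 := inv_lt_one_of_one_lt₀ hκ1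
  intro η hη m r hmr
  by_cases hη0 : η = 0
  · subst hη0
    simp
  have hypos : ∀ k, 0 < ‖Tpos C k η‖ := fun k =>
    norm_pos_iff.2 (fun h0 => hη0 ((Tpos C k).injective (by rw [map_zero]; exact h0)))
  set y : ℕ → EuclideanSpace ℝ (Fin n) := fun k => Tpos C k η with hy
  have hcoef1 : (1:ℝ) ≤ c₄ * κ := by nlinarith
  rcases Nat.eq_or_lt_of_le hmr with heq | hlt
  · subst heq
    simp only [Nat.sub_self, pow_zero, mul_one]
    nlinarith [hypos m, norm_nonneg (Tpos C m η)]
  set ρ : ℕ → ℝ := fun j => ∑ t ∈ Finset.Ioc j r, ‖y t‖⁻¹ with hρ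
  have hmsD : ∀ j, j ≤ r → ρ j * ‖y j‖ ≤ c₄ := fun j hj => hMS η hη hη0 j r hj
  have hρstep : ∀ j, j < r → ρ j = ‖y (j+1)‖⁻¹ + ρ (j+1) := by
    intro j hj
    rw [hρ]
    simp only
    have hins : Finset.Ioc j r = insert (j+1) (Finset.Ioc (j+1) r) := by
      ext t; simp only [Finset.mem_Ioc, Finset.mem_insert]; omega
    rw [hins, Finset.sum_insert (by simp)]
  have hkey : ∀ d : ℕ, ∀ j, j + 1 + d = r → κ ^ d * ‖y r‖⁻¹ ≤ ρ j := by
    intro d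
    induction d with
    | zero =>
      intro j hj
      rw [pow_zero, one_mul, hρstep j (by omega)]
      have : j + 1 = r := by omega
      rw [this, hρ]
      simp only
      rw [Finset.Ioc_self, Finset.sum_empty, add_zero]
    | succ d ih =>
      intro j hj
      have hj1 : j + 1 + 1 + d = r := by omega
      have hihj := ih (j+1) hj1
      have hρpos : 0 < ρ (j+1) :=
        lt_of_lt_of_le (mul_pos (pow_pos hκ0 d) (inv_pos.2 (hypos r))) hihj
      have hinv : ρ (j+1) / c₄ ≤ ‖y (j+1)‖⁻¹ := by
        rw [div_le_iff₀ hc₄0]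
        calc ρ (j+1) = ρ (j+1) * (‖y (j+1)‖ * ‖y (j+1)‖⁻¹) := by
              rw [mul_inv_cancel₀ (ne_of_gt (hypos _)), mul_one]
        _ = (ρ (j+1) * ‖y (j+1)‖) * ‖y (j+1)‖⁻¹ := by ring
        _ ≤ c₄ * ‖y (j+1)‖⁻¹ := mul_le_mul_of_nonneg_right (hmsD (j+1) (by omega)) (inv_nonneg.2 (norm_nonneg _))
        _ = ‖y (j+1)‖⁻¹ * c₄ := by ring
      have hρκ : κ * ρ (j+1) ≤ ρ j := by
        rw [hρstep j (by omega), hκ]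
        have hdiv : ρ (j+1) * c₄⁻¹ = ρ (j+1) / c₄ := by rw [div_eq_mul_inv]
        nlinarith
      calc κ ^ (d+1) * ‖y r‖⁻¹ = κ * (κ ^ d * ‖y r‖⁻¹) := by ring
      _ ≤ κ * ρ (j+1) := mul_le_mul_of_nonneg_left hihj (le_of_lt hκ0)
      _ ≤ ρ j := hρκ
  have hd : m + 1 + (r - m - 1) = r := by omega
  have hkeym : κ ^ (r-m-1) * ‖y r‖⁻¹ ≤ ρ m := hkey (r-m-1) m hd
  have h2 : κ ^ (r-m-1) * ‖y m‖ ≤ c₄ * ‖y r‖ := by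
    have hne : ‖y r‖ ≠ 0 := ne_of_gt (hypos r)
    have h1 : κ ^ (r-m-1) * ‖y m‖ = (κ ^ (r-m-1) * ‖y r‖⁻¹) * ‖y m‖ * ‖y r‖ := by
      field_simp
    rw [h1]
    calc (κ ^ (r-m-1) * ‖y r‖⁻¹) * ‖y m‖ * ‖y r‖ ≤ ρ m * ‖y m‖ * ‖y r‖ := by
          refine mul_le_mul_of_nonneg_right (mul_le_mul_of_nonneg_right hkeym (norm_nonneg _)) (norm_nonneg _)
    _ ≤ c₄ * ‖y r‖ := mul_le_mul_of_nonneg_right (hmsD m hmr) (norm_nonneg _)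
  have hfin : ‖y m‖ ≤ c₄ * (κ⁻¹) ^ (r-m-1) * ‖y r‖ := by
    have hκpow : 0 < κ ^ (r-m-1) := pow_pos hκ0 _
    have h3 : ‖y m‖ ≤ c₄ * ‖y r‖ / κ ^ (r-m-1) := (le_div_iff₀' hκpow).mpr h2
    calc ‖y m‖ ≤ c₄ * ‖y r‖ / κ ^ (r-m-1) := h3
    _ = c₄ * (κ⁻¹) ^ (r-m-1) * ‖y r‖ := by
        rw [inv_pow]
        field_simp
  have hpow : (κ⁻¹) ^ (r - m) = (κ⁻¹) ^ (r-m-1) * κ⁻¹ := by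
    rw [← pow_succ]
    congr 1
    omega
  calc ‖y m‖ ≤ c₄ * (κ⁻¹) ^ (r-m-1) * ‖y r‖ := hfin
  _ = (c₄ * κ) * ((κ⁻¹) ^ (r-m-1) * κ⁻¹) * ‖y r‖ := by
      field_simp
  _ = (c₄ * κ) * (κ⁻¹) ^ (r-m) * ‖y r‖ := by rw [hpow]


end MaizelAux

end MaizelProof

/-- (Maizel') If for every bounded sequence `b` the difference equation
`v (k+1) = C k (v k) + b (k+1)`, `k ≥ 0`, has a bounded solution, then the sequence `C`
is hyperbolic on `ℤ₊`. -/
theorem maizel {n : ℕ}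
    (C : ℤ → (EuclideanSpace ℝ (Fin n) ≃L[ℝ] EuclideanSpace ℝ (Fin n)))
    (hC : ∃ B : ℝ, ∀ k : ℤ,
      ‖(C k : EuclideanSpace ℝ (Fin n) →L[ℝ] EuclideanSpace ℝ (Fin n))‖ ≤ B ∧
      ‖((C k).symm : EuclideanSpace ℝ (Fin n) →L[ℝ] EuclideanSpace ℝ (Fin n))‖ ≤ B)
    (h : ∀ b : ℕ → EuclideanSpace ℝ (Fin n), (∃ B : ℝ, ∀ k : ℕ, ‖b k‖ ≤ B) →
      ∃ v : ℕ → EuclideanSpace ℝ (Fin n), (∃ B : ℝ, ∀ k : ℕ, ‖v k‖ ≤ B) ∧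
        ∀ k : ℕ, v (k + 1) = C (k : ℤ) (v k) + b (k + 1)) :
    HypPlus C := by
  classical
  obtain ⟨c, hc1, hadm⟩ := MaizelAux.exists_admis C hC h
  obtain ⟨c₀, hc₀1, hC0⟩ := MaizelAux.exists_c0 C
  obtain ⟨B₀, hB₀⟩ := hC
  set B : ℝ := max B₀ 1 with hBdef
  have hB1 : (1:ℝ) ≤ B := le_max_right _ _
  have hCB : ∀ (k : ℕ) (x : EuclideanSpace ℝ (Fin n)), ‖C (k : ℤ) x‖ ≤ B * ‖x‖ := by
    intro k x
    calc ‖C (k:ℤ) x‖ ≤ ‖(C (k:ℤ) : EuclideanSpace ℝ (Fin n) →L[ℝ] EuclideanSpace ℝ (Fin n))‖ * ‖x‖ :=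
          (C (k:ℤ) : EuclideanSpace ℝ (Fin n) →L[ℝ] EuclideanSpace ℝ (Fin n)).le_opNorm x
    _ ≤ B * ‖x‖ := by gcongr; exact le_trans (hB₀ (k:ℤ)).1 (le_max_left _ _)
  set c₂ : ℝ := c + c₀ * c with hc₂def
  have hc₂ : 1 < c₂ := by nlinarith
  set c₄ : ℝ := c + 2 * (c₀ * c) with hc₄def
  have hc₄ : 1 ≤ c₄ := by nlinarith
  have hSexp := MaizelAux.stable_exp C c₂ B hc₂ hB1 hCB
    (fun ξ hξ hξ0 l K => MaizelAux.ms_stable C c c₀ hc1 hc₀1 hadm hC0 ξ hξ hξ0 l K)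
  have hUexp := MaizelAux.dual_exp C c₄ hc₄
    (fun η hη hη0 m r hmr => MaizelAux.ms_dual C c c₀ hc1 hc₀1 hadm hC0 η hη hη0 m r hmr)
  set θ : ℝ := 1 - c₂⁻¹ with hθdef
  set κ : ℝ := 1 + c₄⁻¹ with hκdef
  have hc₂0 : (0:ℝ) < c₂ := by linarith
  have hc₄0 : (0:ℝ) < c₄ := by linarith
  have hθ0 : 0 < θ := by
    have : c₂⁻¹ < 1 := inv_lt_one_of_one_lt₀ hc₂
    rw [hθdef]; linarith
  have hθ1 : θ < 1 := by
    have : 0 < c₂⁻¹ := inv_pos.2 hc₂0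
    rw [hθdef]; linarith
  have hκ1 : 1 < κ := by
    have : 0 < c₄⁻¹ := inv_pos.2 hc₄0
    rw [hκdef]; linarith
  have hκ0 : (0:ℝ) < κ := by linarith
  have hμ0 : 0 < κ⁻¹ := inv_pos.2 hκ0
  have hμ1 : κ⁻¹ < 1 := inv_lt_one_of_one_lt₀ hκ1
  set Ks : ℝ := c₂ * B / θ with hKs
  set Ku : ℝ := c₄ * κ with hKu
  have hKs0 : 0 < Ks := by
    rw [hKs]
    exact div_pos (mul_pos hc₂0 (by linarith)) hθ0
  have hKu0 : 0 < Ku := mul_pos hc₄0 hκ0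
  set K : ℝ := max Ks Ku with hK
  set lam : ℝ := max θ κ⁻¹ with hlam
  have hlam0 : 0 < lam := lt_of_lt_of_le hθ0 (le_max_left _ _)
  have hlam1 : lam < 1 := max_lt hθ1 hμ1
  have hcompl : IsCompl (MaizelAux.stableSet C) (MaizelAux.stableSet C)ᗮ :=
    Submodule.isCompl_orthogonal_of_hasOrthogonalProjection
  set S : ℤ → Submodule ℝ (EuclideanSpace ℝ (Fin n)) :=
    fun k => (MaizelAux.stableSet C).map
      (((Phi C k 0).toLinearEquiv : EuclideanSpace ℝ (Fin n) ≃ₗ[ℝ] EuclideanSpace ℝ (Fin n)) :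
        EuclideanSpace ℝ (Fin n) →ₗ[ℝ] EuclideanSpace ℝ (Fin n)) with hSdef
  set U : ℤ → Submodule ℝ (EuclideanSpace ℝ (Fin n)) :=
    fun k => ((MaizelAux.stableSet C)ᗮ).map
      (((Phi C k 0).toLinearEquiv : EuclideanSpace ℝ (Fin n) ≃ₗ[ℝ] EuclideanSpace ℝ (Fin n)) :
        EuclideanSpace ℝ (Fin n) →ₗ[ℝ] EuclideanSpace ℝ (Fin n)) with hUdef
  refine ⟨K, lam, S, U, lt_of_lt_of_le hKs0 (le_max_left _ _), hlam0, hlam1, ?_, ?_, ?_, ?_⟩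
  · -- complementarity
    intro k _
    constructor
    · rw [eq_bot_iff]
      rintro x ⟨hxS, hxU⟩
      obtain ⟨ξ, hξ, hξe⟩ := hxS
      obtain ⟨η, hη, hηe⟩ := hxU
      have hξη : ξ = η := by
        apply (Phi C k 0).injective
        show Phi C k 0 ξ = Phi C k 0 η
        exact hξe.trans hηe.symm
      subst hξη
      have : ξ ∈ (MaizelAux.stableSet C) ⊓ (MaizelAux.stableSet C)ᗮ := ⟨hξ, hη⟩
      rw [hcompl.inf_eq_bot] at this
      have hξ0 : ξ = 0 := this
      subst hξ0
      rw [← hξe]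
      simp
    · rw [hSdef, hUdef]
      simp only
      rw [← Submodule.map_sup, hcompl.sup_eq_top, Submodule.map_top]
      rw [LinearMap.range_eq_top]
      exact (Phi C k 0).toLinearEquiv.surjective
  · -- invariance
    intro k hk
    obtain ⟨kn, rfl⟩ := Int.eq_ofNat_of_zero_le hk
    have hcomp : ∀ (W : Submodule ℝ (EuclideanSpace ℝ (Fin n))),
        (W.map
          (((Phi C (kn:ℤ) 0).toLinearEquiv : EuclideanSpace ℝ (Fin n) ≃ₗ[ℝ] EuclideanSpace ℝ (Fin n)) :
            EuclideanSpace ℝ (Fin n) →ₗ[ℝ] EuclideanSpace ℝ (Fin n))).map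
          ((C (kn:ℤ)).toLinearEquiv : EuclideanSpace ℝ (Fin n) →ₗ[ℝ] EuclideanSpace ℝ (Fin n))
        = W.map
          (((Phi C ((kn:ℤ)+1) 0).toLinearEquiv : EuclideanSpace ℝ (Fin n) ≃ₗ[ℝ] EuclideanSpace ℝ (Fin n)) :
            EuclideanSpace ℝ (Fin n) →ₗ[ℝ] EuclideanSpace ℝ (Fin n)) := by
      intro W
      have hfg : (((C (kn:ℤ)).toLinearEquiv : EuclideanSpace ℝ (Fin n) →ₗ[ℝ] EuclideanSpace ℝ (Fin n))).comp
          (((Phi C (kn:ℤ) 0).toLinearEquiv : EuclideanSpace ℝ (Fin n) ≃ₗ[ℝ] EuclideanSpace ℝ (Fin n)) :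
            EuclideanSpace ℝ (Fin n) →ₗ[ℝ] EuclideanSpace ℝ (Fin n))
          = (((Phi C ((kn:ℤ)+1) 0).toLinearEquiv : EuclideanSpace ℝ (Fin n) ≃ₗ[ℝ] EuclideanSpace ℝ (Fin n)) :
            EuclideanSpace ℝ (Fin n) →ₗ[ℝ] EuclideanSpace ℝ (Fin n)) := by
        refine LinearMap.ext fun v => ?_
        show C (kn:ℤ) (Phi C (kn:ℤ) 0 v) = Phi C ((kn:ℤ)+1) 0 v
        have h1 : ((kn:ℤ)+1) = ((kn+1 : ℕ) : ℤ) := by push_cast; ring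
        rw [h1, MaizelAux.Phi_zero_right C (kn+1) v, MaizelAux.Phi_zero_right C kn v]
        rfl
      rw [← Submodule.map_comp, hfg]
    exact ⟨hcomp _, hcomp _⟩
  · -- stable estimate
    intro k l hl hlk v hv
    obtain ⟨ln, rfl⟩ := Int.eq_ofNat_of_zero_le hl
    obtain ⟨kn, rfl⟩ := Int.eq_ofNat_of_zero_le (le_trans hl hlk)
    have hnk : ln ≤ kn := by exact_mod_cast hlk
    obtain ⟨ξ, hξ, rfl⟩ := hv
    have hval : ∀ m : ℕ,
        ((((Phi C (m:ℤ) 0).toLinearEquiv : EuclideanSpace ℝ (Fin n) ≃ₗ[ℝ] EuclideanSpace ℝ (Fin n)) :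
          EuclideanSpace ℝ (Fin n) →ₗ[ℝ] EuclideanSpace ℝ (Fin n)) ξ) = Tpos C m ξ := by
      intro m
      show Phi C (m:ℤ) 0 ξ = Tpos C m ξ
      exact MaizelAux.Phi_zero_right C m ξ
    rw [hval ln]
    have hco : Phi C (kn:ℤ) (ln:ℤ) (Tpos C ln ξ) = Tpos C kn ξ := by
      rw [← MaizelAux.Phi_zero_right C ln ξ, MaizelAux.Phi_cocycle, MaizelAux.Phi_zero_right]
    rw [hco]
    have hest := hSexp ξ hξ ln kn hnk
    have hzpow : lam ^ ((kn:ℤ) - (ln:ℤ)) = lam ^ (kn - ln) := by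
      have h1 : ((kn:ℤ) - (ln:ℤ)) = ((kn - ln : ℕ) : ℤ) := by omega
      rw [h1, zpow_natCast]
    rw [hzpow]
    calc ‖Tpos C kn ξ‖ ≤ Ks * θ ^ (kn - ln) * ‖Tpos C ln ξ‖ := hest
    _ ≤ K * lam ^ (kn - ln) * ‖Tpos C ln ξ‖ := by
        refine mul_le_mul_of_nonneg_right ?_ (norm_nonneg _)
        exact mul_le_mul (le_max_left _ _)
            (pow_le_pow_left₀ (le_of_lt hθ0) (le_max_left _ _) _)
            (pow_nonneg (le_of_lt hθ0) _) (le_trans (le_of_lt hKs0) (le_max_left _ _))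
  · -- unstable estimate
    intro k l hk hkl v hv
    obtain ⟨kn, rfl⟩ := Int.eq_ofNat_of_zero_le hk
    obtain ⟨ln, rfl⟩ := Int.eq_ofNat_of_zero_le (le_trans hk hkl)
    have hnk : kn ≤ ln := by exact_mod_cast hkl
    obtain ⟨η, hη, rfl⟩ := hv
    have hval : ∀ m : ℕ,
        ((((Phi C (m:ℤ) 0).toLinearEquiv : EuclideanSpace ℝ (Fin n) ≃ₗ[ℝ] EuclideanSpace ℝ (Fin n)) :
          EuclideanSpace ℝ (Fin n) →ₗ[ℝ] EuclideanSpace ℝ (Fin n)) η) = Tpos C m η := by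
      intro m
      show Phi C (m:ℤ) 0 η = Tpos C m η
      exact MaizelAux.Phi_zero_right C m η
    rw [hval ln]
    have hco : Phi C (kn:ℤ) (ln:ℤ) (Tpos C ln η) = Tpos C kn η := by
      rw [← MaizelAux.Phi_zero_right C ln η, MaizelAux.Phi_cocycle, MaizelAux.Phi_zero_right]
    rw [hco]
    have hest := hUexp η hη kn ln hnk
    have hzpow : lam ^ ((ln:ℤ) - (kn:ℤ)) = lam ^ (ln - kn) := by
      have h1 : ((ln:ℤ) - (kn:ℤ)) = ((ln - kn : ℕ) : ℤ) := by omega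
      rw [h1, zpow_natCast]
    rw [hzpow]
    calc ‖Tpos C kn η‖ ≤ Ku * (κ⁻¹) ^ (ln - kn) * ‖Tpos C ln η‖ := hest
    _ ≤ K * lam ^ (ln - kn) * ‖Tpos C ln η‖ := by
        refine mul_le_mul_of_nonneg_right ?_ (norm_nonneg _)
        exact mul_le_mul (le_max_right _ _)
            (pow_le_pow_left₀ (le_of_lt hμ0) (le_max_right _ _) _)
            (pow_nonneg (le_of_lt hμ0) _) (le_trans (le_of_lt hKu0) (le_max_right _ _))
end
end

section
/- Let B : ℝᵐ → ℝᵐ be a linear operator all of whose complex eigenvalues have absolute value 1. Then for every Δ₀ ∈ ℝᵐ and every δ > 0 there exist a number R ∈ ℕ and a sequence δ_1, …, δ_R ∈ ℝᵐ with |δ_k| < δ for all k ∈ [1, R] such that the sequence (Δ_k) defined by Δ_{k+1} = B Δ_k + δ_{k+1} for k ∈ [0, R−1] satisfies Δ_R = 0. -/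
noncomputable section

open Matrix Polynomial Filter Finset

section Aux

lemma eval_charpoly_det' {n : ℕ} (M : Matrix (Fin n) (Fin n) ℂ) (t : ℂ) :
    (Matrix.charpoly M).eval t = (t • (1 : Matrix (Fin n) (Fin n) ℂ) - M).det := by
  rw [Matrix.charpoly, ← Polynomial.coe_evalRingHom, RingHom.map_det]
  congr 1
  ext i j
  by_cases h : i = j <;>
    simp [h, Matrix.charmatrix_apply, Matrix.one_apply, Matrix.diagonal_apply, Matrix.smul_apply,
      Matrix.sub_apply, Matrix.map_apply]

lemma tE_mul' {n : ℕ} (M N : Matrix (Fin n) (Fin n) ℝ) (v : EuclideanSpace ℝ (Fin n)) :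
    Matrix.toEuclideanLin (M * N) v = Matrix.toEuclideanLin M (Matrix.toEuclideanLin N v) := by
  simp [Matrix.toEuclideanLin_apply, Matrix.mulVec_mulVec]

lemma tE_one' {n : ℕ} (v : EuclideanSpace ℝ (Fin n)) :
    Matrix.toEuclideanLin (1 : Matrix (Fin n) (Fin n) ℝ) v = v := by
  simp [Matrix.toEuclideanLin_apply, Matrix.one_mulVec]

lemma inner_tE' {n : ℕ} (M : Matrix (Fin n) (Fin n) ℝ) (v w : EuclideanSpace ℝ (Fin n)) :
    (inner ℝ (Matrix.toEuclideanLin M v) w : ℝ) = inner ℝ v (Matrix.toEuclideanLin Mᵀ w) := by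
  simp only [PiLp.inner_apply, RCLike.inner_apply, starRingEnd_apply, star_trivial,
    Matrix.toEuclideanLin_apply]
  simp only [PiLp.toLp_apply, Matrix.mulVec, dotProduct,
    Matrix.transpose_apply, Finset.sum_mul, Finset.mul_sum]
  rw [Finset.sum_comm]
  congr 1; ext i; congr 1; ext j; ring

end Aux

section EigenLemma

lemma eq_zero_of_tendsto_pow_mulVec' {n : ℕ} (C : Matrix (Fin n) (Fin n) ℂ)
    (habs : ∀ z : ℂ, (Matrix.charpoly C).IsRoot z → ‖z‖ = 1)
    (w : Fin n → ℂ) (hw : Tendsto (fun j => (C ^ j) *ᵥ w) atTop (nhds 0)) :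
    w = 0 := by
  by_contra hw0
  set V : Submodule ℂ (Fin n → ℂ) :=
    { carrier := {x | Tendsto (fun j => (C ^ j) *ᵥ x) atTop (nhds 0)}
      add_mem' := fun hx hy => by
        simpa [Matrix.mulVec_add] using hx.add hy
      zero_mem' := by simp [Matrix.mulVec_zero, tendsto_const_nhds]
      smul_mem' := fun c x hx => by
        simpa [Matrix.mulVec_smul] using hx.const_smul c } with hV
  have hcont : Continuous (Matrix.mulVecLin C) := LinearMap.continuous_of_finiteDimensional _
  have hCV : ∀ x ∈ V, (Matrix.mulVecLin C) x ∈ V := by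
    intro x hx
    have h1 : Tendsto (fun j => C *ᵥ ((C ^ j) *ᵥ x)) atTop (nhds (C *ᵥ 0)) :=
      (hcont.tendsto 0).comp hx
    have h2 : ∀ j : ℕ, C *ᵥ ((C ^ j) *ᵥ x) = (C ^ j) *ᵥ ((Matrix.mulVecLin C) x) := by
      intro j
      simp [Matrix.mulVec_mulVec, (Commute.pow_self C j).eq]
    simp only [Matrix.mulVec_zero] at h1
    have : Tendsto (fun j => (C ^ j) *ᵥ ((Matrix.mulVecLin C) x)) atTop (nhds 0) := by
      rw [show (fun j => (C ^ j) *ᵥ ((Matrix.mulVecLin C) x)) = fun j => C *ᵥ ((C ^ j) *ᵥ x) from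
        funext fun j => (h2 j).symm]
      exact h1
    exact this
  haveI : Nontrivial V := ⟨⟨⟨w, hw⟩, 0, by simp [Subtype.ext_iff, hw0]⟩⟩
  obtain ⟨μ, hμ⟩ := Module.End.exists_eigenvalue ((Matrix.mulVecLin C).restrict hCV)
  obtain ⟨u, hu⟩ := hμ.exists_hasEigenvector
  have huC : C *ᵥ (u : Fin n → ℂ) = μ • (u : Fin n → ℂ) := by
    have := hu.apply_eq_smul
    have h2 := congrArg (Subtype.val) this
    simpa [LinearMap.restrict_apply] using h2
  have hupow : ∀ j : ℕ, (C ^ j) *ᵥ (u : Fin n → ℂ) = μ ^ j • (u : Fin n → ℂ) := by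
    intro j
    induction j with
    | zero => simp [Matrix.one_mulVec]
    | succ j ih =>
        rw [pow_succ, ← Matrix.mulVec_mulVec, huC, Matrix.mulVec_smul, ih, smul_smul, pow_succ]
        ring_nf
  have hmu0 : Tendsto (fun j : ℕ => μ ^ j • (u : Fin n → ℂ)) atTop (nhds 0) := by
    have hmem : Tendsto (fun j => (C ^ j) *ᵥ (u : Fin n → ℂ)) atTop (nhds 0) := u.2
    simpa [hupow] using hmem
  obtain ⟨i, hi⟩ : ∃ i, (u : Fin n → ℂ) i ≠ 0 := by
    by_contra h
    push_neg at h
    exact hu.right (Subtype.ext (funext h))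
  have hcoord : Tendsto (fun j : ℕ => μ ^ j * (u : Fin n → ℂ) i) atTop (nhds 0) := by
    have := tendsto_pi_nhds.mp hmu0 i
    simpa [Pi.smul_apply, smul_eq_mul] using this
  have hmu : Tendsto (fun j : ℕ => μ ^ j) atTop (nhds 0) := by
    have := hcoord.mul_const (((u : Fin n → ℂ) i)⁻¹)
    simpa [mul_assoc, mul_inv_cancel₀ hi] using this
  have habs_lt : ‖μ‖ < 1 := by
    by_contra hge
    push_neg at hge
    have h1 : ∀ j : ℕ, (1 : ℝ) ≤ ‖μ ^ j‖ := by
      intro j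
      rw [norm_pow]
      exact one_le_pow₀ hge
    have h3 : ∀ᶠ j : ℕ in atTop, ‖μ ^ j‖ < 1 := by
      have := hmu.norm
      rw [norm_zero] at this
      exact this.eventually_lt_const one_pos
    obtain ⟨j, hj⟩ := h3.exists
    exact absurd (h1 j) (not_le.mpr hj)
  have hroot : (Matrix.charpoly C).IsRoot μ := by
    have hker : (μ • (1 : Matrix (Fin n) (Fin n) ℂ) - C) *ᵥ (u : Fin n → ℂ) = 0 := by
      rw [Matrix.sub_mulVec, Matrix.smul_mulVec, Matrix.one_mulVec, huC, sub_self]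
    have hdet : (μ • (1 : Matrix (Fin n) (Fin n) ℂ) - C).det = 0 := by
      rw [← Matrix.exists_mulVec_eq_zero_iff]
      exact ⟨u, fun h => hu.right (Subtype.ext h), hker⟩
    rw [Polynomial.IsRoot, eval_charpoly_det', hdet]
  have := habs μ hroot
  linarith [habs_lt]

variable {n : ℕ} (B : Matrix (Fin n) (Fin n) ℝ)
  (heig : ∀ z : ℂ, ((B.charpoly).map (algebraMap ℝ ℂ)).IsRoot z → ‖z‖ = 1)

include heig in
lemma det_isUnit' : IsUnit B.det := by
  rw [isUnit_iff_ne_zero]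
  intro h0
  have h1 : ((B.charpoly).map (algebraMap ℝ ℂ)).IsRoot 0 := by
    rw [← Matrix.charpoly_map, Polynomial.IsRoot, eval_charpoly_det']
    simp only [zero_smul, zero_sub, Matrix.det_neg]
    have : (B.map ⇑(algebraMap ℝ ℂ)).det = algebraMap ℝ ℂ B.det := (RingHom.map_det _ _).symm
    rw [this, h0]
    simp
  have := heig 0 h1
  simp at this

include heig in
lemma habs_inv_transpose' :
    ∀ z : ℂ, (Matrix.charpoly ((B⁻¹ᵀ).map (algebraMap ℝ ℂ))).IsRoot z → ‖z‖ = 1 := by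
  intro z hz
  have hdet := det_isUnit' B heig
  set f := algebraMap ℝ ℂ
  set Am := (B⁻¹).map f with hAm
  set Bm := B.map f with hBm
  have hAB : Am * Bm = 1 := by
    rw [hAm, hBm, ← Matrix.map_mul, Matrix.nonsing_inv_mul B hdet,
      Matrix.map_one f (map_zero f) (map_one f)]
  have hdetAm : Am.det ≠ 0 := by
    intro h
    have := congrArg Matrix.det hAB
    rw [Matrix.det_mul, h, zero_mul, Matrix.det_one] at this
    exact zero_ne_one this
  have hdet1 : (z • (1 : Matrix (Fin n) (Fin n) ℂ) - Am).det = 0 := by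
    have h1 : (z • (1 : Matrix (Fin n) (Fin n) ℂ) - (B⁻¹ᵀ).map f).det = 0 := by
      rw [Polynomial.IsRoot, eval_charpoly_det'] at hz
      exact hz
    have h2 : (z • (1 : Matrix (Fin n) (Fin n) ℂ) - (B⁻¹ᵀ).map f) =
        (z • (1 : Matrix (Fin n) (Fin n) ℂ) - Am)ᵀ := by
      rw [Matrix.transpose_sub, Matrix.transpose_smul, Matrix.transpose_one, hAm,
        Matrix.transpose_map]
    rw [h2, Matrix.det_transpose] at h1
    exact h1
  have hz0 : z ≠ 0 := by
    intro h
    rw [h] at hdet1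
    simp only [zero_smul, zero_sub, Matrix.det_neg] at hdet1
    rcases mul_eq_zero.mp hdet1 with h | h
    · exact pow_ne_zero (Fintype.card (Fin n)) (neg_ne_zero.mpr (one_ne_zero : (1:ℂ) ≠ 0)) h
    · exact hdetAm h
  have hdet2 : (z • Bm - 1).det = 0 := by
    have : (z • (1 : Matrix (Fin n) (Fin n) ℂ) - Am) * Bm = z • Bm - 1 := by
      rw [Matrix.sub_mul, Matrix.smul_mul, Matrix.one_mul, hAB]
    rw [← this, Matrix.det_mul, hdet1, zero_mul]
  have hfactor : z • Bm - 1 = (-z) • (z⁻¹ • (1 : Matrix (Fin n) (Fin n) ℂ) - Bm) := by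
    rw [smul_sub, smul_smul, neg_mul, mul_inv_cancel₀ hz0, neg_smul, neg_smul, one_smul,
      sub_neg_eq_add, neg_add_eq_sub]
  have hdet3 : (z⁻¹ • (1 : Matrix (Fin n) (Fin n) ℂ) - Bm).det = 0 := by
    rw [hfactor, Matrix.det_smul] at hdet2
    rcases mul_eq_zero.mp hdet2 with h | h
    · exact absurd h (pow_ne_zero (Fintype.card (Fin n)) (neg_ne_zero.mpr hz0))
    · exact h
  have hroot : ((B.charpoly).map f).IsRoot z⁻¹ := by
    rw [← Matrix.charpoly_map, Polynomial.IsRoot, eval_charpoly_det', hdet3]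
  have := heig z⁻¹ hroot
  rw [norm_inv] at this
  have h1 : ‖z‖ ≠ 0 := fun h => hz0 (norm_eq_zero.mp h)
  field_simp at this
  linarith [this.symm]

end EigenLemma

section RealLemmas

variable {n : ℕ}

lemma normE_sq' (v : EuclideanSpace ℝ (Fin n)) : ‖v‖ ^ 2 = ∑ i, (v i) ^ 2 := by
  rw [EuclideanSpace.norm_eq]
  rw [Real.sq_sqrt (by positivity)]
  simp [Real.norm_eq_abs, sq_abs]

lemma abs_coord_le_norm' (v : EuclideanSpace ℝ (Fin n)) (i : Fin n) : |v i| ≤ ‖v‖ := by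
  have h1 : (v i) ^ 2 ≤ ‖v‖ ^ 2 := by
    rw [normE_sq']
    exact Finset.single_le_sum (f := fun k => (v k)^2) (fun k _ => sq_nonneg _) (Finset.mem_univ i)
  calc |v i| = Real.sqrt ((v i)^2) := (Real.sqrt_sq_eq_abs _).symm
    _ ≤ Real.sqrt (‖v‖^2) := Real.sqrt_le_sqrt h1
    _ = ‖v‖ := by rw [Real.sqrt_sq (norm_nonneg _)]

lemma mulVec_map_ofReal' (M : Matrix (Fin n) (Fin n) ℝ) (v : Fin n → ℝ) (i : Fin n) :
    ((M.map (algebraMap ℝ ℂ)) *ᵥ (fun k => ((v k : ℂ)))) i = ((M *ᵥ v) i : ℂ) := by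
  simp only [Matrix.mulVec, dotProduct, Matrix.map_apply]
  push_cast
  rfl

lemma eq_zero_of_bounded_sums' (A : Matrix (Fin n) (Fin n) ℝ)
    (habs : ∀ z : ℂ, (Matrix.charpoly ((Aᵀ).map (algebraMap ℝ ℂ))).IsRoot z → ‖z‖ = 1)
    (v : EuclideanSpace ℝ (Fin n)) (c : ℝ)
    (h : ∀ R : ℕ, ∑ j ∈ Finset.Icc 1 R, ‖Matrix.toEuclideanLin ((Aᵀ) ^ j) v‖ ^ 2 ≤ c) :
    v = 0 := by
  set x : ℕ → EuclideanSpace ℝ (Fin n) := fun j => Matrix.toEuclideanLin ((Aᵀ) ^ j) v with hx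
  have hc : 0 ≤ c := by simpa using h 0
  have hsum : Summable (fun j => ‖x j‖ ^ 2) := by
    apply summable_of_sum_range_le (c := ‖x 0‖^2 + c) (fun j => sq_nonneg _)
    intro R
    rcases R with _ | R
    · simp; positivity
    · have h1 : Finset.range (R+1) = insert 0 (Finset.Icc 1 R) := by
        ext k
        simp [Finset.mem_range, Finset.mem_Icc, Nat.lt_succ_iff]
        omega
      rw [h1, Finset.sum_insert (by simp)]
      exact add_le_add_right (h R) _
  have hx0 : Tendsto (fun j => ‖x j‖) atTop (nhds 0) := by
    have h1 := hsum.tendsto_atTop_zero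
    have h2 : Tendsto (fun j => Real.sqrt (‖x j‖^2)) atTop (nhds (Real.sqrt 0)) :=
      (Real.continuous_sqrt.tendsto 0).comp h1
    simpa [Real.sqrt_sq (norm_nonneg _), Real.sqrt_zero] using h2
  have hcoord : ∀ i, Tendsto (fun j => (x j) i) atTop (nhds 0) := by
    intro i
    have h1 : ∀ j, |(x j) i| ≤ ‖x j‖ := fun j => abs_coord_le_norm' _ i
    exact squeeze_zero_norm h1 hx0
  set Cm : Matrix (Fin n) (Fin n) ℂ := (Aᵀ).map (algebraMap ℝ ℂ) with hCm
  have hpow : ∀ j : ℕ, Cm ^ j = ((Aᵀ) ^ j).map (algebraMap ℝ ℂ) := by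
    intro j
    rw [hCm, ← RingHom.mapMatrix_apply, ← RingHom.mapMatrix_apply, map_pow]
  set w : Fin n → ℂ := fun i => ((v i : ℝ) : ℂ) with hw
  have htend : Tendsto (fun j => (Cm ^ j) *ᵥ w) atTop (nhds 0) := by
    rw [tendsto_pi_nhds]
    intro i
    have h1 : ∀ j : ℕ, ((Cm ^ j) *ᵥ w) i = (((x j) i : ℝ) : ℂ) := by
      intro j
      rw [hpow]
      exact mulVec_map_ofReal' _ _ i
    simp only [h1]
    have h2 : Tendsto (fun j => (((x j) i : ℝ) : ℂ)) atTop (nhds ((0:ℝ):ℂ)) :=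
      (Complex.continuous_ofReal.tendsto 0).comp (hcoord i)
    simpa using h2
  have hw0 : w = 0 := eq_zero_of_tendsto_pow_mulVec' Cm habs w htend
  ext i
  have := congrFun hw0 i
  simpa [hw] using this

lemma exists_gram_large' (A : Matrix (Fin n) (Fin n) ℝ)
    (hzero : ∀ (v : EuclideanSpace ℝ (Fin n)) (c : ℝ),
      (∀ R : ℕ, ∑ j ∈ Finset.Icc 1 R, ‖Matrix.toEuclideanLin ((Aᵀ) ^ j) v‖ ^ 2 ≤ c) → v = 0)
    (c : ℝ) :
    ∃ R : ℕ, ∀ v : EuclideanSpace ℝ (Fin n), ‖v‖ = 1 →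
      c ≤ ∑ j ∈ Finset.Icc 1 R, ‖Matrix.toEuclideanLin ((Aᵀ) ^ j) v‖ ^ 2 := by
  by_contra hcon
  push_neg at hcon
  choose vs hvs1 hvs2 using hcon
  set q : ℕ → EuclideanSpace ℝ (Fin n) → ℝ :=
    fun R v => ∑ j ∈ Finset.Icc 1 R, ‖Matrix.toEuclideanLin ((Aᵀ) ^ j) v‖ ^ 2 with hq
  have hqcont : ∀ R, Continuous (q R) := by
    intro R
    apply continuous_finset_sum
    intro j _
    exact ((Matrix.toEuclideanLin ((Aᵀ) ^ j)).continuous_of_finiteDimensional).norm.pow 2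
  have hqmono : ∀ (R S : ℕ), R ≤ S → ∀ v, q R v ≤ q S v := by
    intro R S hRS v
    apply Finset.sum_le_sum_of_subset_of_nonneg
    · exact Finset.Icc_subset_Icc_right hRS
    · intro j _ _; positivity
  have hcompact : IsCompact (Metric.sphere (0 : EuclideanSpace ℝ (Fin n)) 1) :=
    isCompact_sphere 0 1
  have hmem : ∀ R, vs R ∈ Metric.sphere (0 : EuclideanSpace ℝ (Fin n)) 1 := by
    intro R
    rw [mem_sphere_zero_iff_norm]
    exact hvs1 R
  obtain ⟨v, hvmem, φ, hφ, hconv⟩ := hcompact.tendsto_subseq hmem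
  have hvnorm : ‖v‖ = 1 := mem_sphere_zero_iff_norm.mp hvmem
  have hbound : ∀ R : ℕ, q R v ≤ c := by
    intro R
    have h1 : Tendsto (fun k => q R (vs (φ k))) atTop (nhds (q R v)) :=
      ((hqcont R).tendsto v).comp hconv
    apply le_of_tendsto h1
    filter_upwards [eventually_ge_atTop R] with k hk
    have h2 : R ≤ φ k := le_trans hk (hφ.le_apply)
    exact le_of_lt (lt_of_le_of_lt (hqmono R (φ k) h2 (vs (φ k))) (hvs2 (φ k)))
  have := hzero v c hbound
  rw [this, norm_zero] at hvnorm
  exact zero_ne_one hvnorm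

end RealLemmas

set_option maxHeartbeats 2000000 in
/-- If all complex eigenvalues of the linear operator `B : ℝᵐ → ℝᵐ` (i.e. all roots of the
complexified characteristic polynomial) have absolute value 1, then any initial state `Δ₀`
can be steered to `0` in finitely many steps of `Δ (k+1) = B (Δ k) + δ (k+1)` using
controls of norm `< δ`. -/
theorem steer_to_zero_of_unit_eigenvalues (m : ℕ) (B : Matrix (Fin m) (Fin m) ℝ)
    (heig : ∀ z : ℂ, ((B.charpoly).map (algebraMap ℝ ℂ)).IsRoot z → ‖z‖ = 1) :
    ∀ (Δ₀ : EuclideanSpace ℝ (Fin m)) (δ : ℝ), 0 < δ →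
      ∃ (R : ℕ) (ds Δ : ℕ → EuclideanSpace ℝ (Fin m)),
        (∀ k : ℕ, 1 ≤ k → k ≤ R → ‖ds k‖ < δ) ∧
        Δ 0 = Δ₀ ∧
        (∀ k : ℕ, k < R → Δ (k + 1) = Matrix.toEuclideanLin B (Δ k) + ds (k + 1)) ∧
        Δ R = 0 := by
  intro Δ₀ δ hδ
  have hdetB : IsUnit B.det := det_isUnit' B heig
  set A : Matrix (Fin m) (Fin m) ℝ := B⁻¹ with hA
  have habs := habs_inv_transpose' B heig
  have hzero := fun v c hvc => eq_zero_of_bounded_sums' A habs v c hvc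
  -- choose the horizon R
  set c : ℝ := ‖Δ₀‖^2 / δ^2 + 1 with hc
  have hcpos : 0 < c := by positivity
  obtain ⟨R, hR⟩ := exists_gram_large' A hzero c
  -- scale invariant lower bound
  set q : EuclideanSpace ℝ (Fin m) → ℝ :=
    fun v => ∑ j ∈ Finset.Icc 1 R, ‖Matrix.toEuclideanLin ((Aᵀ) ^ j) v‖ ^ 2 with hq
  have hq_nonneg : ∀ v, 0 ≤ q v := fun v => Finset.sum_nonneg fun j _ => sq_nonneg _
  have hq_ge : ∀ v : EuclideanSpace ℝ (Fin m), c * ‖v‖^2 ≤ q v := by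
    intro v
    rcases eq_or_ne v 0 with rfl | hv
    · simpa using hq_nonneg 0
    · have ht : (0:ℝ) < ‖v‖ := norm_pos_iff.mpr hv
      have h1 : ‖(‖v‖⁻¹ • v : EuclideanSpace ℝ (Fin m))‖ = 1 := by
        rw [norm_smul, norm_inv, norm_norm, inv_mul_cancel₀ (ne_of_gt ht)]
      have h2 : c ≤ q (‖v‖⁻¹ • v) := hR (‖v‖⁻¹ • v) h1
      have h3 : q (‖v‖⁻¹ • v) = ‖v‖⁻¹^2 * q v := by
        rw [hq]
        simp only
        rw [Finset.mul_sum]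
        refine Finset.sum_congr rfl fun j _ => ?_
        rw [_root_.map_smul, norm_smul, norm_inv, norm_norm, mul_pow]
      rw [h3] at h2
      have h4 : c * ‖v‖^2 ≤ (‖v‖⁻¹^2 * q v) * ‖v‖^2 := by
        exact mul_le_mul_of_nonneg_right h2 (sq_nonneg _)
      calc c * ‖v‖^2 ≤ (‖v‖⁻¹^2 * q v) * ‖v‖^2 := h4
        _ = q v := by
            field_simp
  -- the Gramian
  set G : Matrix (Fin m) (Fin m) ℝ := ∑ j ∈ Finset.Icc 1 R, A ^ j * (Aᵀ) ^ j with hG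
  have hinner : ∀ v : EuclideanSpace ℝ (Fin m), (inner ℝ v (Matrix.toEuclideanLin G v) : ℝ) = q v := by
    intro v
    rw [hG, map_sum, LinearMap.coe_sum, Finset.sum_apply, inner_sum]
    apply Finset.sum_congr rfl
    intro j _
    rw [tE_mul']
    have h1 : (inner ℝ v (Matrix.toEuclideanLin (A ^ j) (Matrix.toEuclideanLin ((Aᵀ) ^ j) v)) : ℝ)
        = inner ℝ (Matrix.toEuclideanLin ((A ^ j)ᵀ) v) (Matrix.toEuclideanLin ((Aᵀ) ^ j) v) := by
      rw [real_inner_comm, inner_tE', real_inner_comm]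
    rw [h1, Matrix.transpose_pow, real_inner_self_eq_norm_sq]
  have hGdet : IsUnit G.det := by
    rw [isUnit_iff_ne_zero]
    intro h0
    obtain ⟨u, hu0, huG⟩ := (Matrix.exists_mulVec_eq_zero_iff).mpr h0
    set uE : EuclideanSpace ℝ (Fin m) := (WithLp.equiv 2 _).symm u with huE
    have h1 : Matrix.toEuclideanLin G uE = 0 := by
      rw [huE, WithLp.equiv_symm_apply, Matrix.toEuclideanLin_apply_piLp_toLp, huG]
      simp
    have h2 : q uE = 0 := by rw [← hinner, h1, inner_zero_right]
    have h3 : uE ≠ 0 := by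
      intro h
      apply hu0
      have := congrArg (WithLp.equiv 2 (Fin m → ℝ)) (h ▸ huE.symm)
      simpa using this
    have h4 : (0:ℝ) < c * ‖uE‖^2 := by
      have : (0:ℝ) < ‖uE‖ := norm_pos_iff.mpr h3
      positivity
    linarith [hq_ge uE, h2.symm ▸ hq_ge uE]
  -- the control target
  have hexw : ∃ w : EuclideanSpace ℝ (Fin m), Matrix.toEuclideanLin G w = -Δ₀ := by
    refine ⟨Matrix.toEuclideanLin G⁻¹ (-Δ₀), ?_⟩
    rw [← tE_mul', Matrix.mul_nonsing_inv G hGdet, tE_one']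
  obtain ⟨w, hGw⟩ := hexw
  -- bounds
  have hqw_le : q w ≤ ‖w‖ * ‖Δ₀‖ := by
    rw [← hinner, hGw]
    calc (inner ℝ w (-Δ₀) : ℝ) ≤ ‖w‖ * ‖-Δ₀‖ := real_inner_le_norm _ _
      _ = ‖w‖ * ‖Δ₀‖ := by rw [norm_neg]
  have hw_le : c * ‖w‖ ≤ ‖Δ₀‖ := by
    rcases eq_or_ne w 0 with h | h
    · rw [h, norm_zero, mul_zero]; exact norm_nonneg _
    · have hwpos : (0:ℝ) < ‖w‖ := norm_pos_iff.mpr h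
      have := le_trans (hq_ge w) hqw_le
      nlinarith
  have hqw_le2 : q w ≤ ‖Δ₀‖^2 / c := by
    calc q w ≤ ‖w‖ * ‖Δ₀‖ := hqw_le
      _ ≤ (‖Δ₀‖ / c) * ‖Δ₀‖ := by
          apply mul_le_mul_of_nonneg_right _ (norm_nonneg _)
          rw [le_div_iff₀ hcpos]
          linarith [hw_le]
      _ = ‖Δ₀‖^2 / c := by ring
  have hqw_lt : q w < δ^2 := by
    apply lt_of_le_of_lt hqw_le2
    rw [div_lt_iff₀ hcpos, hc]
    have : (0:ℝ) < δ^2 := by positivity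
    have h1 : δ^2 * (‖Δ₀‖^2/δ^2) = ‖Δ₀‖^2 := by field_simp
    nlinarith
  -- define the controls and trajectory
  set ds : ℕ → EuclideanSpace ℝ (Fin m) :=
    fun k => if k ∈ Finset.Icc 1 R then Matrix.toEuclideanLin ((Aᵀ) ^ k) w else 0 with hds
  set Δ : ℕ → EuclideanSpace ℝ (Fin m) :=
    fun k => Matrix.toEuclideanLin (B ^ k)
      (Δ₀ + ∑ j ∈ Finset.Icc 1 k, Matrix.toEuclideanLin (A ^ j) (ds j)) with hΔ
  have hBA : ∀ s : ℕ, B ^ s * A ^ s = 1 := by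
    intro s
    have hcomm : Commute B A := by
      unfold A
      rw [Commute, SemiconjBy, Matrix.mul_nonsing_inv B hdetB, Matrix.nonsing_inv_mul B hdetB]
    rw [← hcomm.mul_pow, Matrix.mul_nonsing_inv B hdetB, one_pow]
  refine ⟨R, ds, Δ, ?_, ?_, ?_, ?_⟩
  · -- norm bound on controls
    intro k hk1 hk2
    have hkmem : k ∈ Finset.Icc 1 R := Finset.mem_Icc.mpr ⟨hk1, hk2⟩
    have h1 : ds k = Matrix.toEuclideanLin ((Aᵀ) ^ k) w := by rw [hds]; simp [hkmem]
    have h2 : ‖Matrix.toEuclideanLin ((Aᵀ) ^ k) w‖^2 ≤ q w :=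
      Finset.single_le_sum (f := fun j => ‖Matrix.toEuclideanLin ((Aᵀ) ^ j) w‖^2)
        (fun j _ => sq_nonneg _) hkmem
    have h3 : ‖ds k‖^2 < δ^2 := by
      rw [h1]
      exact lt_of_le_of_lt h2 hqw_lt
    exact lt_of_pow_lt_pow_left₀ 2 (le_of_lt hδ) h3
  · -- initial condition
    show Matrix.toEuclideanLin (B ^ 0)
      (Δ₀ + ∑ j ∈ Finset.Icc 1 0, Matrix.toEuclideanLin (A ^ j) (ds j)) = Δ₀
    rw [pow_zero, show Finset.Icc 1 0 = (∅ : Finset ℕ) by decide]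
    rw [Finset.sum_empty, add_zero, tE_one']
  · -- recursion
    intro k hk
    have h1 : Matrix.toEuclideanLin (B ^ (k+1))
        (Matrix.toEuclideanLin (A ^ (k+1)) (ds (k+1))) = ds (k+1) := by
      rw [← tE_mul', hBA (k+1), tE_one']
    have hstep : Δ (k+1) = Matrix.toEuclideanLin (B ^ (k+1))
        (Δ₀ + ∑ j ∈ Finset.Icc 1 k, Matrix.toEuclideanLin (A ^ j) (ds j)) + ds (k+1) := by
      show Matrix.toEuclideanLin (B ^ (k+1))
        (Δ₀ + ∑ j ∈ Finset.Icc 1 (k+1), Matrix.toEuclideanLin (A ^ j) (ds j)) = _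
      rw [Finset.sum_Icc_succ_top (Nat.one_le_iff_ne_zero.mpr (Nat.succ_ne_zero k))]
      rw [← add_assoc, map_add, h1]
    have hrhs : Matrix.toEuclideanLin B (Δ k) = Matrix.toEuclideanLin (B ^ (k+1))
        (Δ₀ + ∑ j ∈ Finset.Icc 1 k, Matrix.toEuclideanLin (A ^ j) (ds j)) := by
      show Matrix.toEuclideanLin B (Matrix.toEuclideanLin (B ^ k)
        (Δ₀ + ∑ j ∈ Finset.Icc 1 k, Matrix.toEuclideanLin (A ^ j) (ds j))) = _
      rw [← tE_mul', ← pow_succ']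
    rw [hstep, hrhs]
  · -- final condition
    show Matrix.toEuclideanLin (B ^ R)
      (Δ₀ + ∑ j ∈ Finset.Icc 1 R, Matrix.toEuclideanLin (A ^ j) (ds j)) = 0
    have h1 : ∑ j ∈ Finset.Icc 1 R, Matrix.toEuclideanLin (A ^ j) (ds j)
        = Matrix.toEuclideanLin G w := by
      rw [hG, map_sum, LinearMap.coe_sum, Finset.sum_apply]
      refine Finset.sum_congr rfl fun j hj => ?_
      have hdsj : ds j = Matrix.toEuclideanLin ((Aᵀ) ^ j) w := by
        simp only [hds]
        rw [if_pos hj]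
      rw [hdsj, ← tE_mul']
    rw [h1, hGw, add_neg_cancel, map_zero]

end
end

section
/- Suppose the flow φ has the Lipschitz periodic shadowing property. Then the closure of Per(φ) equals CR(φ): every chain recurrent point is a limit of points of Per(φ), and conversely every point in the closure of Per(φ) is chain recurrent. -/
noncomputable section

private lemma lip_pow {M : Type*} [MetricSpace M] (φ : ℝ → M → M)
    (hzero : ∀ x : M, φ 0 x = x)
    (hadd : ∀ (s t : ℝ) (x : M), φ (s + t) x = φ s (φ t x)) (ν : ℝ) (hν : 1 ≤ ν)
    (hlip : ∀ t : ℝ, 0 ≤ t → t ≤ 1 → ∀ x y : M, dist (φ t x) (φ t y) ≤ ν * dist x y) :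
    ∀ n : ℕ, ∀ t : ℝ, 0 ≤ t → t ≤ n → ∀ a b : M,
      dist (φ t a) (φ t b) ≤ ν ^ n * dist a b := by
  intro n
  induction n with
  | zero =>
    intro t h0 h1 a b
    have ht : t = 0 := le_antisymm (by exact_mod_cast h1) h0
    subst ht
    simp [hzero]
  | succ n ih =>
    intro t h0 h1 a b
    by_cases hc : t ≤ n
    · calc dist (φ t a) (φ t b) ≤ ν ^ n * dist a b := ih t h0 hc a b
        _ ≤ ν ^ (n + 1) * dist a b := by
          have : ν ^ n ≤ ν ^ (n + 1) := pow_le_pow_right₀ hν (Nat.le_succ n)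
          exact mul_le_mul_of_nonneg_right this dist_nonneg
    · push_neg at hc
      have hn0 : (0 : ℝ) ≤ n := Nat.cast_nonneg n
      have h1' : t - n ≤ 1 := by
        have : ((n : ℝ) + 1) = ((n + 1 : ℕ) : ℝ) := by push_cast; ring
        linarith [h1.trans_eq this.symm]
      have h0' : 0 ≤ t - n := by linarith
      have key : ∀ c : M, φ t c = φ (t - n) (φ n c) := by
        intro c
        have := hadd (t - n) n c
        rw [show t - (n : ℝ) + n = t by ring] at this
        exact this
      rw [key a, key b]
      calc dist (φ (t - n) (φ n a)) (φ (t - n) (φ n b))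
          ≤ ν * dist (φ (n : ℝ) a) (φ (n : ℝ) b) := hlip _ h0' h1' _ _
        _ ≤ ν * (ν ^ n * dist a b) := by
            have := ih (n : ℝ) hn0 le_rfl a b
            exact mul_le_mul_of_nonneg_left this (by linarith)
        _ = ν ^ (n + 1) * dist a b := by ring

private lemma per_iterate {M : Type*} (φ : ℝ → M → M)
    (hzero : ∀ x : M, φ 0 x = x)
    (hadd : ∀ (s t : ℝ) (x : M), φ (s + t) x = φ s (φ t x))
    (x : M) (ω : ℝ) (hx : φ ω x = x) : ∀ k : ℕ, φ ((k : ℝ) * ω) x = x := by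
  intro k
  induction k with
  | zero => simpa using hzero x
  | succ k ih =>
    have : ((k : ℝ) + 1) * ω = ω + (k : ℝ) * ω := by ring
    rw [Nat.cast_succ, this, hadd, ih, hx]

private lemma s_growth (s : ℤ → ℝ) (hstep : ∀ m : ℤ, s m + 1 ≤ s (m + 1)) :
    ∀ (m : ℤ) (k : ℕ), s m + k ≤ s (m + k) := by
  intro m k
  induction k with
  | zero => simp
  | succ k ih =>
    have h2 := hstep (m + (k : ℤ))
    rw [show (m + ((k + 1 : ℕ) : ℤ)) = (m + (k : ℤ)) + 1 by push_cast; ring,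
      Nat.cast_succ]
    linarith

private lemma s_mono (s : ℤ → ℝ) (hstep : ∀ m : ℤ, s m + 1 ≤ s (m + 1)) :
    ∀ a b : ℤ, a ≤ b → s a ≤ s b := by
  intro a b hab
  obtain ⟨k, rfl⟩ := Int.le.dest hab
  have := s_growth s hstep a k
  have hk : (0 : ℝ) ≤ (k : ℝ) := Nat.cast_nonneg k
  linarith

private lemma flow_exists_floor (s : ℤ → ℝ) (hstep : ∀ m : ℤ, s m + 1 ≤ s (m + 1)) (t : ℝ) :
    ∃ m : ℤ, s m ≤ t ∧ t < s (m + 1) := by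
  have Hinh : ∃ z : ℤ, s z ≤ t := by
    obtain ⟨k, hk⟩ := exists_nat_gt (s 0 - t)
    refine ⟨-(k : ℤ), ?_⟩
    have := s_growth s hstep (-(k : ℤ)) k
    rw [show (-(k : ℤ) + (k : ℤ)) = 0 by ring] at this
    linarith
  have Hbdd : ∃ b : ℤ, ∀ z : ℤ, s z ≤ t → z ≤ b := by
    obtain ⟨n, hn⟩ := exists_nat_gt (t - s 0)
    refine ⟨(n : ℤ), ?_⟩
    intro z hz
    by_contra hc
    push_neg at hc
    have hz0 : 0 ≤ z := by omega
    have := s_growth s hstep 0 z.toNat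
    rw [zero_add, Int.toNat_of_nonneg hz0] at this
    have hzn : ((n : ℤ) : ℝ) < ((z.toNat : ℤ) : ℝ) := by
      exact_mod_cast (by omega : (n : ℤ) < (z.toNat : ℤ))
    push_cast at hzn this
    linarith
  obtain ⟨m, hm, hgr⟩ := Int.exists_greatest_of_bdd Hbdd Hinh
  refine ⟨m, hm, ?_⟩
  by_contra hc
  push_neg at hc
  have := hgr (m + 1) hc
  omega

private lemma floor_unique (s : ℤ → ℝ) (hstep : ∀ m : ℤ, s m + 1 ≤ s (m + 1))
    {t : ℝ} {m m' : ℤ} (h1 : s m ≤ t) (h2 : t < s (m + 1))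
    (h1' : s m' ≤ t) (h2' : t < s (m' + 1)) : m = m' := by
  rcases lt_trichotomy m m' with h | h | h
  · exfalso
    have : s (m + 1) ≤ s m' := s_mono s hstep _ _ (by omega)
    linarith
  · exact h
  · exfalso
    have : s (m' + 1) ≤ s m := s_mono s hstep _ _ (by omega)
    linarith

private def flowIdx (N : ℕ) (m : ℤ) : ℕ := (m % ((N : ℤ) + 1)).toNat

private def flows (Ts : ℕ → ℝ) (N : ℕ) (m : ℤ) : ℝ :=
  (∑ i ∈ Finset.range (N + 1), Ts i) * ((m / ((N : ℤ) + 1) : ℤ) : ℝ) +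
    ∑ i ∈ Finset.range (flowIdx N m), Ts i

private lemma flowIdx_le (N : ℕ) (m : ℤ) : flowIdx N m ≤ N := by
  have hP : (0 : ℤ) < (N : ℤ) + 1 := by omega
  have h1 : 0 ≤ m % ((N : ℤ) + 1) := Int.emod_nonneg m (by omega)
  have h2 : m % ((N : ℤ) + 1) < (N : ℤ) + 1 := Int.emod_lt_of_pos m hP
  simp only [flowIdx]
  omega

private lemma flowIdx_zero (N : ℕ) : flowIdx N 0 = 0 := by simp [flowIdx]

private lemma flows_zero (Ts : ℕ → ℝ) (N : ℕ) : flows Ts N 0 = 0 := by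
  simp [flows, flowIdx]

private lemma flow_emod_succ (P m : ℤ) (hP : 0 < P) :
    ((m + 1) % P = m % P + 1 ∧ (m + 1) / P = m / P) ∨
    (m % P = P - 1 ∧ (m + 1) % P = 0 ∧ (m + 1) / P = m / P + 1) := by
  have e1 := Int.mul_ediv_add_emod m P
  have e2 := Int.mul_ediv_add_emod (m + 1) P
  have ha1 : 0 ≤ m % P := Int.emod_nonneg m (by omega)
  have ha2 : m % P < P := Int.emod_lt_of_pos m hP
  have hb1 : 0 ≤ (m + 1) % P := Int.emod_nonneg (m + 1) (by omega)
  have hb2 : (m + 1) % P < P := Int.emod_lt_of_pos (m + 1) hP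
  have key : P * ((m + 1) / P - m / P) = m % P + 1 - (m + 1) % P := by
    linear_combination e2 - e1
  have hc : (m + 1) / P - m / P = 0 ∨ (m + 1) / P - m / P = 1 := by
    rcases lt_trichotomy ((m + 1) / P - m / P) 0 with h | h | h
    · exfalso
      have h1 : (m + 1) / P - m / P ≤ -1 := by omega
      have := mul_le_mul_of_nonneg_left h1 hP.le
      linarith
    · left; exact h
    · by_contra hne
      push_neg at hne
      have h2 : (2 : ℤ) ≤ (m + 1) / P - m / P := by omega
      have := mul_le_mul_of_nonneg_left h2 hP.le
      linarith
  rcases hc with h | h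
  · rw [h, mul_zero] at key
    exact Or.inl ⟨by omega, by omega⟩
  · rw [h, mul_one] at key
    exact Or.inr ⟨by omega, by omega, by omega⟩

private lemma flows_succ (Ts : ℕ → ℝ) (N : ℕ) (m : ℤ) :
    flows Ts N (m + 1) = flows Ts N m + Ts (flowIdx N m) := by
  have hP : (0 : ℤ) < (N : ℤ) + 1 := by omega
  have h1 : 0 ≤ m % ((N : ℤ) + 1) := Int.emod_nonneg m (by omega)
  rcases flow_emod_succ ((N : ℤ) + 1) m hP with ⟨hb, hq⟩ | ⟨ha, hb, hq⟩
  · have hidx : flowIdx N (m + 1) = flowIdx N m + 1 := by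
      simp only [flowIdx]
      omega
    simp only [flows, hidx, hq, Finset.sum_range_succ]
    ring
  · have hidx1 : flowIdx N (m + 1) = 0 := by
      simp only [flowIdx, hb]
      rfl
    have hidxm : flowIdx N m = N := by
      simp only [flowIdx]
      omega
    simp only [flows, hidx1, hidxm, hq, Finset.sum_range_succ, Finset.sum_range_zero]
    push_cast
    ring

private lemma flowIdx_succ (N : ℕ) (m : ℤ) :
    flowIdx N (m + 1) = (flowIdx N m + 1) % (N + 1) := by
  have hP : (0 : ℤ) < (N : ℤ) + 1 := by omega
  have h1 : 0 ≤ m % ((N : ℤ) + 1) := Int.emod_nonneg m (by omega)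
  rcases flow_emod_succ ((N : ℤ) + 1) m hP with ⟨hb, hq⟩ | ⟨ha, hb, hq⟩
  · have hlt : (m + 1) % ((N : ℤ) + 1) < (N : ℤ) + 1 := Int.emod_lt_of_pos _ hP
    simp only [flowIdx]
    rw [Nat.mod_eq_of_lt (by omega)]
    omega
  · simp only [flowIdx, hb]
    have hN : (m % ((N : ℤ) + 1)).toNat = N := by omega
    rw [hN, Nat.mod_self]
    rfl

private lemma flowIdx_period (N : ℕ) (m : ℤ) :
    flowIdx N (m + ((N : ℤ) + 1)) = flowIdx N m := by
  have hmod : (m + ((N : ℤ) + 1)) % ((N : ℤ) + 1) = m % ((N : ℤ) + 1) := by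
    rw [show m + ((N : ℤ) + 1) = m + ((N : ℤ) + 1) * 1 by ring, Int.add_mul_emod_self_left]
  simp only [flowIdx, hmod]

private lemma flows_period (Ts : ℕ → ℝ) (N : ℕ) (m : ℤ) :
    flows Ts N (m + ((N : ℤ) + 1)) =
      flows Ts N m + ∑ i ∈ Finset.range (N + 1), Ts i := by
  have hne : ((N : ℤ) + 1) ≠ 0 := by omega
  have hmod : (m + ((N : ℤ) + 1)) % ((N : ℤ) + 1) = m % ((N : ℤ) + 1) := by
    rw [show m + ((N : ℤ) + 1) = m + ((N : ℤ) + 1) * 1 by ring, Int.add_mul_emod_self_left]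
  have hdiv : (m + ((N : ℤ) + 1)) / ((N : ℤ) + 1) = m / ((N : ℤ) + 1) + 1 := by
    rw [show m + ((N : ℤ) + 1) = m + ((N : ℤ) + 1) * 1 by ring,
      Int.add_mul_ediv_left m 1 hne]
  simp only [flows, flowIdx, hmod, hdiv]
  push_cast
  ring
private lemma build_pseudo {M : Type*} [MetricSpace M] (φ : ℝ → M → M)
    (hzero : ∀ x : M, φ 0 x = x)
    (hadd : ∀ (s t : ℝ) (x : M), φ (s + t) x = φ s (φ t x))
    (ν : ℝ) (hν0 : 0 < ν)
    (hlip : ∀ t : ℝ, 0 ≤ t → t ≤ 1 → ∀ x y : M, dist (φ t x) (φ t y) ≤ ν * dist x y)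
    (d : ℝ) (hd : 0 < d)
    (N : ℕ) (ys : ℕ → M) (Ts : ℕ → ℝ)
    (hTs : ∀ i : ℕ, i ≤ N → 1 < Ts i)
    (hjump : ∀ i : ℕ, i ≤ N →
      dist (φ (Ts i) (ys i)) (ys ((i + 1) % (N + 1))) < d / ν) :
    ∃ g : ℝ → M, g 0 = ys 0 ∧
      (∀ τ t : ℝ, 0 ≤ t → t ≤ 1 → dist (g (τ + t)) (φ t (g τ)) ≤ d) ∧
      ∃ T : ℝ, 0 < T ∧ ∀ t : ℝ, g (t + T) = g t := by
  have hstep : ∀ m : ℤ, flows Ts N m + 1 ≤ flows Ts N (m + 1) := by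
    intro m
    rw [flows_succ]
    linarith [hTs _ (flowIdx_le N m)]
  obtain ⟨g, hg⟩ : ∃ g : ℝ → M, ∀ (t : ℝ) (m : ℤ),
      flows Ts N m ≤ t → t < flows Ts N (m + 1) →
      g t = φ (t - flows Ts N m) (ys (flowIdx N m)) := by
    refine ⟨fun t => φ (t - flows Ts N (Classical.choose (flow_exists_floor _ hstep t)))
      (ys (flowIdx N (Classical.choose (flow_exists_floor _ hstep t)))), ?_⟩
    intro t m h1 h2
    have hcs := Classical.choose_spec (flow_exists_floor (flows Ts N) hstep t)
    have heq := floor_unique (flows Ts N) hstep hcs.1 hcs.2 h1 h2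
    simp only [heq]
  refine ⟨g, ?_, ?_, ?_⟩
  · have h1 : flows Ts N (0 : ℤ) ≤ 0 := by rw [flows_zero]
    have h2 : (0 : ℝ) < flows Ts N (0 + 1) := by
      have := hstep 0
      rw [flows_zero] at this
      linarith
    rw [hg 0 0 h1 h2, flows_zero, flowIdx_zero, sub_zero, hzero]
  · intro τ t ht0 ht1
    obtain ⟨m, h1, h2⟩ := flow_exists_floor (flows Ts N) hstep τ
    have hgτ : g τ = φ (τ - flows Ts N m) (ys (flowIdx N m)) := hg τ m h1 h2
    by_cases hc : τ + t < flows Ts N (m + 1)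
    · have h3 : flows Ts N m ≤ τ + t := by linarith
      rw [hg (τ + t) m h3 hc, hgτ, ← hadd,
        show t + (τ - flows Ts N m) = τ + t - flows Ts N m by ring]
      simpa using hd.le
    · push_neg at hc
      have h4 : τ + t < flows Ts N (m + 1 + 1) := by
        have h5 := hstep (m + 1)
        linarith
      rw [hg (τ + t) (m + 1) hc h4, hgτ, ← hadd]
      have hu0 : 0 ≤ τ + t - flows Ts N (m + 1) := by linarith
      have hu1 : τ + t - flows Ts N (m + 1) ≤ 1 := by linarith
      have key : t + (τ - flows Ts N m)
          = (τ + t - flows Ts N (m + 1)) + Ts (flowIdx N m) := by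
        have := flows_succ Ts N m
        linarith
      rw [key, hadd]
      calc dist (φ (τ + t - flows Ts N (m + 1)) (ys (flowIdx N (m + 1))))
            (φ (τ + t - flows Ts N (m + 1)) (φ (Ts (flowIdx N m)) (ys (flowIdx N m))))
          ≤ ν * dist (ys (flowIdx N (m + 1))) (φ (Ts (flowIdx N m)) (ys (flowIdx N m))) :=
            hlip _ hu0 hu1 _ _
        _ = ν * dist (φ (Ts (flowIdx N m)) (ys (flowIdx N m)))
              (ys ((flowIdx N m + 1) % (N + 1))) := by
            rw [dist_comm, flowIdx_succ]
        _ ≤ ν * (d / ν) :=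
            mul_le_mul_of_nonneg_left (le_of_lt (hjump _ (flowIdx_le N m))) hν0.le
        _ = d := by rw [mul_comm, div_mul_cancel₀ _ (ne_of_gt hν0)]
  · refine ⟨∑ i ∈ Finset.range (N + 1), Ts i, ?_, ?_⟩
    · apply Finset.sum_pos
      · intro i hi
        have := hTs i (Nat.lt_succ_iff.mp (Finset.mem_range.mp hi))
        linarith
      · exact ⟨0, Finset.mem_range.mpr (Nat.succ_pos N)⟩
    · intro t
      obtain ⟨m, h1, h2⟩ := flow_exists_floor (flows Ts N) hstep t
      have h1' : flows Ts N (m + ((N : ℤ) + 1)) ≤ t + ∑ i ∈ Finset.range (N + 1), Ts i := by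
        rw [flows_period]; linarith
      have h2' : t + ∑ i ∈ Finset.range (N + 1), Ts i < flows Ts N (m + ((N : ℤ) + 1) + 1) := by
        rw [show m + ((N : ℤ) + 1) + 1 = (m + 1) + ((N : ℤ) + 1) by ring, flows_period]
        linarith
      rw [hg _ _ h1' h2', hg t m h1 h2, flows_period, flowIdx_period,
        show t + (∑ i ∈ Finset.range (N + 1), Ts i) -
          (flows Ts N m + ∑ i ∈ Finset.range (N + 1), Ts i) = t - flows Ts N m by ring]
/-- If the flow `φ` has the Lipschitz periodic shadowing property, then the closure of the
set of periodic points (rest points and points on closed trajectories) equals the chain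
recurrent set. -/
theorem closure_periodic_eq_chain_recurrent {M : Type*} [MetricSpace M] [CompactSpace M]
    (φ : ℝ → M → M)
    (hcont : Continuous fun p : ℝ × M => φ p.1 p.2)
    (hzero : ∀ x : M, φ 0 x = x)
    (hadd : ∀ (s t : ℝ) (x : M), φ (s + t) x = φ s (φ t x))
    (ν : ℝ) (hν : 1 ≤ ν)
    (hlip : ∀ t : ℝ, 0 ≤ t → t ≤ 1 → ∀ x y : M, dist (φ t x) (φ t y) ≤ ν * dist x y)
    (hLipPerSh : ∃ d₀ L : ℝ, 0 < d₀ ∧ 0 < L ∧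
      ∀ d : ℝ, 0 < d → d ≤ d₀ → ∀ g : ℝ → M,
        (∀ τ t : ℝ, 0 ≤ t → t ≤ 1 → dist (g (τ + t)) (φ t (g τ)) ≤ d) →
        (∃ T : ℝ, 0 < T ∧ ∀ t : ℝ, g (t + T) = g t) →
        ∃ (x : M) (ω : ℝ) (α : ℝ → ℝ), 0 < ω ∧ φ ω x = x ∧
          StrictMono α ∧ Function.Surjective α ∧ α 0 = 0 ∧
          (∀ t₁ t₂ : ℝ, t₁ ≠ t₂ → |(α t₂ - α t₁) / (t₂ - t₁) - 1| ≤ L * d) ∧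
          ∀ t : ℝ, dist (g t) (φ (α t) x) ≤ L * d) :
    closure {x : M | ∃ ω : ℝ, 0 < ω ∧ φ ω x = x} =
      {y : M | ∀ ε θ : ℝ, 0 < ε → 0 < θ →
        ∃ (N : ℕ) (ys : ℕ → M) (Ts : ℕ → ℝ),
          ys 0 = y ∧ (∀ i : ℕ, i ≤ N → θ < Ts i) ∧
          (∀ i : ℕ, i < N → dist (φ (Ts i) (ys i)) (ys (i + 1)) < ε) ∧
          dist (φ (Ts N) (ys N)) y < ε} := by
  have hν0 : (0 : ℝ) < ν := lt_of_lt_of_le one_pos hν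
  ext y
  simp only [Set.mem_setOf_eq]
  constructor
  · -- closure of periodic points ⊆ chain recurrent set
    intro hy ε θ hε hθ
    set K : ℕ := ⌈θ⌉₊ + 1 with hK
    have hθK : θ + 1 ≤ (K : ℝ) := by
      have := Nat.le_ceil θ
      rw [hK]
      push_cast
      linarith
    have hνKpos : (0 : ℝ) < ν ^ K := by positivity
    set δ : ℝ := ε / (2 * ν ^ K) with hδdef
    have hδ : 0 < δ := by positivity
    obtain ⟨x, hxPer, hyx⟩ := Metric.mem_closure_iff.mp hy δ hδ
    obtain ⟨ω, hω, hφω⟩ := hxPer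
    obtain ⟨k, hk⟩ := exists_nat_gt ((2 * θ + 1) / ω)
    have hkω : 2 * θ + 1 < (k : ℝ) * ω := by rwa [div_lt_iff₀ hω] at hk
    refine ⟨1, fun i => if i = 0 then y else φ (θ + 1) x,
      fun i => if i = 0 then θ + 1 else (k : ℝ) * ω - (θ + 1), by simp, ?_, ?_, ?_⟩
    · intro i _
      by_cases hi : i = 0
      · subst hi
        norm_num
      · simp only [if_neg hi]
        linarith
    · intro i hi
      have hi0 : i = 0 := by omega
      subst hi0
      norm_num
      have hlp := lip_pow φ hzero hadd ν hν hlip K (θ + 1) (by linarith) hθK y x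
      have h2 : ν ^ K * dist y x < ν ^ K * δ := mul_lt_mul_of_pos_left hyx hνKpos
      have h3 : ν ^ K * δ = ε / 2 := by
        rw [hδdef]
        field_simp
      linarith
    · simp only [if_neg one_ne_zero]
      have he := hadd ((k : ℝ) * ω - (θ + 1)) (θ + 1) x
      rw [show ((k : ℝ) * ω - (θ + 1)) + (θ + 1) = (k : ℝ) * ω by ring,
        per_iterate φ hzero hadd x ω hφω k] at he
      rw [← he]
      have hδε : δ < ε := by
        rw [hδdef, div_lt_iff₀ (by positivity)]
        nlinarith [hνKpos, one_le_pow₀ hν (n := K)]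
      calc dist x y = dist y x := dist_comm x y
        _ < δ := hyx
        _ < ε := hδε
  · -- chain recurrent set ⊆ closure of periodic points
    intro hy
    rw [Metric.mem_closure_iff]
    intro ε hε
    obtain ⟨d₀, L, hd₀, hL, hsh⟩ := hLipPerSh
    set d : ℝ := min d₀ (ε / (2 * L)) with hddef
    have hdpos : 0 < d := lt_min hd₀ (by positivity)
    have hε'pos : 0 < d / ν := div_pos hdpos hν0
    obtain ⟨N, ys, Ts, hys0, hTs, hchain, hlast⟩ := hy (d / ν) 1 hε'pos one_pos
    have hjump' : ∀ i : ℕ, i ≤ N →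
        dist (φ (Ts i) (ys i)) (ys ((i + 1) % (N + 1))) < d / ν := by
      intro i hi
      rcases lt_or_eq_of_le hi with hilt | hieq
      · rw [Nat.mod_eq_of_lt (by omega)]
        exact hchain i hilt
      · subst hieq
        rw [Nat.mod_self, hys0]
        exact hlast
    obtain ⟨g, hg0, hgp, hgper⟩ :=
      build_pseudo φ hzero hadd ν hν0 hlip d hdpos N ys Ts hTs hjump'
    obtain ⟨x, ω, α, hω, hxper, -, -, hα0, -, hsha⟩ :=
      hsh d hdpos (min_le_left _ _) g hgp hgper
    refine ⟨x, ⟨ω, hω, hxper⟩, ?_⟩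
    have h0 := hsha 0
    rw [hα0, hzero, hg0, hys0] at h0
    have hLd : L * d ≤ ε / 2 := by
      have h1 : d ≤ ε / (2 * L) := min_le_right _ _
      have h2 := mul_le_mul_of_nonneg_left h1 hL.le
      have h3 : L * (ε / (2 * L)) = ε / 2 := by
        field_simp
      linarith
    linarith
end
end

section
/- Suppose the flow φ has the Lipschitz periodic shadowing property. Then there exist constants d₀, L > 0 such that for every τ ∈ [1/2, 1], every d ≤ d₀ and every periodic sequence (y_k)_{k∈ℤ} in M (i.e. y_{k+m} = y_k for some m ≥ 1 and all k) with dist(y_{k+1}, φ(τ, y_k)) < d for all k ∈ ℤ, there exist a sequence (x_k)_{k∈ℤ} in M (not necessarily periodic) and times (t_k)_{k∈ℤ} such that dist(x_k, y_k) < Ld, |t_k − τ| < Ld and x_{k+1} = φ(t_k, x_k) for all k ∈ ℤ. -/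
noncomputable section

set_option maxHeartbeats 1000000

/-- Lipschitz periodic shadowing implies discrete Lipschitz shadowing of periodic
`τ`-discrete pseudotrajectories, uniformly in `τ ∈ [1/2, 1]`, by (not necessarily
periodic) orbit sequences. -/
theorem lip_per_shadowing_implies_discrete {M : Type*} [MetricSpace M] [CompactSpace M]
    (φ : ℝ → M → M)
    (hcont : Continuous fun p : ℝ × M => φ p.1 p.2)
    (hzero : ∀ x : M, φ 0 x = x)
    (hadd : ∀ (s t : ℝ) (x : M), φ (s + t) x = φ s (φ t x))
    (ν : ℝ) (hν : 1 ≤ ν)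
    (hlip : ∀ t : ℝ, 0 ≤ t → t ≤ 1 → ∀ x y : M, dist (φ t x) (φ t y) ≤ ν * dist x y)
    (hLipPerSh : ∃ d₀ L : ℝ, 0 < d₀ ∧ 0 < L ∧
      ∀ d : ℝ, 0 < d → d ≤ d₀ → ∀ g : ℝ → M,
        (∀ τ t : ℝ, 0 ≤ t → t ≤ 1 → dist (g (τ + t)) (φ t (g τ)) ≤ d) →
        (∃ T : ℝ, 0 < T ∧ ∀ t : ℝ, g (t + T) = g t) →
        ∃ (x : M) (ω : ℝ) (α : ℝ → ℝ), 0 < ω ∧ φ ω x = x ∧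
          StrictMono α ∧ Function.Surjective α ∧ α 0 = 0 ∧
          (∀ t₁ t₂ : ℝ, t₁ ≠ t₂ → |(α t₂ - α t₁) / (t₂ - t₁) - 1| ≤ L * d) ∧
          ∀ t : ℝ, dist (g t) (φ (α t) x) ≤ L * d) :
    ∃ d₀ L : ℝ, 0 < d₀ ∧ 0 < L ∧
      ∀ τ : ℝ, 1 / 2 ≤ τ → τ ≤ 1 →
        ∀ d : ℝ, 0 < d → d ≤ d₀ →
          ∀ y : ℤ → M,
            (∃ m : ℕ, 1 ≤ m ∧ ∀ k : ℤ, y (k + (m : ℤ)) = y k) →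
            (∀ k : ℤ, dist (y (k + 1)) (φ τ (y k)) < d) →
            ∃ (x : ℤ → M) (t : ℤ → ℝ),
              ∀ k : ℤ, dist (x k) (y k) < L * d ∧ |t k - τ| < L * d ∧
                x (k + 1) = φ (t k) (x k) := by
  obtain ⟨d₀, L, hd₀, hL, hsh⟩ := hLipPerSh
  have hν0 : (0:ℝ) < ν := lt_of_lt_of_le one_pos hν
  refine ⟨d₀ / (2*ν^2), 2*ν^2*L + 1, by positivity, by positivity, ?_⟩
  intro τ hτl hτu d hd hdd y hyper hpseudo
  obtain ⟨m, hm, hper⟩ := hyper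
  have hτ0 : (0:ℝ) < τ := by linarith
  set g : ℝ → M := fun t => φ (t - ⌊t/τ⌋ * τ) (y ⌊t/τ⌋) with hg
  have hfloor : ∀ k : ℤ, ⌊((k:ℝ)*τ)/τ⌋ = k := by
    intro k; rw [mul_div_assoc, div_self hτ0.ne', mul_one, Int.floor_intCast]
  have hgk : ∀ k : ℤ, g ((k:ℝ)*τ) = y k := by
    intro k
    simp only [hg, hfloor, sub_self, hzero]
  -- g is a (2ν²d)-pseudotrajectory
  have hgps : ∀ τ0 t : ℝ, 0 ≤ t → t ≤ 1 → dist (g (τ0 + t)) (φ t (g τ0)) ≤ 2*ν^2*d := by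
    intro τ0 t ht0 ht1
    set k : ℤ := ⌊τ0/τ⌋ with hk
    set k' : ℤ := ⌊(τ0+t)/τ⌋ with hk'
    have hb1 : (k:ℝ) ≤ τ0/τ := Int.floor_le _
    have hb2 : τ0/τ < (k:ℝ) + 1 := Int.lt_floor_add_one _
    have hb3 : (k':ℝ) ≤ (τ0+t)/τ := Int.floor_le _
    have hb4 : (τ0+t)/τ < (k':ℝ) + 1 := Int.lt_floor_add_one _
    have hkτ : (k:ℝ)*τ ≤ τ0 := (le_div_iff₀ hτ0).mp hb1
    have hkτ2 : τ0 < ((k:ℝ)+1)*τ := (div_lt_iff₀ hτ0).mp hb2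
    have hkτ3 : (k':ℝ)*τ ≤ τ0 + t := (le_div_iff₀ hτ0).mp hb3
    have hkτ4 : τ0 + t < ((k':ℝ)+1)*τ := (div_lt_iff₀ hτ0).mp hb4
    have hle : k ≤ k' := Int.floor_mono ((div_le_div_iff_of_pos_right hτ0).mpr (by linarith))
    have hle2 : k' ≤ k + 2 := by
      have : ((τ0+t))/τ < ((k:ℝ)+2) + 1 := by
        rw [div_lt_iff₀ hτ0]; nlinarith
      have := Int.floor_lt.mpr (by push_cast; linarith : (τ0+t)/τ < ((k+3 : ℤ) : ℝ))
      omega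
    have hgt0 : g (τ0 + t) = φ (τ0 + t - k'*τ) (y k') := rfl
    have hgτ0 : φ t (g τ0) = φ (τ0 + t - k*τ) (y k) := by
      show φ t (φ (τ0 - k*τ) (y k)) = _
      rw [← hadd]; ring_nf
    clear_value k k'
    rcases (by omega : k' = k ∨ k' = k + 1 ∨ k' = k + 2) with h | h | h
    · rw [hgt0, hgτ0, h]
      rw [dist_self]
      positivity
    · subst h
      set r : ℝ := τ0 + t - ((k:ℝ)+1)*τ with hr
      have hr0 : 0 ≤ r := by push_cast at hkτ3; linarith
      have hr1 : r ≤ 1 := by push_cast at hkτ4; linarith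
      have e1 : g (τ0 + t) = φ r (y (k+1)) := by rw [hgt0, hr]; push_cast; ring_nf
      have e2 : φ t (g τ0) = φ r (φ τ (y k)) := by
        rw [hgτ0, ← hadd, hr]; ring_nf
      rw [e1, e2]
      calc dist (φ r (y (k+1))) (φ r (φ τ (y k))) ≤ ν * dist (y (k+1)) (φ τ (y k)) :=
            hlip r hr0 hr1 _ _
        _ ≤ ν * d := by nlinarith [(hpseudo k).le, dist_nonneg (x := y (k+1)) (y := φ τ (y k))]
        _ ≤ 2*ν^2*d := by nlinarith [mul_nonneg (mul_nonneg (sub_nonneg.mpr hν) hν0.le) hd.le, mul_pos (mul_pos hν0 hν0) hd]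
    · subst h
      set r : ℝ := τ0 + t - ((k:ℝ)+2)*τ with hr
      have hr0 : 0 ≤ r := by push_cast at hkτ3; linarith
      have hr1 : r ≤ 1 := by push_cast at hkτ4; linarith
      have e1 : g (τ0 + t) = φ r (y (k+2)) := by rw [hgt0, hr]; push_cast; ring_nf
      have e2 : φ t (g τ0) = φ r (φ τ (φ τ (y k))) := by
        rw [hgτ0, ← hadd, ← hadd, hr]; ring_nf
      rw [e1, e2]
      have step1 : dist (φ r (y (k+2))) (φ r (φ τ (y (k+1)))) ≤ ν * d := by
        have h1 := hlip r hr0 hr1 (y (k+2)) (φ τ (y (k+1)))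
        have h2 := (hpseudo (k+1)).le
        have : y (k + 1 + 1) = y (k + 2) := by congr 1; omega
        rw [this] at h2
        nlinarith [dist_nonneg (x := y (k+2)) (y := φ τ (y (k+1)))]
      have step2 : dist (φ r (φ τ (y (k+1)))) (φ r (φ τ (φ τ (y k)))) ≤ ν^2 * d := by
        have h1 := hlip r hr0 hr1 (φ τ (y (k+1))) (φ τ (φ τ (y k)))
        have h2 := hlip τ hτ0.le hτu (y (k+1)) (φ τ (y k))
        have h3 := (hpseudo k).le
        have h4 : dist (φ τ (y (k+1))) (φ τ (φ τ (y k))) ≤ ν * d :=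
          le_trans h2 (mul_le_mul_of_nonneg_left h3 hν0.le)
        calc dist (φ r (φ τ (y (k+1)))) (φ r (φ τ (φ τ (y k))))
            ≤ ν * dist (φ τ (y (k+1))) (φ τ (φ τ (y k))) := h1
          _ ≤ ν * (ν * d) := mul_le_mul_of_nonneg_left h4 hν0.le
          _ = ν^2 * d := by ring
      calc dist (φ r (y (k+2))) (φ r (φ τ (φ τ (y k))))
          ≤ dist (φ r (y (k+2))) (φ r (φ τ (y (k+1))))
            + dist (φ r (φ τ (y (k+1)))) (φ r (φ τ (φ τ (y k)))) := dist_triangle _ _ _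
        _ ≤ ν * d + ν^2 * d := add_le_add step1 step2
        _ ≤ 2*ν^2*d := by nlinarith [mul_nonneg (mul_nonneg (sub_nonneg.mpr hν) hν0.le) hd.le]
  -- g is periodic with period m*τ
  have hgper : ∃ T : ℝ, 0 < T ∧ ∀ t : ℝ, g (t + T) = g t := by
    have hm1 : (1:ℝ) ≤ m := by exact_mod_cast hm
    refine ⟨(m:ℝ)*τ, by nlinarith, ?_⟩
    intro t
    have hf : ⌊(t + (m:ℝ)*τ)/τ⌋ = ⌊t/τ⌋ + (m:ℤ) := by
      rw [add_div, mul_div_assoc, div_self hτ0.ne', mul_one]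
      exact_mod_cast Int.floor_add_intCast (t/τ) (m:ℤ)
    simp only [hg, hf]
    rw [hper]
    congr 1
    push_cast
    ring
  have hd' : 0 < 2*ν^2*d := by positivity
  have hd'' : 2*ν^2*d ≤ d₀ := by
    rw [le_div_iff₀ (by positivity)] at hdd
    nlinarith
  obtain ⟨x, ω, α, hω, hfix, hmono, hsurj, hα0, hslope, hshad⟩ :=
    hsh (2*ν^2*d) hd' hd'' g hgps hgper
  refine ⟨fun k => φ (α ((k:ℝ)*τ)) x, fun k => α (((k:ℝ)+1)*τ) - α ((k:ℝ)*τ), ?_⟩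
  intro k
  have key : dist (g ((k:ℝ)*τ)) (φ (α ((k:ℝ)*τ)) x) ≤ L * (2*ν^2*d) := hshad _
  rw [hgk] at key
  refine ⟨?_, ?_, ?_⟩
  · rw [dist_comm]
    calc dist (y k) (φ (α ((k:ℝ)*τ)) x) ≤ L * (2*ν^2*d) := key
      _ < (2*ν^2*L + 1) * d := by nlinarith
  · have hne : ((k:ℝ)*τ) ≠ ((k:ℝ)+1)*τ := by nlinarith
    have hs := hslope ((k:ℝ)*τ) (((k:ℝ)+1)*τ) hne
    have hsub : ((k:ℝ)+1)*τ - (k:ℝ)*τ = τ := by ring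
    rw [hsub] at hs
    have : |α (((k:ℝ)+1)*τ) - α ((k:ℝ)*τ) - τ| ≤ L * (2*ν^2*d) * τ := by
      have h2 : (α (((k:ℝ)+1)*τ) - α ((k:ℝ)*τ)) / τ - 1 =
          (α (((k:ℝ)+1)*τ) - α ((k:ℝ)*τ) - τ) / τ := by
        field_simp
      rw [h2, abs_div, abs_of_pos hτ0, div_le_iff₀ hτ0] at hs
      linarith
    calc |α (((k:ℝ)+1)*τ) - α ((k:ℝ)*τ) - τ| ≤ L * (2*ν^2*d) * τ := this
      _ ≤ L * (2*ν^2*d) := by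
          nlinarith [mul_nonneg (by linarith : (0:ℝ) ≤ 1-τ) (mul_pos hL hd').le]
      _ < (2*ν^2*L + 1) * d := by nlinarith
  · show φ (α (((k+1:ℤ):ℝ)*τ)) x = φ (α (((k:ℝ)+1)*τ) - α ((k:ℝ)*τ)) (φ (α ((k:ℝ)*τ)) x)
    rw [← hadd]
    push_cast
    ring_nf
end
end

section
/- For every open set U ⊆ M containing the nonwandering set Ω(φ) there exist constants B, d₁ > 0 such that if g : ℝ → M is a d-pseudotrajectory of φ with d ≤ d₁ and g(t) ∉ U for all t ∈ [τ, τ + l] for some τ ∈ ℝ and l > 0, then l ≤ B. -/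
noncomputable section

lemma pseudo_error_bound {M : Type*} [MetricSpace M] [CompactSpace M]
    (φ : ℝ → M → M)
    (hcont : Continuous fun p : ℝ × M => φ p.1 p.2)
    (hzero : ∀ x : M, φ 0 x = x)
    (hadd : ∀ (s t : ℝ) (x : M), φ (s + t) x = φ s (φ t x)) :
    ∀ (n : ℕ) (ε : ℝ), 0 < ε → ∃ d : ℝ, 0 < d ∧
      ∀ g : ℝ → M,
        (∀ τ t : ℝ, 0 ≤ t → t ≤ 1 → dist (g (τ + t)) (φ t (g τ)) ≤ d) →
        ∀ τ t : ℝ, 0 ≤ t → t ≤ (n : ℝ) → dist (g (τ + t)) (φ t (g τ)) ≤ ε := by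
  intro n
  induction n with
  | zero =>
    intro ε hε
    refine ⟨ε, hε, fun g hg τ t ht0 ht1 => ?_⟩
    have ht : t = 0 := le_antisymm (by exact_mod_cast ht1) ht0
    subst ht
    simp [hzero]
    linarith
  | succ n IH =>
    intro ε hε
    obtain ⟨d₀, hd₀, hIH⟩ := IH (ε / 2) (by linarith)
    have hc : Continuous fun x : M => φ (n : ℝ) x := by
      have : (fun x : M => φ (n : ℝ) x) =
          (fun p : ℝ × M => φ p.1 p.2) ∘ (fun x => ((n : ℝ), x)) := rfl
      rw [this]
      exact hcont.comp (continuous_const.prodMk continuous_id)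
    have huc : UniformContinuous fun x : M => φ (n : ℝ) x :=
      CompactSpace.uniformContinuous_of_continuous hc
    rw [Metric.uniformContinuous_iff] at huc
    obtain ⟨δ, hδ, hδ'⟩ := huc (ε / 2) (by linarith)
    refine ⟨min d₀ (δ / 2), lt_min hd₀ (by linarith), fun g hg τ t ht0 ht1 => ?_⟩
    have hg₀ : ∀ τ t : ℝ, 0 ≤ t → t ≤ 1 → dist (g (τ + t)) (φ t (g τ)) ≤ d₀ :=
      fun τ t h1 h2 => (hg τ t h1 h2).trans (min_le_left _ _)
    by_cases hcase : t ≤ (n : ℝ)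
    · have := hIH g hg₀ τ t ht0 hcase
      linarith
    · push_neg at hcase
      set s := t - (n : ℝ) with hs
      have hs0 : 0 < s := by simp [hs]; linarith
      have hs1 : s ≤ 1 := by
        have : t ≤ (n : ℝ) + 1 := by push_cast at ht1; linarith
        simp [hs]; linarith
      have h1 : dist (g (τ + s)) (φ s (g τ)) ≤ min d₀ (δ / 2) := hg τ s hs0.le hs1
      have h2 : dist (g (τ + s + (n : ℝ))) (φ (n : ℝ) (g (τ + s))) ≤ ε / 2 :=
        hIH g hg₀ (τ + s) (n : ℝ) (by positivity) le_rfl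
      have h3 : dist (φ (n : ℝ) (g (τ + s))) (φ (n : ℝ) (φ s (g τ))) < ε / 2 := by
        apply hδ'
        calc dist (g (τ + s)) (φ s (g τ)) ≤ δ / 2 := h1.trans (min_le_right _ _)
          _ < δ := by linarith
      have he1 : τ + s + (n : ℝ) = τ + t := by rw [hs]; ring
      have he2 : φ (n : ℝ) (φ s (g τ)) = φ t (g τ) := by
        rw [← hadd]
        congr 1
        simp [hs]
      rw [he1] at h2
      rw [he2] at h3
      calc dist (g (τ + t)) (φ t (g τ))
          ≤ dist (g (τ + t)) (φ (n : ℝ) (g (τ + s))) +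
            dist (φ (n : ℝ) (g (τ + s))) (φ t (g τ)) := dist_triangle _ _ _
        _ ≤ ε / 2 + ε / 2 := add_le_add h2 h3.le
        _ = ε := by ring

/-- For any open set `U` containing the nonwandering set of the flow `φ` there are
constants `B, d₁ > 0` such that no `d`-pseudotrajectory with `d ≤ d₁` can stay outside
`U` on a time interval of length `l > B`. -/
theorem pseudotrajectory_time_outside_nonwandering_nbhd_bounded
    {M : Type*} [MetricSpace M] [CompactSpace M]
    (φ : ℝ → M → M)
    (hcont : Continuous fun p : ℝ × M => φ p.1 p.2)
    (hzero : ∀ x : M, φ 0 x = x)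
    (hadd : ∀ (s t : ℝ) (x : M), φ (s + t) x = φ s (φ t x)) :
    ∀ U : Set M, IsOpen U →
      {x : M | ∀ V : Set M, IsOpen V → x ∈ V → ∀ T : ℝ, 0 < T →
        ∃ t : ℝ, T ≤ t ∧ ∃ z ∈ V, φ t z ∈ V} ⊆ U →
      ∃ B d₁ : ℝ, 0 < B ∧ 0 < d₁ ∧
        ∀ d : ℝ, 0 < d → d ≤ d₁ →
          ∀ g : ℝ → M,
            (∀ τ t : ℝ, 0 ≤ t → t ≤ 1 → dist (g (τ + t)) (φ t (g τ)) ≤ d) →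
            ∀ τ l : ℝ, 0 < l →
              (∀ t : ℝ, τ ≤ t → t ≤ τ + l → g t ∉ U) → l ≤ B := by
  intro U hU hΩ
  set K := Uᶜ with hKdef
  have hKc : IsCompact K := hU.isClosed_compl.isCompact
  rcases K.eq_empty_or_nonempty with hKe | hKne
  · refine ⟨1, 1, one_pos, one_pos, fun d hd hdd g hg τ l hl hout => ?_⟩
    exfalso
    have h1 : g τ ∈ K := hout τ le_rfl (by linarith)
    rw [hKe] at h1
    exact h1
  · -- wandering data on K
    have hdata : ∀ x ∈ K, ∃ T ρ : ℝ, 0 < T ∧ 0 < ρ ∧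
        ∀ t : ℝ, T ≤ t → ∀ z ∈ Metric.ball x ρ, φ t z ∉ Metric.ball x ρ := by
      intro x hx
      have hxΩ : x ∉ {x : M | ∀ V : Set M, IsOpen V → x ∈ V → ∀ T : ℝ, 0 < T →
          ∃ t : ℝ, T ≤ t ∧ ∃ z ∈ V, φ t z ∈ V} := fun h => hx (hΩ h)
      simp only [Set.mem_setOf_eq] at hxΩ
      push_neg at hxΩ
      obtain ⟨V, hVo, hxV, T, hT, hV⟩ := hxΩ
      obtain ⟨ρ, hρ, hball⟩ := Metric.isOpen_iff.1 hVo x hxV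
      exact ⟨T, ρ, hT, hρ, fun t ht z hz hz' => hV t ht z (hball hz) (hball hz')⟩
    have hch := fun x : K => hdata x x.2
    choose T ρ hT hρ hw using hch
    have hcov : K ⊆ ⋃ i : K, Metric.ball (i : M) (ρ i / 2) := fun x hx =>
      Set.mem_iUnion.2 ⟨⟨x, hx⟩, Metric.mem_ball_self (half_pos (hρ ⟨x, hx⟩))⟩
    obtain ⟨s, hscov⟩ := hKc.elim_finite_subcover
      (fun i : K => Metric.ball (i : M) (ρ i / 2)) (fun i => Metric.isOpen_ball) hcov
    have hsne : s.Nonempty := by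
      obtain ⟨x, hx⟩ := hKne
      obtain ⟨i, hi, -⟩ := Set.mem_iUnion₂.1 (hscov hx)
      exact ⟨i, hi⟩
    set N : ℕ := ⌈s.sup' hsne T⌉₊ + 1 with hNdef
    set n : ℕ := s.card with hndef
    set ε : ℝ := s.inf' hsne ρ / 2 with hεdef
    have hεpos : 0 < ε := by
      have h0 : 0 < s.inf' hsne ρ := by
        rw [Finset.lt_inf'_iff]
        exact fun i _ => hρ i
      rw [hεdef]; linarith
    obtain ⟨d₀, hd₀, hkey⟩ := pseudo_error_bound φ hcont hzero hadd (n * N) ε hεpos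
    have hn1 : 1 ≤ n := by rw [hndef]; exact Finset.card_pos.2 hsne
    have hN1 : 1 ≤ N := by rw [hNdef]; omega
    have hBpos : (0 : ℝ) < ((n * N : ℕ) : ℝ) := by
      have : 0 < n * N := Nat.mul_pos hn1 hN1
      exact_mod_cast this
    refine ⟨((n * N : ℕ) : ℝ), d₀, hBpos, hd₀, ?_⟩
    intro d hd hdd g hg τ l hl hout
    by_contra hlB
    push_neg at hlB
    have hg' : ∀ τ t : ℝ, 0 ≤ t → t ≤ 1 → dist (g (τ + t)) (φ t (g τ)) ≤ d₀ :=
      fun a b h1 h2 => (hg a b h1 h2).trans hdd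
    -- sample points lie in K
    have hmem : ∀ j : Fin (n + 1), g (τ + ((j : ℕ) : ℝ) * (N : ℝ)) ∈ K := by
      intro j
      have hjn : ((j : ℕ) : ℝ) ≤ (n : ℝ) := by
        have := Nat.lt_succ_iff.1 j.isLt
        exact_mod_cast this
      have hjN : ((j : ℕ) : ℝ) * (N : ℝ) ≤ ((n * N : ℕ) : ℝ) := by
        push_cast
        have hN0 : (0 : ℝ) ≤ (N : ℝ) := by positivity
        nlinarith
      apply hout
      · have h0 : (0 : ℝ) ≤ ((j : ℕ) : ℝ) * (N : ℝ) := by positivity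
        linarith
      · linarith
    have hf : ∀ j : Fin (n + 1), ∃ i ∈ s,
        g (τ + ((j : ℕ) : ℝ) * (N : ℝ)) ∈ Metric.ball (i : M) (ρ i / 2) := by
      intro j
      obtain ⟨i, hi, hb⟩ := Set.mem_iUnion₂.1 (hscov (hmem j))
      exact ⟨i, hi, hb⟩
    choose f hfs hfb using hf
    have hcard : s.card < (Finset.univ : Finset (Fin (n + 1))).card := by
      rw [Finset.card_univ, Fintype.card_fin]
      omega
    obtain ⟨a₀, -, b₀, -, hab, hfe₀⟩ :=
      Finset.exists_ne_map_eq_of_card_lt_of_maps_to hcard (fun j _ => hfs j)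
    obtain ⟨a, b, hlt, hfe⟩ : ∃ a b : Fin (n + 1), a < b ∧ f a = f b := by
      rcases hab.lt_or_gt with h | h
      exacts [⟨a₀, b₀, h, hfe₀⟩, ⟨b₀, a₀, h, hfe₀.symm⟩]
    set i := f a with hidef
    have hba : (a : ℕ) < (b : ℕ) := hlt
    set Δ : ℕ := ((b : ℕ) - (a : ℕ)) * N with hΔdef
    have hΔN : (N : ℝ) ≤ (Δ : ℝ) := by
      have h : N ≤ Δ := by
        rw [hΔdef]
        calc N = 1 * N := (one_mul N).symm
          _ ≤ ((b : ℕ) - (a : ℕ)) * N := Nat.mul_le_mul_right N (by omega)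
      exact_mod_cast h
    have hΔle : (Δ : ℝ) ≤ ((n * N : ℕ) : ℝ) := by
      have hbn : (b : ℕ) ≤ n := Nat.lt_succ_iff.1 b.isLt
      have h : Δ ≤ n * N := by
        rw [hΔdef]
        exact Nat.mul_le_mul_right N (by omega)
      exact_mod_cast h
    have hkey' := hkey g hg' (τ + ((a : ℕ) : ℝ) * (N : ℝ)) ((Δ : ℕ) : ℝ)
      (by positivity) hΔle
    have heq : τ + ((a : ℕ) : ℝ) * (N : ℝ) + ((Δ : ℕ) : ℝ)
        = τ + ((b : ℕ) : ℝ) * (N : ℝ) := by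
      rw [hΔdef]
      push_cast [Nat.cast_sub hba.le]
      ring
    rw [heq] at hkey'
    have hTi : T i ≤ ((Δ : ℕ) : ℝ) := by
      have h1 : T i ≤ s.sup' hsne T := Finset.le_sup' T (hfs a)
      have h2 : s.sup' hsne T ≤ (⌈s.sup' hsne T⌉₊ : ℝ) := Nat.le_ceil _
      have h3 : ((⌈s.sup' hsne T⌉₊ : ℕ) : ℝ) ≤ (N : ℝ) := by
        rw [hNdef]; push_cast; linarith
      linarith
    have hεi : ε ≤ ρ i / 2 := by
      have := Finset.inf'_le ρ (hfs a)
      rw [hεdef]; linarith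
    have hz : g (τ + ((a : ℕ) : ℝ) * (N : ℝ)) ∈ Metric.ball (i : M) (ρ i) := by
      have hb' := hfb a
      rw [Metric.mem_ball] at hb' ⊢
      linarith [hρ i]
    have hz' : φ ((Δ : ℕ) : ℝ) (g (τ + ((a : ℕ) : ℝ) * (N : ℝ)))
        ∈ Metric.ball (i : M) (ρ i) := by
      have hb' := hfb b
      rw [← hfe] at hb'
      rw [Metric.mem_ball] at hb' ⊢
      have htri := dist_triangle (φ ((Δ : ℕ) : ℝ) (g (τ + ((a : ℕ) : ℝ) * (N : ℝ))))
        (g (τ + ((b : ℕ) : ℝ) * (N : ℝ))) (i : M)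
      rw [dist_comm] at hkey'
      linarith
    exact hw i ((Δ : ℕ) : ℝ) hTi _ hz hz'
end
end

section
/- Let A be a linear automorphism of ℝⁿ and let C be the constant sequence C_k = A for all k ∈ ℤ. If C is hyperbolic on ℤ₊, then A has no complex eigenvalue of absolute value 1. -/
noncomputable section

section Aux

variable {n : ℕ}

local notation "E" => EuclideanSpace ℝ (Fin n)

private lemma L_apply_coord (L : E →ₗ[ℝ] E) (x : E) (i : Fin n) :
    L x i = (LinearMap.toMatrix (PiLp.basisFun 2 ℝ (Fin n)) (PiLp.basisFun 2 ℝ (Fin n)) L).mulVec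
      (fun j => x j) i := by
  have h := congrFun (LinearMap.toMatrix_mulVec_repr (PiLp.basisFun 2 ℝ (Fin n))
    (PiLp.basisFun 2 ℝ (Fin n)) L x) i
  simp only [Matrix.mulVec, dotProduct, PiLp.basisFun_repr] at h ⊢
  exact h.symm

open Polynomial in
private lemma matrix_root_eigvec (M : Matrix (Fin n) (Fin n) ℂ) (z : ℂ)
    (h : M.charpoly.IsRoot z) : ∃ w : Fin n → ℂ, w ≠ 0 ∧ M.mulVec w = z • w := by
  have hmap : (Matrix.charmatrix M).map (evalRingHom z)
      = z • (1 : Matrix (Fin n) (Fin n) ℂ) - M := by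
    ext i j
    rcases eq_or_ne i j with rfl | hij
    · simp [Matrix.charmatrix_apply_eq, Matrix.one_apply]
    · simp [Matrix.charmatrix_apply_ne _ _ _ hij, Matrix.one_apply_ne hij]
  have hdet : (z • (1 : Matrix (Fin n) (Fin n) ℂ) - M).det = 0 := by
    rw [← hmap, ← RingHom.mapMatrix_apply, ← RingHom.map_det]
    simpa [Matrix.charpoly] using h
  obtain ⟨w, hw0, hw⟩ := Matrix.exists_mulVec_eq_zero_iff.2 hdet
  refine ⟨w, hw0, ?_⟩
  rw [Matrix.sub_mulVec, Matrix.smul_mulVec, Matrix.one_mulVec, sub_eq_zero] at hw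
  exact hw.symm

private lemma eigvec_real_parts (A : E ≃L[ℝ] E) (z : ℂ)
    (hz : (((A : E →ₗ[ℝ] E).charpoly).map (algebraMap ℝ ℂ)).IsRoot z) :
    ∃ (u v : E), (¬ (u = 0 ∧ v = 0)) ∧
      (A : E →ₗ[ℝ] E) u = z.re • u - z.im • v ∧
      (A : E →ₗ[ℝ] E) v = z.im • u + z.re • v := by
  classical
  set L : E →ₗ[ℝ] E := (A : E →ₗ[ℝ] E) with hL
  set B := LinearMap.toMatrix (PiLp.basisFun 2 ℝ (Fin n)) (PiLp.basisFun 2 ℝ (Fin n)) L with hB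
  have hch : L.charpoly = B.charpoly :=
    (LinearMap.charpoly_toMatrix L (PiLp.basisFun 2 ℝ (Fin n))).symm
  have hroot : (B.map (algebraMap ℝ ℂ)).charpoly.IsRoot z := by
    rw [Matrix.charpoly_map, ← hch]; exact hz
  obtain ⟨w, hw0, hw⟩ := matrix_root_eigvec _ z hroot
  set u : E := (WithLp.equiv 2 (Fin n → ℝ)).symm (fun i => (w i).re) with hu
  set v : E := (WithLp.equiv 2 (Fin n → ℝ)).symm (fun i => (w i).im) with hv
  have hui : ∀ i, u i = (w i).re := fun i => rfl
  have hvi : ∀ i, v i = (w i).im := fun i => rfl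
  have hwz : ∀ i, (B.map (algebraMap ℝ ℂ)).mulVec w i = z * w i := by
    intro i; rw [hw]; rfl
  have hre : ∀ i, L u i = ((B.map (algebraMap ℝ ℂ)).mulVec w i).re := by
    intro i
    rw [L_apply_coord, ← hB]
    simp only [Matrix.mulVec, dotProduct, Complex.re_sum, Matrix.map_apply]
    refine Finset.sum_congr rfl fun j _ => ?_
    simp [Complex.re_ofReal_mul, hui]
  have him : ∀ i, L v i = ((B.map (algebraMap ℝ ℂ)).mulVec w i).im := by
    intro i
    rw [L_apply_coord, ← hB]
    simp only [Matrix.mulVec, dotProduct, Complex.im_sum, Matrix.map_apply]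
    refine Finset.sum_congr rfl fun j _ => ?_
    simp [Complex.im_ofReal_mul, hvi]
  refine ⟨u, v, ?_, ?_, ?_⟩
  · rintro ⟨hu0, hv0⟩
    apply hw0
    funext i
    have h1 : (w i).re = 0 := by rw [← hui i, hu0]; rfl
    have h2 : (w i).im = 0 := by rw [← hvi i, hv0]; rfl
    simpa [Complex.ext_iff] using ⟨h1, h2⟩
  · ext i
    rw [hre i, hwz i, Complex.mul_re]
    simp [PiLp.sub_apply, PiLp.smul_apply, hui, hvi, smul_eq_mul]
  · ext i
    rw [him i, hwz i, Complex.mul_im]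
    simp [PiLp.add_apply, PiLp.smul_apply, hui, hvi, smul_eq_mul]
    ring

private lemma pow_formula (L : E →ₗ[ℝ] E) (z : ℂ) (u v : E)
    (h1 : L u = z.re • u - z.im • v) (h2 : L v = z.im • u + z.re • v) (m : ℕ) :
    (L ^ m) u = (z ^ m).re • u - (z ^ m).im • v ∧
      (L ^ m) v = (z ^ m).im • u + (z ^ m).re • v := by
  induction m with
  | zero => simp
  | succ m ih =>
    obtain ⟨ha, hb⟩ := ih
    have hre : (z ^ (m + 1)).re = z.re * (z ^ m).re - z.im * (z ^ m).im := by
      rw [pow_succ']; exact Complex.mul_re _ _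
    have him : (z ^ (m + 1)).im = z.re * (z ^ m).im + z.im * (z ^ m).re := by
      rw [pow_succ']; exact Complex.mul_im _ _
    constructor
    · rw [pow_succ', Module.End.mul_apply, ha, map_sub, map_smul, map_smul, h1, h2, hre, him]
      module
    · rw [pow_succ', Module.End.mul_apply, hb, map_add, map_smul, map_smul, h1, h2, hre, him]
      module

private lemma Tpos_const_apply (A : E ≃L[ℝ] E) (m : ℕ) (x : E) :
    Tpos (fun _ : ℤ => A) m x = ((A : E →ₗ[ℝ] E) ^ m) x := by
  induction m with
  | zero => simp [Tpos]
  | succ m ih =>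
      have : Tpos (fun _ : ℤ => A) (m + 1) x = A (Tpos (fun _ : ℤ => A) m x) := rfl
      rw [this, ih, pow_succ']
      simp [Module.End.mul_apply]

private lemma Phi_const_apply (A : E ≃L[ℝ] E) (m : ℕ) (x : E) :
    Phi (fun _ : ℤ => A) (m : ℤ) 0 x = ((A : E →ₗ[ℝ] E) ^ m) x := by
  have h0 : Tfull (fun _ : ℤ => A) 0 = Tpos (fun _ : ℤ => A) 0 := by simp [Tfull]
  simp only [Phi, ContinuousLinearEquiv.trans_apply, h0]
  have : Tfull (fun _ : ℤ => A) (m : ℤ) = Tpos (fun _ : ℤ => A) m := by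
    simp [Tfull]
  rw [this]
  have hsymm : (Tpos (fun _ : ℤ => A) 0).symm x = x := rfl
  rw [hsymm, Tpos_const_apply]

private lemma Phi_cancel (C : ℤ → (E ≃L[ℝ] E)) (l : ℤ) (x : E) :
    Phi C 0 l (Phi C l 0 x) = x := by
  simp [Phi, ContinuousLinearEquiv.trans_apply]

end Aux
/-- If the constant sequence `C k = A` is hyperbolic on `ℤ₊`, then `A` has no complex
eigenvalue (root of the complexified characteristic polynomial) of absolute value 1. -/
theorem const_hyperbolic_no_unit_eigenvalue {n : ℕ}
    (A : EuclideanSpace ℝ (Fin n) ≃L[ℝ] EuclideanSpace ℝ (Fin n))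
    (hhyp : HypPlus (fun _ : ℤ => A)) :
    ∀ z : ℂ,
      (((A : EuclideanSpace ℝ (Fin n) →ₗ[ℝ] EuclideanSpace ℝ (Fin n)).charpoly).map
        (algebraMap ℝ ℂ)).IsRoot z → ‖z‖ ≠ 1 := by
  intro z hz habs
  obtain ⟨u, v, hne, h1, h2⟩ := eigvec_real_parts A z hz
  set L : EuclideanSpace ℝ (Fin n) →ₗ[ℝ] EuclideanSpace ℝ (Fin n) := (A : EuclideanSpace ℝ (Fin n) →ₗ[ℝ] EuclideanSpace ℝ (Fin n)) with hLdef
  obtain ⟨K, lam, S, U, hK, hlam, hlam1, hcomp, hinv, hS, hU⟩ := hhyp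
  have hlam_le : lam ≤ 1 := le_of_lt hlam1
  have habs_pow : ∀ m : ℕ, ‖z ^ m‖ = 1 := by
    intro m; rw [norm_pow, habs, one_pow]
  have hre_le : ∀ m : ℕ, |(z ^ m).re| ≤ 1 :=
    fun m => (Complex.abs_re_le_norm _).trans (le_of_eq (habs_pow m))
  have him_le : ∀ m : ℕ, |(z ^ m).im| ≤ 1 :=
    fun m => (Complex.abs_im_le_norm _).trans (le_of_eq (habs_pow m))
  have hsq : ∀ m : ℕ, (z ^ m).re * (z ^ m).re + (z ^ m).im * (z ^ m).im = 1 := by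
    intro m
    have h := habs_pow m
    have : Complex.normSq (z ^ m) = 1 := by
      rw [← Complex.sq_norm, h, one_pow]
    simpa [Complex.normSq_apply] using this
  have hform := pow_formula L z u v h1 h2
  have hu_bdd : ∀ m : ℕ, ‖(L ^ m) u‖ ≤ ‖u‖ + ‖v‖ := by
    intro m
    rw [(hform m).1]
    calc ‖(z ^ m).re • u - (z ^ m).im • v‖
        ≤ ‖(z ^ m).re • u‖ + ‖(z ^ m).im • v‖ := norm_sub_le _ _
      _ = |(z ^ m).re| * ‖u‖ + |(z ^ m).im| * ‖v‖ := by
          rw [norm_smul, norm_smul, Real.norm_eq_abs, Real.norm_eq_abs]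
      _ ≤ 1 * ‖u‖ + 1 * ‖v‖ :=
          add_le_add (mul_le_mul_of_nonneg_right (hre_le m) (norm_nonneg _))
            (mul_le_mul_of_nonneg_right (him_le m) (norm_nonneg _))
      _ = ‖u‖ + ‖v‖ := by ring
  have hv_bdd : ∀ m : ℕ, ‖(L ^ m) v‖ ≤ ‖u‖ + ‖v‖ := by
    intro m
    rw [(hform m).2]
    calc ‖(z ^ m).im • u + (z ^ m).re • v‖
        ≤ ‖(z ^ m).im • u‖ + ‖(z ^ m).re • v‖ := norm_add_le _ _
      _ = |(z ^ m).im| * ‖u‖ + |(z ^ m).re| * ‖v‖ := by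
          rw [norm_smul, norm_smul, Real.norm_eq_abs, Real.norm_eq_abs]
      _ ≤ 1 * ‖u‖ + 1 * ‖v‖ :=
          add_le_add (mul_le_mul_of_nonneg_right (him_le m) (norm_nonneg _))
            (mul_le_mul_of_nonneg_right (hre_le m) (norm_nonneg _))
      _ = ‖u‖ + ‖v‖ := by ring
  have hlim : Filter.Tendsto (fun m : ℕ => lam ^ m) Filter.atTop (nhds 0) :=
    tendsto_pow_atTop_nhds_zero_of_lt_one (le_of_lt hlam) hlam1
  have hlimc : ∀ c : ℝ, Filter.Tendsto (fun m : ℕ => K * lam ^ m * c) Filter.atTop (nhds 0) := by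
    intro c
    have h := (hlim.const_mul K).mul_const c
    simpa using h
  have hS0 : ∀ x ∈ S 0, ∀ m : ℕ, ‖(L ^ m) x‖ ≤ K * lam ^ m * ‖x‖ := by
    intro x hx m
    have h := hS (m : ℤ) 0 le_rfl (by exact_mod_cast Nat.zero_le m) x hx
    rw [Phi_const_apply] at h
    simpa [zpow_natCast] using h
  have hUmem : ∀ x ∈ U 0, ∀ m : ℕ, (L ^ m) x ∈ U (m : ℤ) := by
    intro x hx m
    induction m with
    | zero => simpa using hx
    | succ m ih =>
      have hstep := (hinv (m : ℤ) (by exact_mod_cast Nat.zero_le m)).2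
      have heq : (L ^ (m + 1)) x = A ((L ^ m) x) := by
        rw [pow_succ', Module.End.mul_apply]; rfl
      have hcast : ((m + 1 : ℕ) : ℤ) = (m : ℤ) + 1 := by push_cast; ring
      rw [heq, hcast, ← hstep]
      exact ⟨(L ^ m) x, ih, rfl⟩
  have hUlow : ∀ x ∈ U 0, ∀ m : ℕ, ‖x‖ ≤ K * lam ^ m * ‖(L ^ m) x‖ := by
    intro x hx m
    have hmem : Phi (fun _ : ℤ => A) (m : ℤ) 0 x ∈ U (m : ℤ) := by
      rw [Phi_const_apply]; exact hUmem x hx m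
    have h := hU 0 (m : ℤ) le_rfl (by exact_mod_cast Nat.zero_le m) _ hmem
    rw [Phi_cancel] at h
    rw [Phi_const_apply] at hmem
    calc ‖x‖ ≤ K * lam ^ ((m : ℤ) - 0) * ‖Phi (fun _ : ℤ => A) (m : ℤ) 0 x‖ := h
      _ = K * lam ^ m * ‖(L ^ m) x‖ := by
          rw [Phi_const_apply, ← hLdef]; norm_num [zpow_natCast]
  have key : ∀ x : EuclideanSpace ℝ (Fin n), (∀ m : ℕ, ‖(L ^ m) x‖ ≤ ‖u‖ + ‖v‖) →
      Filter.Tendsto (fun m : ℕ => ‖(L ^ m) x‖) Filter.atTop (nhds 0) := by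
    intro x hbd
    have hxmem : x ∈ S 0 ⊔ U 0 := by rw [(hcomp 0 le_rfl).2]; trivial
    obtain ⟨s, hs, y, hy, hsy⟩ := Submodule.mem_sup.1 hxmem
    have hy0 : y = 0 := by
      have hb : ∀ m : ℕ, ‖y‖ ≤ K * lam ^ m * ((‖u‖ + ‖v‖) + K * ‖s‖) := by
        intro m
        have hLy : ‖(L ^ m) y‖ ≤ (‖u‖ + ‖v‖) + K * ‖s‖ := by
          have hyx : (L ^ m) y = (L ^ m) x - (L ^ m) s := by
            rw [← hsy]; simp
          rw [hyx]
          refine (norm_sub_le _ _).trans (add_le_add (hbd m) ?_)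
          refine (hS0 s hs m).trans ?_
          have hpow1 : lam ^ m ≤ 1 := pow_le_one₀ (le_of_lt hlam) hlam_le
          calc K * lam ^ m * ‖s‖ ≤ K * 1 * ‖s‖ := by gcongr
            _ = K * ‖s‖ := by ring
        calc ‖y‖ ≤ K * lam ^ m * ‖(L ^ m) y‖ := hUlow y hy m
          _ ≤ K * lam ^ m * ((‖u‖ + ‖v‖) + K * ‖s‖) := by
              have hKl : 0 ≤ K * lam ^ m := by positivity
              exact mul_le_mul_of_nonneg_left hLy hKl
      have hle : ‖y‖ ≤ 0 :=
        ge_of_tendsto (hlimc ((‖u‖ + ‖v‖) + K * ‖s‖)) (Filter.Eventually.of_forall hb)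
      exact norm_le_zero_iff.1 hle
    have hxs : x ∈ S 0 := by
      have : x = s := by rw [← hsy, hy0, add_zero]
      rw [this]; exact hs
    exact squeeze_zero (fun m => norm_nonneg _) (hS0 x hxs) (hlimc ‖x‖)
  have hu0 := key u hu_bdd
  have hv0 := key v hv_bdd
  have hsum : Filter.Tendsto (fun m : ℕ => ‖(L ^ m) u‖ + ‖(L ^ m) v‖) Filter.atTop (nhds 0) := by
    simpa using hu0.add hv0
  have hrec_u : ∀ m : ℕ, ‖u‖ ≤ ‖(L ^ m) u‖ + ‖(L ^ m) v‖ := by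
    intro m
    have hrep : u = (z ^ m).re • (L ^ m) u + (z ^ m).im • (L ^ m) v := by
      rw [(hform m).1, (hform m).2]
      calc u = ((z ^ m).re * (z ^ m).re + (z ^ m).im * (z ^ m).im) • u := by
            rw [hsq m, one_smul]
        _ = _ := by module
    calc ‖u‖ = ‖(z ^ m).re • (L ^ m) u + (z ^ m).im • (L ^ m) v‖ := by rw [← hrep]
      _ ≤ ‖(z ^ m).re • (L ^ m) u‖ + ‖(z ^ m).im • (L ^ m) v‖ := norm_add_le _ _
      _ = |(z ^ m).re| * ‖(L ^ m) u‖ + |(z ^ m).im| * ‖(L ^ m) v‖ := by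
          rw [norm_smul, norm_smul, Real.norm_eq_abs, Real.norm_eq_abs]
      _ ≤ 1 * ‖(L ^ m) u‖ + 1 * ‖(L ^ m) v‖ :=
          add_le_add (mul_le_mul_of_nonneg_right (hre_le m) (norm_nonneg _))
            (mul_le_mul_of_nonneg_right (him_le m) (norm_nonneg _))
      _ = ‖(L ^ m) u‖ + ‖(L ^ m) v‖ := by ring
  have hrec_v : ∀ m : ℕ, ‖v‖ ≤ ‖(L ^ m) u‖ + ‖(L ^ m) v‖ := by
    intro m
    have hrep : v = (-(z ^ m).im) • (L ^ m) u + (z ^ m).re • (L ^ m) v := by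
      rw [(hform m).1, (hform m).2]
      calc v = ((z ^ m).re * (z ^ m).re + (z ^ m).im * (z ^ m).im) • v := by
            rw [hsq m, one_smul]
        _ = _ := by module
    calc ‖v‖ = ‖(-(z ^ m).im) • (L ^ m) u + (z ^ m).re • (L ^ m) v‖ := by rw [← hrep]
      _ ≤ ‖(-(z ^ m).im) • (L ^ m) u‖ + ‖(z ^ m).re • (L ^ m) v‖ := norm_add_le _ _
      _ = |(-(z ^ m).im)| * ‖(L ^ m) u‖ + |(z ^ m).re| * ‖(L ^ m) v‖ := by
          rw [norm_smul, norm_smul, Real.norm_eq_abs, Real.norm_eq_abs]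
      _ ≤ 1 * ‖(L ^ m) u‖ + 1 * ‖(L ^ m) v‖ :=
          add_le_add (mul_le_mul_of_nonneg_right (by rw [abs_neg]; exact him_le m) (norm_nonneg _))
            (mul_le_mul_of_nonneg_right (hre_le m) (norm_nonneg _))
      _ = ‖(L ^ m) u‖ + ‖(L ^ m) v‖ := by ring
  have hu_zero : u = 0 := by
    have : ‖u‖ ≤ 0 := ge_of_tendsto hsum (Filter.Eventually.of_forall hrec_u)
    exact norm_le_zero_iff.1 this
  have hv_zero : v = 0 := by
    have : ‖v‖ ≤ 0 := ge_of_tendsto hsum (Filter.Eventually.of_forall hrec_v)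
    exact norm_le_zero_iff.1 this
  exact hne ⟨hu_zero, hv_zero⟩
end
end

section
/- Suppose the sequence C is hyperbolic on ℤ₊ with subspaces S_k, U_k, and let Q₀ : ℝⁿ → ℝⁿ be the projection onto S₀ along U₀. Then for every bounded sequence (g_k)_{k≥1} in ℝⁿ and every η ∈ S₀ there exists a unique bounded sequence (w_k)_{k≥0} in ℝⁿ such that w_{k+1} = C_k w_k + g_{k+1} for all k ≥ 0 and Q₀ w₀ = η. -/
noncomputable section

section PhiLemmas

variable {n : ℕ} (C : ℤ → (EuclideanSpace ℝ (Fin n) ≃L[ℝ] EuclideanSpace ℝ (Fin n)))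

lemma Tfull_natCast (k : ℕ) : Tfull C (k : ℤ) = Tpos C k := by
  simp [Tfull]

lemma Phi_self (k : ℤ) (v : EuclideanSpace ℝ (Fin n)) : Phi C k k v = v := by
  simp [Phi]

lemma Phi_comp (k l m : ℤ) (v : EuclideanSpace ℝ (Fin n)) :
    Phi C k l (Phi C l m v) = Phi C k m v := by
  simp [Phi]

lemma Phi_succ (k l : ℕ) (v : EuclideanSpace ℝ (Fin n)) :
    Phi C ((k : ℤ) + 1) (l : ℤ) v = C (k : ℤ) (Phi C (k : ℤ) (l : ℤ) v) := by
  have h1 : ((k:ℤ)+1) = ((k+1 : ℕ) : ℤ) := by push_cast; ring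
  rw [Phi, Phi, h1, Tfull_natCast, Tfull_natCast, Tfull_natCast]
  show Tpos C (k+1) ((Tpos C l).symm v) = _
  rw [Tpos]
  rfl

lemma Phi_pred (k : ℕ) (v : EuclideanSpace ℝ (Fin n)) :
    Phi C (k : ℤ) ((k : ℤ) + 1) v = (C (k : ℤ)).symm v := by
  have h1 : ((k:ℤ)+1) = ((k+1 : ℕ) : ℤ) := by push_cast; ring
  rw [Phi, h1, Tfull_natCast, Tfull_natCast]
  show Tpos C k ((Tpos C (k+1)).symm v) = _
  rw [Tpos]
  simp

end PhiLemmas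

section PhiZero
variable {n : ℕ} (C : ℤ → (EuclideanSpace ℝ (Fin n) ≃L[ℝ] EuclideanSpace ℝ (Fin n)))

lemma Phi_succ_zero (k : ℕ) (v : EuclideanSpace ℝ (Fin n)) :
    Phi C ((k : ℤ) + 1) (0:ℤ) v = C (k : ℤ) (Phi C (k : ℤ) (0:ℤ) v) := by
  have h := Phi_succ C k 0 v
  rwa [Nat.cast_zero] at h

end PhiZero
section ProjLemmas

variable {n : ℕ} (S U : ℤ → Submodule ℝ (EuclideanSpace ℝ (Fin n)))

/-- Projection onto `S k` along `U k`. -/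
def Pj (h : ∀ k : ℕ, IsCompl (S (k:ℤ)) (U (k:ℤ))) (k : ℕ) :
    EuclideanSpace ℝ (Fin n) →ₗ[ℝ] EuclideanSpace ℝ (Fin n) :=
  (S (k:ℤ)).subtype ∘ₗ (S (k:ℤ)).projectionOnto (U (k:ℤ)) (h k)

variable (h : ∀ k : ℕ, IsCompl (S (k:ℤ)) (U (k:ℤ)))

lemma Pj_mem (k : ℕ) (v : EuclideanSpace ℝ (Fin n)) : Pj S U h k v ∈ S (k:ℤ) :=
  ((S (k:ℤ)).linearProjOfIsCompl (U (k:ℤ)) (h k) v).2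

lemma Pj_sub_mem (k : ℕ) (v : EuclideanSpace ℝ (Fin n)) : v - Pj S U h k v ∈ U (k:ℤ) := by
  have heq := Submodule.projection_add_projection_eq_self (h k) v
  have h2 : v - Pj S U h k v
      = ((U (k:ℤ)).projectionOnto (S (k:ℤ)) (h k).symm v : EuclideanSpace ℝ (Fin n)) :=
    sub_eq_iff_eq_add'.mpr heq.symm
  rw [h2]; exact Submodule.coe_mem _

lemma Pj_of_mem_S (k : ℕ) (v : EuclideanSpace ℝ (Fin n)) (hv : v ∈ S (k:ℤ)) :
    Pj S U h k v = v :=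
  congrArg Subtype.val (Submodule.linearProjOfIsCompl_apply_left (h k) ⟨v, hv⟩)

lemma Pj_of_mem_U (k : ℕ) (v : EuclideanSpace ℝ (Fin n)) (hv : v ∈ U (k:ℤ)) :
    Pj S U h k v = 0 := by
  have h2 := Submodule.linearProjOfIsCompl_apply_right' (h k) hv
  simp only [Pj, LinearMap.comp_apply, Submodule.subtype_apply, h2, Submodule.coe_zero]

end ProjLemmas
section InvLemmas

variable {n : ℕ} (C : ℤ → (EuclideanSpace ℝ (Fin n) ≃L[ℝ] EuclideanSpace ℝ (Fin n)))
  (S U : ℤ → Submodule ℝ (EuclideanSpace ℝ (Fin n)))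

variable (hmap : ∀ k : ℤ, 0 ≤ k →
      (S k).map ((C k).toLinearEquiv :
        EuclideanSpace ℝ (Fin n) →ₗ[ℝ] EuclideanSpace ℝ (Fin n)) = S (k + 1) ∧
      (U k).map ((C k).toLinearEquiv :
        EuclideanSpace ℝ (Fin n) →ₗ[ℝ] EuclideanSpace ℝ (Fin n)) = U (k + 1))

include hmap

lemma CS_mem (k : ℕ) (v : EuclideanSpace ℝ (Fin n)) (hv : v ∈ S (k:ℤ)) :
    C (k:ℤ) v ∈ S ((k:ℤ)+1) := by
  rw [← (hmap k (Int.natCast_nonneg k)).1]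
  exact ⟨v, hv, rfl⟩

lemma CU_mem (k : ℕ) (v : EuclideanSpace ℝ (Fin n)) (hv : v ∈ U (k:ℤ)) :
    C (k:ℤ) v ∈ U ((k:ℤ)+1) := by
  rw [← (hmap k (Int.natCast_nonneg k)).2]
  exact ⟨v, hv, rfl⟩

lemma CUsymm_mem (k : ℕ) (v : EuclideanSpace ℝ (Fin n)) (hv : v ∈ U ((k:ℤ)+1)) :
    (C (k:ℤ)).symm v ∈ U (k:ℤ) := by
  rw [← (hmap k (Int.natCast_nonneg k)).2] at hv
  obtain ⟨u, hu, huv⟩ := hv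
  have : (C (k:ℤ)).symm v = u := by
    rw [← huv]; exact (C (k:ℤ)).symm_apply_apply u
  rwa [this]

lemma PhiS_mem (l : ℕ) : ∀ k : ℕ, l ≤ k → ∀ v ∈ S (l:ℤ), Phi C (k:ℤ) (l:ℤ) v ∈ S (k:ℤ) := by
  refine Nat.le_induction ?_ ?_
  · intro v hv; rw [Phi_self]; exact hv
  · intro k hk ih v hv
    have hc : ((k+1:ℕ):ℤ) = (k:ℤ)+1 := by push_cast; ring
    rw [hc, Phi_succ]
    exact CS_mem C S U hmap k _ (ih v hv)

lemma PhiU_mem (l : ℕ) : ∀ k : ℕ, l ≤ k → ∀ v ∈ U (l:ℤ), Phi C (k:ℤ) (l:ℤ) v ∈ U (k:ℤ) := by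
  refine Nat.le_induction ?_ ?_
  · intro v hv; rw [Phi_self]; exact hv
  · intro k hk ih v hv
    have hc : ((k+1:ℕ):ℤ) = (k:ℤ)+1 := by push_cast; ring
    rw [hc, Phi_succ]
    exact CU_mem C S U hmap k _ (ih v hv)

lemma PhiU_mem_back (l : ℕ) : ∀ k : ℕ, l ≤ k → ∀ v ∈ U (k:ℤ), Phi C (l:ℤ) (k:ℤ) v ∈ U (l:ℤ) := by
  refine Nat.le_induction ?_ ?_
  · intro v hv; rw [Phi_self]; exact hv
  · intro k hk ih v hv
    have hc : ((k+1:ℕ):ℤ) = (k:ℤ)+1 := by push_cast; ring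
    rw [hc] at hv ⊢
    rw [← Phi_comp C (l:ℤ) (k:ℤ) ((k:ℤ)+1) v, Phi_pred]
    exact ih _ (CUsymm_mem C S U hmap k v hv)

end InvLemmas
section NormLemmas

variable {n : ℕ} (C : ℤ → (EuclideanSpace ℝ (Fin n) ≃L[ℝ] EuclideanSpace ℝ (Fin n)))
  (K lam : ℝ) (S U : ℤ → Submodule ℝ (EuclideanSpace ℝ (Fin n)))

lemma Snorm_nat
    (hS : ∀ k l : ℤ, 0 ≤ l → l ≤ k → ∀ v ∈ S l, ‖Phi C k l v‖ ≤ K * lam ^ (k - l) * ‖v‖)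
    (l k : ℕ) (hlk : l ≤ k) (v : EuclideanSpace ℝ (Fin n)) (hv : v ∈ S (l:ℤ)) :
    ‖Phi C (k:ℤ) (l:ℤ) v‖ ≤ K * lam ^ (k - l) * ‖v‖ := by
  have h := hS (k:ℤ) (l:ℤ) (Int.natCast_nonneg l) (by exact_mod_cast hlk) v hv
  rwa [show ((k:ℤ) - (l:ℤ)) = ((k - l : ℕ) : ℤ) by omega, zpow_natCast] at h

lemma Unorm_nat
    (hU : ∀ k l : ℤ, 0 ≤ k → k ≤ l → ∀ v ∈ U l, ‖Phi C k l v‖ ≤ K * lam ^ (l - k) * ‖v‖)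
    (k l : ℕ) (hkl : k ≤ l) (v : EuclideanSpace ℝ (Fin n)) (hv : v ∈ U (l:ℤ)) :
    ‖Phi C (k:ℤ) (l:ℤ) v‖ ≤ K * lam ^ (l - k) * ‖v‖ := by
  have h := hU (k:ℤ) (l:ℤ) (Int.natCast_nonneg k) (by exact_mod_cast hkl) v hv
  rwa [show ((l:ℤ) - (k:ℤ)) = ((l - k : ℕ) : ℤ) by omega, zpow_natCast] at h

lemma Phi_growth {B : ℝ}
    (hB : ∀ k : ℤ, ‖(C k : EuclideanSpace ℝ (Fin n) →L[ℝ] EuclideanSpace ℝ (Fin n))‖ ≤ B)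
    (l : ℕ) : ∀ (m : ℕ) (v : EuclideanSpace ℝ (Fin n)),
      ‖Phi C ((l+m : ℕ):ℤ) (l:ℤ) v‖ ≤ B ^ m * ‖v‖ := by
  intro m
  induction m with
  | zero => intro v; simp [Phi_self]
  | succ m ih =>
    intro v
    have hc : ((l+(m+1):ℕ):ℤ) = ((l+m:ℕ):ℤ)+1 := by push_cast; ring
    rw [hc, show ((l+m:ℕ):ℤ) = (((l+m:ℕ)):ℤ) from rfl]
    rw [Phi_succ C (l+m) l v]
    calc ‖C ((l+m:ℕ):ℤ) (Phi C ((l+m:ℕ):ℤ) (l:ℤ) v)‖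
        ≤ ‖(C ((l+m:ℕ):ℤ) : EuclideanSpace ℝ (Fin n) →L[ℝ] EuclideanSpace ℝ (Fin n))‖ *
          ‖Phi C ((l+m:ℕ):ℤ) (l:ℤ) v‖ :=
            (C ((l+m:ℕ):ℤ) : EuclideanSpace ℝ (Fin n) →L[ℝ]
              EuclideanSpace ℝ (Fin n)).le_opNorm _
      _ ≤ B * (B ^ m * ‖v‖) := by
          apply mul_le_mul (hB _) (ih v) (norm_nonneg _)
          exact le_trans (norm_nonneg _) (hB 0)
      _ = B ^ (m+1) * ‖v‖ := by ring

end NormLemmas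
section ProjBound

variable {n : ℕ} (C : ℤ → (EuclideanSpace ℝ (Fin n) ≃L[ℝ] EuclideanSpace ℝ (Fin n)))
  (K lam : ℝ) (S U : ℤ → Submodule ℝ (EuclideanSpace ℝ (Fin n)))

lemma proj_bound
    (h : ∀ k : ℕ, IsCompl (S (k:ℤ)) (U (k:ℤ)))
    (hmap : ∀ k : ℤ, 0 ≤ k →
      (S k).map ((C k).toLinearEquiv :
        EuclideanSpace ℝ (Fin n) →ₗ[ℝ] EuclideanSpace ℝ (Fin n)) = S (k + 1) ∧
      (U k).map ((C k).toLinearEquiv :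
        EuclideanSpace ℝ (Fin n) →ₗ[ℝ] EuclideanSpace ℝ (Fin n)) = U (k + 1))
    (hS : ∀ k l : ℤ, 0 ≤ l → l ≤ k → ∀ v ∈ S l, ‖Phi C k l v‖ ≤ K * lam ^ (k - l) * ‖v‖)
    (hU : ∀ k l : ℤ, 0 ≤ k → k ≤ l → ∀ v ∈ U l, ‖Phi C k l v‖ ≤ K * lam ^ (l - k) * ‖v‖)
    (hK : 0 < K) (hlam0 : 0 < lam) (hlam1 : lam < 1)
    {B : ℝ}
    (hB : ∀ k : ℤ, ‖(C k : EuclideanSpace ℝ (Fin n) →L[ℝ] EuclideanSpace ℝ (Fin n))‖ ≤ B) :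
    ∃ M : ℝ, 1 ≤ M ∧ ∀ (k : ℕ) (v : EuclideanSpace ℝ (Fin n)),
      ‖v - Pj S U h k v‖ ≤ M * ‖v‖ := by
  have hB0 : 0 ≤ B := le_trans (norm_nonneg _) (hB 0)
  obtain ⟨m, hm⟩ := exists_pow_lt_of_lt_one (show (0:ℝ) < 1/(2*K^2) by positivity) hlam1
  have hBm0 : (0:ℝ) ≤ B ^ m := pow_nonneg hB0 m
  refine ⟨2*K*B^m + 1, by nlinarith, ?_⟩
  intro k v
  set s := Pj S U h k v with hs
  set u := v - Pj S U h k v with hu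
  have hsS : s ∈ S (k:ℤ) := Pj_mem S U h k v
  have huU : u ∈ U (k:ℤ) := Pj_sub_mem S U h k v
  have hlm1 : lam ^ m ≤ 1 := pow_le_one₀ hlam0.le hlam1.le
  set a := K * lam ^ m with ha_def
  have ha : 0 ≤ a := mul_nonneg hK.le (pow_nonneg hlam0.le m)
  have haK : a ≤ K := by nlinarith
  have t1 : lam^m * lam^m ≤ lam^m := by nlinarith [pow_nonneg hlam0.le m]
  have haa : a * a ≤ 1/2 := by
    have heq : a*a = K^2*(lam^m*lam^m) := by rw [ha_def]; ring
    have t2 : K^2*(lam^m*lam^m) ≤ K^2*lam^m := mul_le_mul_of_nonneg_left t1 (by positivity)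
    have hm' : lam^m*(2*K^2) < 1 := (lt_div_iff₀ (by positivity)).1 hm
    rw [heq]; nlinarith
  -- step 1
  have hw : Phi C ((k+m:ℕ):ℤ) (k:ℤ) u ∈ U ((k+m:ℕ):ℤ) :=
    PhiU_mem C S U hmap k (k+m) (Nat.le_add_right k m) u huU
  have h1 : ‖u‖ ≤ a * ‖Phi C ((k+m:ℕ):ℤ) (k:ℤ) u‖ := by
    have h2 := Unorm_nat C K lam U hU k (k+m) (Nat.le_add_right k m) _ hw
    rwa [Phi_comp, Phi_self, Nat.add_sub_cancel_left] at h2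
  -- step 2
  have h3 : ‖Phi C ((k+m:ℕ):ℤ) (k:ℤ) u‖
      ≤ ‖Phi C ((k+m:ℕ):ℤ) (k:ℤ) v‖ + ‖Phi C ((k+m:ℕ):ℤ) (k:ℤ) s‖ := by
    have : Phi C ((k+m:ℕ):ℤ) (k:ℤ) u
        = Phi C ((k+m:ℕ):ℤ) (k:ℤ) v - Phi C ((k+m:ℕ):ℤ) (k:ℤ) s := by
      rw [hu, map_sub]
    rw [this]; exact norm_sub_le _ _
  have h4 : ‖Phi C ((k+m:ℕ):ℤ) (k:ℤ) v‖ ≤ B ^ m * ‖v‖ := Phi_growth C hB k m v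
  have h5 : ‖Phi C ((k+m:ℕ):ℤ) (k:ℤ) s‖ ≤ a * ‖s‖ := by
    have := Snorm_nat C K lam S hS k (k+m) (Nat.le_add_right k m) s hsS
    rwa [Nat.add_sub_cancel_left] at this
  have h6 : ‖s‖ ≤ ‖v‖ + ‖u‖ := by
    have : s = v - u := by rw [hu]; abel
    rw [this]; exact norm_sub_le _ _
  have hX : ‖Phi C ((k+m:ℕ):ℤ) (k:ℤ) u‖ ≤ B^m*‖v‖ + a*(‖v‖+‖u‖) :=
    h3.trans (add_le_add h4 (h5.trans (mul_le_mul_of_nonneg_left h6 ha)))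
  have key : ‖u‖ ≤ a * (B^m*‖v‖ + a*(‖v‖+‖u‖)) :=
    h1.trans (mul_le_mul_of_nonneg_left hX ha)
  nlinarith [key,
    mul_le_mul_of_nonneg_right haK (mul_nonneg hBm0 (norm_nonneg v)),
    mul_le_mul_of_nonneg_right haa (add_nonneg (norm_nonneg v) (norm_nonneg u)),
    norm_nonneg u, norm_nonneg v]

end ProjBound
/-- If `C` is hyperbolic on `ℤ₊` and `Q₀` is the projection onto `S 0` along `U 0`, then
for every bounded sequence `g` and every `η ∈ S 0` there is a unique bounded sequence `w`
with `w (k+1) = C k (w k) + g (k+1)` for `k ≥ 0` and `Q₀ (w 0) = η`. -/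
theorem unique_bounded_solution_with_projected_initial_value {n : ℕ}
    (C : ℤ → (EuclideanSpace ℝ (Fin n) ≃L[ℝ] EuclideanSpace ℝ (Fin n)))
    (hC : ∃ B : ℝ, ∀ k : ℤ,
      ‖(C k : EuclideanSpace ℝ (Fin n) →L[ℝ] EuclideanSpace ℝ (Fin n))‖ ≤ B ∧
      ‖((C k).symm : EuclideanSpace ℝ (Fin n) →L[ℝ] EuclideanSpace ℝ (Fin n))‖ ≤ B)
    (K lam : ℝ) (S U : ℤ → Submodule ℝ (EuclideanSpace ℝ (Fin n)))
    (hK : 0 < K) (hlam0 : 0 < lam) (hlam1 : lam < 1)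
    (hcompl : ∀ k : ℤ, 0 ≤ k → S k ⊓ U k = ⊥ ∧ S k ⊔ U k = ⊤)
    (hmap : ∀ k : ℤ, 0 ≤ k →
      (S k).map ((C k).toLinearEquiv :
        EuclideanSpace ℝ (Fin n) →ₗ[ℝ] EuclideanSpace ℝ (Fin n)) = S (k + 1) ∧
      (U k).map ((C k).toLinearEquiv :
        EuclideanSpace ℝ (Fin n) →ₗ[ℝ] EuclideanSpace ℝ (Fin n)) = U (k + 1))
    (hS : ∀ k l : ℤ, 0 ≤ l → l ≤ k → ∀ v ∈ S l, ‖Phi C k l v‖ ≤ K * lam ^ (k - l) * ‖v‖)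
    (hU : ∀ k l : ℤ, 0 ≤ k → k ≤ l → ∀ v ∈ U l, ‖Phi C k l v‖ ≤ K * lam ^ (l - k) * ‖v‖)
    (Q₀ : EuclideanSpace ℝ (Fin n) →ₗ[ℝ] EuclideanSpace ℝ (Fin n))
    (hQS : ∀ v ∈ S 0, Q₀ v = v) (hQU : ∀ v ∈ U 0, Q₀ v = 0) :
    ∀ g : ℕ → EuclideanSpace ℝ (Fin n), (∃ B : ℝ, ∀ k : ℕ, ‖g k‖ ≤ B) →
      ∀ η ∈ S 0,
        ∃! w : ℕ → EuclideanSpace ℝ (Fin n),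
          (∃ B : ℝ, ∀ k : ℕ, ‖w k‖ ≤ B) ∧
          (∀ k : ℕ, w (k + 1) = C (k : ℤ) (w k) + g (k + 1)) ∧
          Q₀ (w 0) = η := by

  intro g hgB η hη
  obtain ⟨B, hB⟩ := hC
  obtain ⟨Bg, hBg⟩ := hgB
  have hBg0 : 0 ≤ Bg := le_trans (norm_nonneg _) (hBg 0)
  have hIC : ∀ k : ℕ, IsCompl (S (k:ℤ)) (U (k:ℤ)) := fun k => by
    obtain ⟨h1, h2⟩ := hcompl k (Int.natCast_nonneg k)
    exact ⟨disjoint_iff.mpr h1, codisjoint_iff.mpr h2⟩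
  have hB' : ∀ k : ℤ, ‖(C k : EuclideanSpace ℝ (Fin n) →L[ℝ] EuclideanSpace ℝ (Fin n))‖ ≤ B :=
    fun k => (hB k).1
  obtain ⟨M, hM1, hMb⟩ := proj_bound C K lam S U hIC hmap hS hU hK hlam0 hlam1 hB'
  have hM0 : (0:ℝ) ≤ M := le_trans zero_le_one hM1
  set P := Pj S U hIC with hPdef
  have hucb : ∀ j : ℕ, ‖g j - P j (g j)‖ ≤ M * Bg := fun j =>
    (hMb j (g j)).trans (mul_le_mul_of_nonneg_left (hBg j) hM0)
  have hscb : ∀ j : ℕ, ‖P j (g j)‖ ≤ (1+M) * Bg := by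
    intro j
    have heq : P j (g j) = g j - (g j - P j (g j)) := by abel
    rw [heq]
    calc ‖g j - (g j - P j (g j))‖ ≤ ‖g j‖ + ‖g j - P j (g j)‖ := norm_sub_le _ _
      _ ≤ Bg + M*Bg := add_le_add (hBg j) (hucb j)
      _ = (1+M)*Bg := by ring
  set F : ℕ → ℕ → EuclideanSpace ℝ (Fin n) :=
    fun k j => Phi C (k:ℤ) (j:ℤ) (g j - P j (g j)) with hF
  have hFb : ∀ (k a : ℕ), k ≤ a → ∀ i : ℕ, ‖F k (a+i)‖ ≤ (K*(M*Bg)) * lam ^ i := by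
    intro k a hka i
    have hmem : g (a+i) - P (a+i) (g (a+i)) ∈ U ((a+i:ℕ):ℤ) := Pj_sub_mem S U hIC _ _
    have h1 := Unorm_nat C K lam U hU k (a+i) (le_trans hka (Nat.le_add_right a i)) _ hmem
    have h2 : lam ^ (a+i-k) ≤ lam ^ i :=
      pow_le_pow_of_le_one hlam0.le hlam1.le (by omega)
    calc ‖F k (a+i)‖ ≤ K * lam ^ (a+i-k) * ‖g (a+i) - P (a+i) (g (a+i))‖ := h1
      _ ≤ K * lam ^ i * (M*Bg) := by
          apply mul_le_mul (mul_le_mul_of_nonneg_left h2 hK.le) (hucb _) (norm_nonneg _)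
            (by positivity)
      _ = (K*(M*Bg)) * lam ^ i := by ring
  have hgeom : Summable (fun i : ℕ => (K*(M*Bg)) * lam ^ i) :=
    (summable_geometric_of_lt_one hlam0.le hlam1).mul_left _
  have hFsum : ∀ (k a : ℕ), k ≤ a → Summable (fun i : ℕ => F k (a+i)) := fun k a hka =>
    Summable.of_norm_bounded hgeom (hFb k a hka)
  have hFnormsum : ∀ (k a : ℕ), k ≤ a → Summable (fun i : ℕ => ‖F k (a+i)‖) := fun k a hka =>
    Summable.of_nonneg_of_le (fun _ => norm_nonneg _) (hFb k a hka) hgeom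
  have hub : ∀ k : ℕ, ‖∑' i : ℕ, F k (k+1+i)‖ ≤ K*(M*Bg) * (1-lam)⁻¹ := by
    intro k
    calc ‖∑' i : ℕ, F k (k+1+i)‖ ≤ ∑' i : ℕ, ‖F k (k+1+i)‖ :=
          norm_tsum_le_tsum_norm (hFnormsum k (k+1) (Nat.le_succ k))
      _ ≤ ∑' i : ℕ, (K*(M*Bg)) * lam ^ i :=
          Summable.tsum_le_tsum (hFb k (k+1) (Nat.le_succ k)) (hFnormsum k (k+1) (Nat.le_succ k)) hgeom
      _ = K*(M*Bg) * (1-lam)⁻¹ := by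
          rw [tsum_mul_left, tsum_geometric_of_lt_one hlam0.le hlam1]
  set w : ℕ → EuclideanSpace ℝ (Fin n) := fun k =>
    Phi C (k:ℤ) 0 η
    + (∑ j ∈ Finset.range k, Phi C (k:ℤ) ((j+1:ℕ):ℤ) (P (j+1) (g (j+1))))
    - ∑' i : ℕ, F k (k+1+i) with hw
  -- recursion
  have hrec : ∀ k : ℕ, w (k+1) = C (k:ℤ) (w k) + g (k+1) := by
    intro k
    have hcast : ((k+1:ℕ):ℤ) = (k:ℤ)+1 := by push_cast; ring
    have hCu : C (k:ℤ) (∑' i : ℕ, F k (k+1+i))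
        = F (k+1) (k+1) + ∑' i : ℕ, F (k+1) (k+1+1+i) := by
      rw [ContinuousLinearEquiv.map_tsum]
      have h1 : ∀ i:ℕ, C (k:ℤ) (F k (k+1+i)) = F (k+1) (k+1+i) := by
        intro i
        simp only [hF]
        rw [hcast, Phi_succ C k (k+1+i)]
      rw [tsum_congr h1, Summable.tsum_eq_zero_add (hFsum (k+1) (k+1) le_rfl)]
      congr 1
      exact tsum_congr fun b => by rw [show k+1+(b+1) = k+1+1+b from by omega]
    have hCsum : C (k:ℤ) (∑ j ∈ Finset.range k, Phi C (k:ℤ) ((j+1:ℕ):ℤ) (P (j+1) (g (j+1))))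
        = ∑ j ∈ Finset.range k, Phi C ((k+1:ℕ):ℤ) ((j+1:ℕ):ℤ) (P (j+1) (g (j+1))) := by
      rw [map_sum]
      exact Finset.sum_congr rfl fun j _ => by rw [hcast, Phi_succ]
    have hCeta : C (k:ℤ) (Phi C (k:ℤ) 0 η) = Phi C ((k+1:ℕ):ℤ) 0 η := by
      rw [hcast, Phi_succ_zero]
    simp only [hw]
    rw [map_sub, map_add, hCeta, hCsum, hCu, Finset.sum_range_succ, Phi_self]
    have hFself : F (k+1) (k+1) = g (k+1) - P (k+1) (g (k+1)) := by
      simp only [hF]; rw [Phi_self]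
    rw [hFself]
    abel
  -- boundedness
  set Bw : ℝ := K*‖η‖ + K*((1+M)*Bg)*(1-lam)⁻¹ + K*(M*Bg)*(1-lam)⁻¹ with hBw
  have hη0 : η ∈ S ((0:ℕ):ℤ) := by rwa [Nat.cast_zero]
  have hwb : ∀ k : ℕ, ‖w k‖ ≤ Bw := by
    intro k
    have hA : ‖Phi C (k:ℤ) 0 η‖ ≤ K*‖η‖ := by
      have h1 := Snorm_nat C K lam S hS 0 k (Nat.zero_le k) η hη0
      rw [Nat.cast_zero, Nat.sub_zero] at h1
      have h2 : lam ^ k ≤ 1 := pow_le_one₀ hlam0.le hlam1.le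
      calc ‖Phi C (k:ℤ) 0 η‖ ≤ K * lam ^ k * ‖η‖ := h1
        _ ≤ K * 1 * ‖η‖ :=
            mul_le_mul_of_nonneg_right (mul_le_mul_of_nonneg_left h2 hK.le) (norm_nonneg η)
        _ = K * ‖η‖ := by ring
    have hSig : ‖∑ j ∈ Finset.range k, Phi C (k:ℤ) ((j+1:ℕ):ℤ) (P (j+1) (g (j+1)))‖
        ≤ K*((1+M)*Bg)*(1-lam)⁻¹ := by
      have hterm : ∀ j ∈ Finset.range k,
          ‖Phi C (k:ℤ) ((j+1:ℕ):ℤ) (P (j+1) (g (j+1)))‖ ≤ K*((1+M)*Bg) * lam ^ (k-(j+1)) := by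
        intro j hj
        have hjk : j+1 ≤ k := Finset.mem_range.mp hj
        have h1 := Snorm_nat C K lam S hS (j+1) k hjk _ (Pj_mem S U hIC (j+1) (g (j+1)))
        calc ‖Phi C (k:ℤ) ((j+1:ℕ):ℤ) (P (j+1) (g (j+1)))‖
            ≤ K * lam ^ (k-(j+1)) * ‖P (j+1) (g (j+1))‖ := h1
          _ ≤ K * lam ^ (k-(j+1)) * ((1+M)*Bg) := by
              apply mul_le_mul_of_nonneg_left (hscb (j+1)) (by positivity)
          _ = K*((1+M)*Bg) * lam ^ (k-(j+1)) := by ring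
      have hsum1 : ∑ j ∈ Finset.range k, lam ^ (k-(j+1)) ≤ (1-lam)⁻¹ := by
        have he : ∑ j ∈ Finset.range k, lam ^ (k-(j+1)) = ∑ j ∈ Finset.range k, lam ^ j := by
          rw [← Finset.sum_range_reflect (fun j => lam ^ j) k]
          exact Finset.sum_congr rfl fun j hj => by
            rw [show k-(j+1) = k-1-j from by omega]
        rw [he, ← tsum_geometric_of_lt_one hlam0.le hlam1]
        exact Summable.sum_le_tsum (Finset.range k) (fun i _ => pow_nonneg hlam0.le i)
          (summable_geometric_of_lt_one hlam0.le hlam1)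
      calc ‖∑ j ∈ Finset.range k, Phi C (k:ℤ) ((j+1:ℕ):ℤ) (P (j+1) (g (j+1)))‖
          ≤ ∑ j ∈ Finset.range k, ‖Phi C (k:ℤ) ((j+1:ℕ):ℤ) (P (j+1) (g (j+1)))‖ :=
            norm_sum_le _ _
        _ ≤ ∑ j ∈ Finset.range k, K*((1+M)*Bg) * lam ^ (k-(j+1)) :=
            Finset.sum_le_sum hterm
        _ = K*((1+M)*Bg) * ∑ j ∈ Finset.range k, lam ^ (k-(j+1)) := by
            rw [Finset.mul_sum]
        _ ≤ K*((1+M)*Bg)*(1-lam)⁻¹ := by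
            apply mul_le_mul_of_nonneg_left hsum1 (by positivity)
    have hT := hub k
    simp only [hw]
    calc ‖Phi C (k:ℤ) 0 η
        + (∑ j ∈ Finset.range k, Phi C (k:ℤ) ((j+1:ℕ):ℤ) (P (j+1) (g (j+1))))
        - ∑' i : ℕ, F k (k+1+i)‖
        ≤ ‖Phi C (k:ℤ) 0 η
          + (∑ j ∈ Finset.range k, Phi C (k:ℤ) ((j+1:ℕ):ℤ) (P (j+1) (g (j+1))))‖
          + ‖∑' i : ℕ, F k (k+1+i)‖ := norm_sub_le _ _
      _ ≤ ‖Phi C (k:ℤ) 0 η‖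
          + ‖∑ j ∈ Finset.range k, Phi C (k:ℤ) ((j+1:ℕ):ℤ) (P (j+1) (g (j+1)))‖
          + ‖∑' i : ℕ, F k (k+1+i)‖ := by
            have := norm_add_le (Phi C (k:ℤ) 0 η)
              (∑ j ∈ Finset.range k, Phi C (k:ℤ) ((j+1:ℕ):ℤ) (P (j+1) (g (j+1))))
            linarith
      _ ≤ Bw := by rw [hBw]; linarith
  -- projection identity
  have hQP0 : ∀ v : EuclideanSpace ℝ (Fin n), Q₀ v = P 0 v := by
    intro v
    have hm1 : P 0 v ∈ S (0:ℤ) := by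
      have := Pj_mem S U hIC 0 v; rwa [Nat.cast_zero] at this
    have hm2 : v - P 0 v ∈ U (0:ℤ) := by
      have := Pj_sub_mem S U hIC 0 v; rwa [Nat.cast_zero] at this
    have h1 := hQS (P 0 v) hm1
    have h2 := hQU (v - P 0 v) hm2
    have h3 : P 0 v + (v - P 0 v) = v := by abel
    calc Q₀ v = Q₀ (P 0 v + (v - P 0 v)) := by rw [h3]
      _ = Q₀ (P 0 v) + Q₀ (v - P 0 v) := map_add _ _ _
      _ = P 0 v := by rw [h1, h2, add_zero]
  -- initial value
  have hTU : (∑' i : ℕ, F 0 (0+1+i)) ∈ U (0:ℤ) := by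
    have hsum := hFsum 0 (0+1) (Nat.le_succ 0)
    have hmem : ∀ i:ℕ, F 0 (0+1+i) ∈ U (0:ℤ) := by
      intro i
      have h1 := PhiU_mem_back C S U hmap 0 (0+1+i) (by omega) _
        (Pj_sub_mem S U hIC (0+1+i) (g (0+1+i)))
      rwa [Nat.cast_zero] at h1
    have hcl : IsClosed ((U (0:ℤ) : Set (EuclideanSpace ℝ (Fin n)))) :=
      Submodule.closed_of_finiteDimensional _
    exact hcl.mem_of_tendsto hsum.hasSum
      (Filter.Eventually.of_forall fun s => Submodule.sum_mem _ fun i _ => hmem i)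
  have hQw0 : Q₀ (w 0) = η := by
    have hw0 : w 0 = η - ∑' i : ℕ, F 0 (0+1+i) := by
      simp only [hw]
      rw [Finset.range_zero, Finset.sum_empty, add_zero, Nat.cast_zero, Phi_self]
    rw [hw0, map_sub, hQS η hη, hQU _ hTU, sub_zero]
  -- conclusion
  refine ⟨w, ⟨⟨Bw, hwb⟩, hrec, hQw0⟩, ?_⟩
  rintro w' ⟨⟨Bw', hBw'⟩, hrec', hQ'⟩
  have hd : ∀ k:ℕ, w' k - w k = Phi C (k:ℤ) 0 (w' 0 - w 0) := by
    intro k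
    induction k with
    | zero =>
      have : Phi C ((0:ℕ):ℤ) 0 (w' 0 - w 0) = w' 0 - w 0 := by
        rw [Nat.cast_zero, Phi_self]
      rw [this]
    | succ k ih =>
      have hcast : ((k+1:ℕ):ℤ) = (k:ℤ)+1 := by push_cast; ring
      calc w' (k+1) - w (k+1) = C (k:ℤ) (w' k) - C (k:ℤ) (w k) := by
            rw [hrec' k, hrec k]; abel
        _ = C (k:ℤ) (w' k - w k) := (map_sub _ _ _).symm
        _ = C (k:ℤ) (Phi C (k:ℤ) 0 (w' 0 - w 0)) := by rw [ih]
        _ = Phi C ((k+1:ℕ):ℤ) 0 (w' 0 - w 0) := by rw [hcast, Phi_succ_zero]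
  have hQd : Q₀ (w' 0 - w 0) = 0 := by rw [map_sub, hQ', hQw0, sub_self]
  have hd0U : w' 0 - w 0 ∈ U ((0:ℕ):ℤ) := by
    have h0 : P 0 (w' 0 - w 0) = 0 := by rw [← hQP0]; exact hQd
    have h1 := Pj_sub_mem S U hIC 0 (w' 0 - w 0)
    rw [← hPdef] at h1
    rw [h0, sub_zero] at h1
    exact h1
  have hd0 : w' 0 - w 0 = 0 := by
    have hbd : ∀ k:ℕ, ‖w' k - w k‖ ≤ Bw' + Bw := fun k =>
      (norm_sub_le _ _).trans (add_le_add (hBw' k) (hwb k))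
    have hkey : ∀ k:ℕ, ‖w' 0 - w 0‖ ≤ K * lam^k * (Bw' + Bw) := by
      intro k
      have hmem := PhiU_mem C S U hmap 0 k (Nat.zero_le k) _ hd0U
      have h2 := Unorm_nat C K lam U hU 0 k (Nat.zero_le k) _ hmem
      rw [Nat.cast_zero] at h2
      rw [Phi_comp, Phi_self, Nat.sub_zero] at h2
      calc ‖w' 0 - w 0‖ ≤ K * lam^k * ‖Phi C (k:ℤ) 0 (w' 0 - w 0)‖ := h2
        _ = K * lam^k * ‖w' k - w k‖ := by rw [← hd k]
        _ ≤ K * lam^k * (Bw' + Bw) := by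
            apply mul_le_mul_of_nonneg_left (hbd k) (by positivity)
    have htend : Filter.Tendsto (fun k:ℕ => K * lam^k * (Bw' + Bw))
        Filter.atTop (nhds 0) := by
      have h1 := tendsto_pow_atTop_nhds_zero_of_lt_one hlam0.le hlam1
      have h2 := (h1.const_mul K).mul_const (Bw' + Bw)
      simpa using h2
    have hle : ‖w' 0 - w 0‖ ≤ 0 := ge_of_tendsto' htend hkey
    exact norm_le_zero_iff.mp hle
  funext k
  have h1 := hd k
  rw [hd0, map_zero] at h1
  exact sub_eq_zero.mp h1
end
end
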